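/- arXiv:math/0005231 — 8 statements merged into one kernel-verified Lean document; each statement's English description precedes it below -/
import Mathlib

section
/- Let J ≥ 0 and let R : (0,∞) → [0,∞) be measurable and integrable on (0,T) for every T > 0, with lim_{t→∞} t² R(t) = J. Then (i) lim_{t→∞} (1/log t) ∫_0^t ∫_0^t R(s+u) ds du = J, and (ii) lim_{t→∞} (1/log t) ∫_0^t ∫_0^t R(s+u+t) ds du = 0; consequently lim_{t→∞} (1/log t)( ∫_0^t ∫_0^t R(s+u) ds du − ∫_0^t ∫_0^t R(s+u+t) ds du ) = J. -/
open MeasureTheory Filter Topology intervalIntegral Set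

noncomputable def Hprim (R : ℝ → ℝ) (x : ℝ) : ℝ := ∫ s in (0:ℝ)..x, R s

section Aux
variable {R : ℝ → ℝ}

lemma hII (hint : ∀ T > 0, IntegrableOn R (Set.Ioo (0:ℝ) T))
    {a b : ℝ} (ha : 0 ≤ a) (hb : 0 ≤ b) :
    IntervalIntegrable R MeasureTheory.volume a b := by
  rw [intervalIntegrable_iff]
  refine (hint (max a b + 1) (by positivity)).mono_set fun x hx => ?_
  rcases Set.mem_uIoc.1 hx with ⟨h1, h2⟩ | ⟨h1, h2⟩ <;>
    exact ⟨by linarith, by linarith [le_max_left a b, le_max_right a b]⟩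

lemma Hdiff (hint : ∀ T > 0, IntegrableOn R (Set.Ioo (0:ℝ) T))
    {a b : ℝ} (ha : 0 ≤ a) (hab : a ≤ b) :
    Hprim R b - Hprim R a = ∫ x in a..b, R x := by
  have h := integral_add_adjacent_intervals (μ := MeasureTheory.volume)
    (hII hint le_rfl ha) (hII hint ha (ha.trans hab))
  simp only [Hprim]
  linarith

lemma Hmono (hint : ∀ T > 0, IntegrableOn R (Set.Ioo (0:ℝ) T))
    (hnonneg : ∀ t > 0, 0 ≤ R t)
    {a b : ℝ} (ha : 0 ≤ a) (hab : a ≤ b) : Hprim R a ≤ Hprim R b := by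
  have h := Hdiff hint ha hab
  have h2 : 0 ≤ ∫ x in a..b, R x := by
    rw [integral_of_le hab]
    exact setIntegral_nonneg measurableSet_Ioc
      (fun x hx => hnonneg x (lt_of_le_of_lt ha hx.1))
  linarith

lemma zpow_int : ∀ (a b : ℝ), 0 < a → a ≤ b →
    ∫ x in a..b, x ^ (-2 : ℤ) = 1/a - 1/b := by
  intro a b ha hab
  rw [integral_zpow (Or.inr ⟨by norm_num, fun hc => by
    rcases hc with ⟨h1, h2⟩
    simp only [inf_le_iff, le_sup_iff] at h1 h2
    rcases h1 with h | h <;> linarith⟩)]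
  have ha' : a ≠ 0 := ne_of_gt ha
  have hb' : b ≠ 0 := ne_of_gt (lt_of_lt_of_le ha hab)
  norm_num [zpow_neg]
  field_simp
  ring

lemma key_upper (hint : ∀ T > 0, IntegrableOn R (Set.Ioo (0:ℝ) T))
    {J ε M a b : ℝ} (hM : 0 < M)
    (hb : ∀ x ≥ M, |x^2 * R x - J| ≤ ε) (haM : M ≤ a) (hab : a ≤ b) :
    Hprim R b - Hprim R a ≤ (J + ε) * (1/a - 1/b) := by
  have ha : 0 < a := lt_of_lt_of_le hM haM
  rw [Hdiff hint ha.le hab]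
  have hcomp : ∫ x in a..b, R x ≤ ∫ x in a..b, (J + ε) * x ^ (-2:ℤ) := by
    apply integral_mono_on hab (hII hint ha.le (ha.le.trans hab))
    · apply ContinuousOn.intervalIntegrable
      apply ContinuousOn.mul continuousOn_const
      apply ContinuousOn.zpow₀ continuousOn_id
      intro x hx
      left
      rw [uIcc_of_le hab] at hx
      exact ne_of_gt (lt_of_lt_of_le ha hx.1)
    · intro x hx
      have hxM : M ≤ x := haM.trans hx.1
      have hx0 : 0 < x := lt_of_lt_of_le hM hxM
      have h := abs_le.1 (hb x hxM)
      have h2 : x ^ (-2:ℤ) = (x^2)⁻¹ := by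
        rw [zpow_neg]; norm_num; try rfl
      rw [h2]
      rw [le_mul_inv_iff₀ (by positivity)]
      nlinarith [h.2]
  rw [intervalIntegral.integral_const_mul, zpow_int a b ha hab] at hcomp
  exact hcomp

lemma key_lower (hint : ∀ T > 0, IntegrableOn R (Set.Ioo (0:ℝ) T))
    {J ε M a b : ℝ} (hM : 0 < M)
    (hb : ∀ x ≥ M, |x^2 * R x - J| ≤ ε) (haM : M ≤ a) (hab : a ≤ b) :
    (J - ε) * (1/a - 1/b) ≤ Hprim R b - Hprim R a := by
  have ha : 0 < a := lt_of_lt_of_le hM haM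
  rw [Hdiff hint ha.le hab]
  have hcomp : ∫ x in a..b, (J - ε) * x ^ (-2:ℤ) ≤ ∫ x in a..b, R x := by
    apply integral_mono_on hab _ (hII hint ha.le (ha.le.trans hab))
    · intro x hx
      have hxM : M ≤ x := haM.trans hx.1
      have hx0 : 0 < x := lt_of_lt_of_le hM hxM
      have h := abs_le.1 (hb x hxM)
      have h2 : x ^ (-2:ℤ) = (x^2)⁻¹ := by
        rw [zpow_neg]; norm_num; try rfl
      rw [h2]
      rw [mul_inv_le_iff₀ (by positivity)]
      nlinarith [h.1]
    · apply ContinuousOn.intervalIntegrable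
      apply ContinuousOn.mul continuousOn_const
      apply ContinuousOn.zpow₀ continuousOn_id
      intro x hx
      left
      rw [uIcc_of_le hab] at hx
      exact ne_of_gt (lt_of_lt_of_le ha hx.1)
  rw [intervalIntegral.integral_const_mul, zpow_int a b ha hab] at hcomp
  exact hcomp

lemma rewrite1 (hint : ∀ T > 0, IntegrableOn R (Set.Ioo (0:ℝ) T))
    {t : ℝ} (ht : 0 ≤ t) :
    (∫ u in (0:ℝ)..t, ∫ s in (0:ℝ)..t, R (s + u)) =
      ∫ u in (0:ℝ)..t, (Hprim R (t + u) - Hprim R u) := by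
  apply integral_congr
  intro u hu
  rw [uIcc_of_le ht] at hu
  show (∫ s in (0:ℝ)..t, R (s + u)) = Hprim R (t + u) - Hprim R u
  have h := intervalIntegral.integral_comp_add_right (a := (0:ℝ)) (b := t) R u
  simp only [zero_add] at h
  rw [h, ← Hdiff hint hu.1 (by linarith [hu.2] : u ≤ t + u)]

lemma rewrite2 (hint : ∀ T > 0, IntegrableOn R (Set.Ioo (0:ℝ) T))
    {t : ℝ} (ht : 0 ≤ t) :
    (∫ u in (0:ℝ)..t, ∫ s in (0:ℝ)..t, R (s + u + t)) =
      ∫ u in (0:ℝ)..t, (Hprim R (t + (u + t)) - Hprim R (u + t)) := by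
  apply integral_congr
  intro u hu
  rw [uIcc_of_le ht] at hu
  show (∫ s in (0:ℝ)..t, R (s + u + t)) = Hprim R (t + (u + t)) - Hprim R (u + t)
  have h := intervalIntegral.integral_comp_add_right (a := (0:ℝ)) (b := t) R (u + t)
  simp only [zero_add] at h
  have e : ∀ s : ℝ, R (s + u + t) = R (s + (u + t)) := fun s => by rw [add_assoc]
  simp_rw [e]
  rw [h, ← Hdiff hint (by linarith [hu.1] : (0:ℝ) ≤ u + t)
    (by linarith [hu.2] : u + t ≤ t + (u + t))]

lemma Hcont (hint : ∀ T > 0, IntegrableOn R (Set.Ioo (0:ℝ) T))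
    {c : ℝ} (hc : 0 ≤ c) : ContinuousOn (Hprim R) (Set.Icc 0 c) := by
  have h := intervalIntegral.continuousOn_primitive_interval'
    ((hII hint le_rfl hc)) (left_mem_uIcc (a := (0:ℝ)) (b := c))
  rwa [uIcc_of_le hc] at h

lemma gcont (hint : ∀ T > 0, IntegrableOn R (Set.Ioo (0:ℝ) T))
    {t : ℝ} (ht : 0 ≤ t) :
    ContinuousOn (fun u => Hprim R (t + u) - Hprim R u) (Set.Icc 0 t) := by
  refine ContinuousOn.sub ?_ (Hcont hint ht)
  refine (Hcont hint (by linarith : (0:ℝ) ≤ t + t)).comp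
    ((continuous_const.add continuous_id).continuousOn) ?_
  intro u hu
  refine Set.mem_Icc.mpr ⟨?_, ?_⟩
  · show (0:ℝ) ≤ t + u; linarith [hu.1, hu.2]
  · show t + u ≤ t + t; linarith [hu.1, hu.2]

lemma g2cont (hint : ∀ T > 0, IntegrableOn R (Set.Ioo (0:ℝ) T))
    {t : ℝ} (ht : 0 ≤ t) :
    ContinuousOn (fun u => Hprim R (t + (u + t)) - Hprim R (u + t)) (Set.Icc 0 t) := by
  refine ContinuousOn.sub ?_ ?_
  · refine (Hcont hint (by linarith : (0:ℝ) ≤ t + t + t)).comp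
      ((continuous_const.add (continuous_id.add continuous_const)).continuousOn) ?_
    intro u hu
    refine Set.mem_Icc.mpr ⟨?_, ?_⟩
    · show (0:ℝ) ≤ t + (u + t); linarith [hu.1, hu.2]
    · show t + (u + t) ≤ t + t + t; linarith [hu.1, hu.2]
  · refine (Hcont hint (by linarith : (0:ℝ) ≤ t + t)).comp
      ((continuous_id.add continuous_const).continuousOn) ?_
    intro u hu
    refine Set.mem_Icc.mpr ⟨?_, ?_⟩
    · show (0:ℝ) ≤ u + t; linarith [hu.1, hu.2]
    · show u + t ≤ t + t; linarith [hu.1, hu.2]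

end Aux

theorem stmt3 (J : ℝ) (hJ : 0 ≤ J) (R : ℝ → ℝ) (hmeas : Measurable R)
    (hnonneg : ∀ t > 0, 0 ≤ R t)
    (hint : ∀ T > 0, IntegrableOn R (Set.Ioo (0:ℝ) T))
    (hlim : Tendsto (fun t : ℝ => t ^ 2 * R t) atTop (𝓝 J)) :
    Tendsto (fun t : ℝ => (∫ u in (0:ℝ)..t, ∫ s in (0:ℝ)..t, R (s + u)) / Real.log t)
      atTop (𝓝 J) ∧
    Tendsto (fun t : ℝ => (∫ u in (0:ℝ)..t, ∫ s in (0:ℝ)..t, R (s + u + t)) / Real.log t)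
      atTop (𝓝 0) ∧
    Tendsto (fun t : ℝ =>
        ((∫ u in (0:ℝ)..t, ∫ s in (0:ℝ)..t, R (s + u)) -
          ∫ u in (0:ℝ)..t, ∫ s in (0:ℝ)..t, R (s + u + t)) / Real.log t)
      atTop (𝓝 J) := by
  set F : ℝ → ℝ := fun t => ∫ u in (0:ℝ)..t, ∫ s in (0:ℝ)..t, R (s + u) with hF
  set F₂ : ℝ → ℝ := fun t => ∫ u in (0:ℝ)..t, ∫ s in (0:ℝ)..t, R (s + u + t) with hF₂
  -- extraction of eventual bound
  have hε_bound : ∀ ε > (0:ℝ), ∃ M : ℝ, 1 ≤ M ∧ ∀ x ≥ M, |x^2 * R x - J| ≤ ε := by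
    intro ε hε
    obtain ⟨N, hN⟩ := Metric.tendsto_atTop.1 hlim ε hε
    refine ⟨max N 1, le_max_right _ _, fun x hx => ?_⟩
    have := hN x (le_trans (le_max_left _ _) hx)
    rw [Real.dist_eq] at this
    exact this.le
  -- nonnegativity of F
  have Fnonneg : ∀ t ≥ (0:ℝ), 0 ≤ F t := by
    intro t ht
    rw [hF]
    simp only
    rw [rewrite1 hint ht]
    apply integral_nonneg ht
    intro u hu
    have := Hmono hint hnonneg hu.1 (by linarith [hu.2] : u ≤ t + u)
    linarith
  -- upper bound for F
  have upper : ∀ ε > (0:ℝ), ∃ C M : ℝ, 1 ≤ M ∧ ∀ t ≥ M,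
      F t ≤ C + (J + ε) * Real.log t := by
    intro ε hε
    obtain ⟨M, hM1, hbnd⟩ := hε_bound ε hε
    have hM0 : (0:ℝ) < M := by linarith
    refine ⟨M * (Hprim R M + (J + ε)), M, hM1, fun t ht => ?_⟩
    have hMt : M ≤ t := ht
    have ht0 : (0:ℝ) ≤ t := by linarith
    rw [hF]
    simp only
    rw [rewrite1 hint ht0]
    have hgc := gcont hint ht0
    have i1 : IntervalIntegrable (fun u => Hprim R (t+u) - Hprim R u)
        MeasureTheory.volume 0 M := by
      apply ContinuousOn.intervalIntegrable
      refine hgc.mono ?_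
      rw [uIcc_of_le hM0.le]
      exact Icc_subset_Icc le_rfl hMt
    have i2 : IntervalIntegrable (fun u => Hprim R (t+u) - Hprim R u)
        MeasureTheory.volume M t := by
      apply ContinuousOn.intervalIntegrable
      refine hgc.mono ?_
      rw [uIcc_of_le hMt]
      exact Icc_subset_Icc hM0.le le_rfl
    have hsplit := integral_add_adjacent_intervals i1 i2
    have b1 : (∫ u in (0:ℝ)..M, (Hprim R (t+u) - Hprim R u))
        ≤ M * (Hprim R M + (J + ε)) := by
      have hmon := integral_mono_on hM0.le i1
        (_root_.intervalIntegrable_const (c := Hprim R M + (J + ε))) ?_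
      · have hmon' := hmon
        simp only [intervalIntegral.integral_const, smul_eq_mul, sub_zero] at hmon'
        linarith
      · intro u hu
        have hu0 : 0 ≤ u := hu.1
        have h0 : Hprim R 0 = 0 := integral_same
        have e1 : Hprim R 0 ≤ Hprim R u := Hmono hint hnonneg le_rfl hu0
        have e2 := key_upper hint hM0 hbnd le_rfl (by linarith : M ≤ t + u)
        have htu : (0:ℝ) < t + u := by linarith
        have h4 : (0:ℝ) ≤ 1/(t+u) := by positivity
        have e3 : (J+ε) * (1/M - 1/(t+u)) ≤ (J+ε) * (1/M) := by
          apply mul_le_mul_of_nonneg_left (by linarith) (by linarith)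
        have e4 : (J+ε) * (1/M) ≤ J + ε := by
          have h5 : 1/M ≤ 1 := by rw [div_le_one hM0]; linarith
          nlinarith
        linarith
    have b2 : (∫ u in M..t, (Hprim R (t+u) - Hprim R u))
        ≤ (J+ε) * (Real.log t - Real.log M) := by
      have hcmp : (∫ u in M..t, (Hprim R (t+u) - Hprim R u))
          ≤ ∫ u in M..t, (J+ε) * (1/u) := by
        apply integral_mono_on hMt i2 ?_ ?_
        · apply ContinuousOn.intervalIntegrable
          apply continuousOn_const.mul
          apply ContinuousOn.div continuousOn_const continuousOn_id
          intro x hx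
          rw [uIcc_of_le hMt] at hx
          exact ne_of_gt (lt_of_lt_of_le hM0 hx.1)
        · intro u hu
          have e2 := key_upper hint hM0 hbnd hu.1 (by linarith [hu.1] : u ≤ t + u)
          have htu : (0:ℝ) < t + u := by linarith [hu.1]
          have h4 : (0:ℝ) ≤ 1/(t+u) := by positivity
          have e3 : (J+ε) * (1/u - 1/(t+u)) ≤ (J+ε) * (1/u) := by
            apply mul_le_mul_of_nonneg_left (by linarith) (by linarith)
          linarith
      rw [intervalIntegral.integral_const_mul, integral_one_div (by
        rw [uIcc_of_le hMt]
        intro hmem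
        exact absurd hmem.1 (by linarith))] at hcmp
      rwa [Real.log_div (by linarith : t ≠ 0) (by linarith : M ≠ 0)] at hcmp
    have hlogM : 0 ≤ Real.log M := Real.log_nonneg hM1
    nlinarith [hsplit]
  -- lower bound for F
  have lower : ∀ ε > (0:ℝ), ε ≤ J → ∃ C M : ℝ, 1 ≤ M ∧ ∀ t ≥ M,
      (J - ε) * (Real.log t - C) ≤ F t := by
    intro ε hε hεJ
    obtain ⟨M, hM1, hbnd⟩ := hε_bound ε hε
    have hM0 : (0:ℝ) < M := by linarith
    refine ⟨Real.log M + Real.log 2, M, hM1, fun t ht => ?_⟩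
    have hMt : M ≤ t := ht
    have ht0 : (0:ℝ) ≤ t := by linarith
    rw [hF]
    simp only
    rw [rewrite1 hint ht0]
    have hgc := gcont hint ht0
    have i1 : IntervalIntegrable (fun u => Hprim R (t+u) - Hprim R u)
        MeasureTheory.volume 0 M := by
      apply ContinuousOn.intervalIntegrable
      refine hgc.mono ?_
      rw [uIcc_of_le hM0.le]
      exact Icc_subset_Icc le_rfl hMt
    have i2 : IntervalIntegrable (fun u => Hprim R (t+u) - Hprim R u)
        MeasureTheory.volume M t := by
      apply ContinuousOn.intervalIntegrable
      refine hgc.mono ?_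
      rw [uIcc_of_le hMt]
      exact Icc_subset_Icc hM0.le le_rfl
    have hsplit := integral_add_adjacent_intervals i1 i2
    have n1 : 0 ≤ ∫ u in (0:ℝ)..M, (Hprim R (t+u) - Hprim R u) := by
      apply integral_nonneg hM0.le
      intro u hu
      have := Hmono hint hnonneg hu.1 (by linarith [hu.1] : u ≤ t + u)
      linarith
    have iu : IntervalIntegrable (fun u : ℝ => 1/u) MeasureTheory.volume M t := by
      apply ContinuousOn.intervalIntegrable
      apply ContinuousOn.div continuousOn_const continuousOn_id
      intro x hx
      rw [uIcc_of_le hMt] at hx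
      exact ne_of_gt (lt_of_lt_of_le hM0 hx.1)
    have iv : IntervalIntegrable (fun u : ℝ => 1/(t+u)) MeasureTheory.volume M t := by
      apply ContinuousOn.intervalIntegrable
      apply ContinuousOn.div continuousOn_const (continuousOn_const.add continuousOn_id)
      intro x hx
      rw [uIcc_of_le hMt] at hx
      have : 0 < t + x := by linarith [hx.1]
      exact ne_of_gt this
    have b2 : ∫ u in M..t, (J-ε) * (1/u - 1/(t+u))
        ≤ ∫ u in M..t, (Hprim R (t+u) - Hprim R u) := by
      apply integral_mono_on hMt ?_ i2 ?_
      · exact (iu.sub iv).const_mul _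
      · intro u hu
        exact key_lower hint hM0 hbnd hu.1 (by linarith [hu.1] : u ≤ t + u)
    have hval : (∫ u in M..t, (J-ε) * (1/u - 1/(t+u)))
        = (J-ε) * (Real.log (t/M) - Real.log ((t+t)/(M+t))) := by
      rw [intervalIntegral.integral_const_mul, integral_sub iu iv]
      congr 1
      congr 1
      · exact integral_one_div (by
          rw [uIcc_of_le hMt]
          intro hmem
          exact absurd hmem.1 (by linarith))
      · have e : ∀ u : ℝ, (1:ℝ)/(t+u) = 1/(u+t) := fun u => by rw [add_comm]
        simp_rw [e]
        have h := intervalIntegral.integral_comp_add_right (a := M) (b := t)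
          (fun x : ℝ => 1/x) t
        rw [h]
        exact integral_one_div (by
          rw [uIcc_of_le (by linarith : M + t ≤ t + t)]
          intro hmem
          have := hmem.1
          linarith)
    have hineq : (J - ε) * (Real.log t - (Real.log M + Real.log 2))
        ≤ (J-ε) * (Real.log (t/M) - Real.log ((t+t)/(M+t))) := by
      apply mul_le_mul_of_nonneg_left ?_ (by linarith)
      have h1 : Real.log (t/M) = Real.log t - Real.log M :=
        Real.log_div (by linarith) (by linarith)
      have h2 : Real.log ((t+t)/(M+t)) ≤ Real.log 2 := by
        apply Real.log_le_log (div_pos (by linarith) (by linarith))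
        rw [div_le_iff₀ (by linarith)]
        linarith
      linarith
    linarith
  -- part (ii) bounds
  have part2bound : ∃ M : ℝ, 1 ≤ M ∧ ∀ t ≥ M, 0 ≤ F₂ t ∧ F₂ t ≤ J + 1 := by
    obtain ⟨M, hM1, hbnd⟩ := hε_bound 1 one_pos
    have hM0 : (0:ℝ) < M := by linarith
    refine ⟨M, hM1, fun t ht => ?_⟩
    have hMt : M ≤ t := ht
    have ht0 : (0:ℝ) ≤ t := by linarith
    have htpos : (0:ℝ) < t := by linarith
    rw [hF₂]
    simp only
    rw [rewrite2 hint ht0]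
    constructor
    · apply integral_nonneg ht0
      intro u hu
      have := Hmono hint hnonneg (by linarith [hu.1] : (0:ℝ) ≤ u + t)
        (by linarith : u + t ≤ t + (u + t))
      linarith
    · have i : IntervalIntegrable (fun u => Hprim R (t+(u+t)) - Hprim R (u+t))
          MeasureTheory.volume 0 t := by
        apply ContinuousOn.intervalIntegrable
        rw [uIcc_of_le ht0]
        exact g2cont hint ht0
      have hmon := integral_mono_on ht0 i
        (_root_.intervalIntegrable_const (c := (J+1) * (1/t))) ?_
      · have : (∫ _u in (0:ℝ)..t, (J+1) * (1/t)) = J + 1 := by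
          rw [intervalIntegral.integral_const]
          rw [smul_eq_mul]
          field_simp
          ring
        linarith
      · intro u hu
        have e2 := key_upper hint hM0 hbnd (by linarith [hu.1] : M ≤ u + t)
          (by linarith : u + t ≤ t + (u + t))
        have hut : (0:ℝ) < u + t := by linarith [hu.1]
        have htut : (0:ℝ) < t + (u + t) := by linarith
        have h4 : (0:ℝ) ≤ 1/(t+(u+t)) := by positivity
        have e3 : (J+1) * (1/(u+t) - 1/(t+(u+t))) ≤ (J+1) * (1/(u+t)) := by
          apply mul_le_mul_of_nonneg_left (by linarith) (by linarith)
        have e5 : 1/(u+t) ≤ 1/t := by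
          apply one_div_le_one_div_of_le htpos
          linarith [hu.1]
        have e4 : (J+1) * (1/(u+t)) ≤ (J+1) * (1/t) := by
          apply mul_le_mul_of_nonneg_left e5 (by linarith)
        linarith
  -- conclusion part (i)
  have goal1 : Tendsto (fun t : ℝ => F t / Real.log t) atTop (𝓝 J) := by
    rw [Metric.tendsto_nhds]
    intro ε hε
    have hε4 : (0:ℝ) < ε/4 := by linarith
    obtain ⟨C₁, M₁, hM₁, hub⟩ := upper (ε/4) hε4
    have evU : ∀ᶠ t in atTop, F t / Real.log t < J + 2*(ε/4) := by
      have hC : Tendsto (fun t : ℝ => C₁ / Real.log t) atTop (𝓝 0) :=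
        tendsto_const_nhds.div_atTop Real.tendsto_log_atTop
      filter_upwards [eventually_ge_atTop M₁,
        Real.tendsto_log_atTop.eventually_gt_atTop 0,
        hC.eventually (gt_mem_nhds hε4)] with t ht hlog hCt
      have h1 := hub t ht
      have h2 : F t / Real.log t ≤ (C₁ + (J+ε/4) * Real.log t)/Real.log t :=
        (div_le_div_iff_of_pos_right hlog).2 h1
      have h3 : (C₁ + (J+ε/4) * Real.log t)/Real.log t
          = C₁/Real.log t + (J+ε/4) := by
        rw [add_div, mul_div_cancel_right₀ _ (ne_of_gt hlog)]
      rw [h3] at h2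
      linarith
    have evL : ∀ᶠ t in atTop, J - 2*(ε/4) < F t / Real.log t := by
      by_cases hJε : J ≤ ε/4
      · filter_upwards [eventually_ge_atTop (0:ℝ),
          Real.tendsto_log_atTop.eventually_gt_atTop 0] with t ht hlog
        have h0 := Fnonneg t ht
        have : 0 ≤ F t / Real.log t := div_nonneg h0 hlog.le
        linarith
      · push_neg at hJε
        obtain ⟨C₂, M₂, hM₂, hlb⟩ := lower (ε/4) hε4 hJε.le
        have hC : Tendsto (fun t : ℝ => (J - ε/4) * C₂ / Real.log t) atTop (𝓝 0) :=
          tendsto_const_nhds.div_atTop Real.tendsto_log_atTop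
        filter_upwards [eventually_ge_atTop M₂,
          Real.tendsto_log_atTop.eventually_gt_atTop 0,
          hC.eventually (gt_mem_nhds hε4)] with t ht hlog hCt
        have h1 := hlb t ht
        have h2 : (J - ε/4) * (Real.log t - C₂) / Real.log t ≤ F t / Real.log t :=
          (div_le_div_iff_of_pos_right hlog).2 h1
        have h3 : (J - ε/4) * (Real.log t - C₂) / Real.log t
            = (J - ε/4) - (J - ε/4)*C₂/Real.log t := by
          rw [mul_sub, sub_div, mul_div_cancel_right₀ _ (ne_of_gt hlog)]
        rw [h3] at h2
        linarith
    filter_upwards [evU, evL] with t h1 h2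
    rw [Real.dist_eq, abs_sub_lt_iff]
    constructor <;> linarith
  -- conclusion part (ii)
  have goal2 : Tendsto (fun t : ℝ => F₂ t / Real.log t) atTop (𝓝 0) := by
    obtain ⟨M, hM1, h2b⟩ := part2bound
    apply tendsto_of_tendsto_of_tendsto_of_le_of_le' (tendsto_const_nhds (x := (0:ℝ)))
      (tendsto_const_nhds.div_atTop Real.tendsto_log_atTop (f := fun _ : ℝ => J + 1))
    · filter_upwards [eventually_ge_atTop M,
        Real.tendsto_log_atTop.eventually_gt_atTop 0] with t ht hlog
      exact div_nonneg (h2b t ht).1 hlog.le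
    · filter_upwards [eventually_ge_atTop M,
        Real.tendsto_log_atTop.eventually_gt_atTop 0] with t ht hlog
      exact (div_le_div_iff_of_pos_right hlog).2 (h2b t ht).2
  refine ⟨goal1, goal2, ?_⟩
  have h := goal1.sub goal2
  rw [sub_zero] at h
  convert h using 2 with t
  rw [sub_div]
end

section
/- Let a ∈ (0,1), ζ > −1, and let h : (0,∞) → (0,∞) be differentiable, bounded above, bounded below by a positive constant, and satisfy h(at) = h(t) for all t > 0. Define h̃(t) = (−log a) · ∫_0^∞ a^{r(1+ζ)} h(a^r t) dr for t > 0. Then lim_{t→∞} ( ∫_1^t s^ζ h(s) ds ) / ( t^{ζ+1} h̃(t) ) = 1. Moreover h̃(at) = h̃(t) for all t > 0, and h̃ is bounded above and bounded below by a positive constant. -/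
/-!
The substitution `x = a ^ r * t` turns `∫₀ᵗ x ^ ζ h(x) dx` into exactly `t ^ (ζ + 1) * h̃(t)`,
for any `h`. Comparing with `∫₀ᵗ x ^ ζ dx = t ^ (ζ + 1) / (ζ + 1)` bounds `h̃` between
`m / (ζ + 1)` and `M / (ζ + 1)`; hence `∫₁ᵗ x ^ ζ h(x) dx = t ^ (ζ + 1) h̃(t) - h̃(1)` with
`t ^ (ζ + 1) h̃(t) → ∞`, which gives the limit. Periodicity of `h̃` is inherited pointwise from `h`.
-/

open MeasureTheory Filter Topology Set

theorem integral_Ioo_eq_integral_Ioi_rpow_mul {E : Type*} [NormedAddCommGroup E]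
    [NormedSpace ℝ E] (f : ℝ → E) {a t : ℝ} (ha0 : 0 < a) (ha1 : a < 1) (ht : 0 < t) :
    ∫ x in Ioo 0 t, f x = ∫ r in Ioi (0:ℝ), (-Real.log a * a ^ r * t) • f (a ^ r * t) := by
  have hanti := Real.strictAnti_rpow_of_base_lt_one ha0 ha1
  have hderiv : ∀ r ∈ Ioi (0:ℝ), HasDerivWithinAt (fun r : ℝ => a ^ r * t)
      (a ^ r * Real.log a * t) (Ioi 0) r := fun r _ =>
    ((Real.hasStrictDerivAt_const_rpow ha0 r).hasDerivAt.mul_const t).hasDerivWithinAt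
  have hinj : InjOn (fun r : ℝ => a ^ r * t) (Ioi 0) := fun r _ s _ hrs =>
    hanti.injective (mul_right_cancel₀ ht.ne' hrs)
  have himage : (fun r : ℝ => a ^ r * t) '' Ioi 0 = Ioo 0 t := by
    ext x
    constructor
    · rintro ⟨r, hr, rfl⟩
      refine ⟨by positivity, mul_lt_of_lt_one_left ht ?_⟩
      simpa using hanti (mem_Ioi.1 hr)
    · rintro ⟨hx0, hxt⟩
      refine ⟨Real.logb a (x / t), Real.logb_pos_of_base_lt_one ha0 ha1 (by positivity)
        ((div_lt_one ht).2 hxt), ?_⟩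
      simp only [Real.rpow_logb ha0 ha1.ne (div_pos hx0 ht), div_mul_cancel₀ x ht.ne']
  rw [← himage, integral_image_eq_integral_abs_deriv_smul measurableSet_Ioi hderiv hinj]
  refine setIntegral_congr_fun measurableSet_Ioi fun r _ => ?_
  have hneg : a ^ r * Real.log a * t < 0 :=
    mul_neg_of_neg_of_pos (mul_neg_of_pos_of_neg (by positivity) (Real.log_neg ha0 ha1)) ht
  rw [abs_of_neg hneg]
  ring_nf

/-- The paper's `h̃`. -/
noncomputable def logScaleAverage (a ζ : ℝ) (h : ℝ → ℝ) (t : ℝ) : ℝ :=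
  (-Real.log a) * ∫ r in Ioi (0:ℝ), a ^ (r * (1 + ζ)) * h (a ^ r * t)

section
variable {a ζ : ℝ} {h : ℝ → ℝ}

theorem integral_Ioo_rpow_mul_eq (ha0 : 0 < a) (ha1 : a < 1) {t : ℝ} (ht : 0 < t) :
    ∫ x in Ioo 0 t, x ^ ζ * h x = t ^ (ζ + 1) * logScaleAverage a ζ h t := by
  rw [integral_Ioo_eq_integral_Ioi_rpow_mul _ ha0 ha1 ht, logScaleAverage,
    ← integral_const_mul, ← integral_const_mul]
  refine setIntegral_congr_fun measurableSet_Ioi fun r _ => ?_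
  have har : 0 < a ^ r := Real.rpow_pos_of_pos ha0 r
  rw [smul_eq_mul, Real.mul_rpow har.le ht.le, ← Real.rpow_mul ha0.le, Real.rpow_add ht,
    Real.rpow_one, mul_one_add, Real.rpow_add ha0]
  ring

theorem logScaleAverage_mul_left (ha0 : 0 < a) (hper : ∀ t > 0, h (a * t) = h t) {t : ℝ}
    (ht : 0 < t) : logScaleAverage a ζ h (a * t) = logScaleAverage a ζ h t := by
  unfold logScaleAverage
  congr 1
  refine setIntegral_congr_fun measurableSet_Ioi fun r _ => ?_
  rw [mul_left_comm, hper _ (by positivity)]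

theorem integrableOn_rpow_mul_Ioc (hζ : -1 < ζ) (hcont : ContinuousOn h (Ioi 0)) {M : ℝ}
    (hM : ∀ x > 0, |h x| ≤ M) (t : ℝ) :
    IntegrableOn (fun x => x ^ ζ * h x) (Ioc 0 t) := by
  refine Integrable.mono' ((intervalIntegral.intervalIntegrable_rpow' hζ).1.mul_const M) ?_ ?_
  · refine ContinuousOn.aestronglyMeasurable ?_ measurableSet_Ioc
    exact (continuousOn_id.rpow_const fun x hx => Or.inl hx.1.ne').mul
      (hcont.mono Ioc_subset_Ioi_self)
  · refine (ae_restrict_iff' measurableSet_Ioc).2 (Eventually.of_forall fun x hx => ?_)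
    rw [norm_mul, Real.norm_of_nonneg (Real.rpow_nonneg hx.1.le ζ), Real.norm_eq_abs]
    exact mul_le_mul_of_nonneg_left (hM x hx.1) (Real.rpow_nonneg hx.1.le ζ)

theorem integral_Ioo_rpow (hζ : -1 < ζ) {t : ℝ} (ht : 0 ≤ t) :
    ∫ x in Ioo 0 t, x ^ ζ = t ^ (ζ + 1) / (ζ + 1) := by
  rw [← integral_Ioc_eq_integral_Ioo, ← intervalIntegral.integral_of_le ht,
    integral_rpow (Or.inl hζ), Real.zero_rpow (by linarith), sub_zero]

theorem le_logScaleAverage (ha0 : 0 < a) (ha1 : a < 1) (hζ : -1 < ζ) {m t : ℝ}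
    (hm : ∀ x > 0, m ≤ h x) (ht : 0 < t)
    (hint : IntegrableOn (fun x => x ^ ζ * h x) (Ioo 0 t)) :
    m / (ζ + 1) ≤ logScaleAverage a ζ h t := by
  have hζt : 0 < t ^ (ζ + 1) := Real.rpow_pos_of_pos ht _
  refine le_of_mul_le_mul_left ?_ hζt
  calc t ^ (ζ + 1) * (m / (ζ + 1)) = ∫ x in Ioo 0 t, x ^ ζ * m := by
        rw [integral_mul_const, integral_Ioo_rpow hζ ht.le]; ring
    _ ≤ ∫ x in Ioo 0 t, x ^ ζ * h x :=
        setIntegral_mono_on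
          ((intervalIntegral.integrableOn_Ioo_rpow_iff ht).2 hζ |>.mul_const m) hint measurableSet_Ioo
          fun x hx => mul_le_mul_of_nonneg_left (hm x hx.1) (Real.rpow_nonneg hx.1.le ζ)
    _ = t ^ (ζ + 1) * logScaleAverage a ζ h t := integral_Ioo_rpow_mul_eq ha0 ha1 ht

theorem logScaleAverage_le (ha0 : 0 < a) (ha1 : a < 1) (hζ : -1 < ζ) {M t : ℝ}
    (hM : ∀ x > 0, h x ≤ M) (ht : 0 < t)
    (hint : IntegrableOn (fun x => x ^ ζ * h x) (Ioo 0 t)) :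
    logScaleAverage a ζ h t ≤ M / (ζ + 1) := by
  have hζt : 0 < t ^ (ζ + 1) := Real.rpow_pos_of_pos ht _
  refine le_of_mul_le_mul_left ?_ hζt
  calc t ^ (ζ + 1) * logScaleAverage a ζ h t = ∫ x in Ioo 0 t, x ^ ζ * h x :=
        (integral_Ioo_rpow_mul_eq ha0 ha1 ht).symm
    _ ≤ ∫ x in Ioo 0 t, x ^ ζ * M :=
        setIntegral_mono_on hint
          ((intervalIntegral.integrableOn_Ioo_rpow_iff ht).2 hζ |>.mul_const M) measurableSet_Ioo
          fun x hx => mul_le_mul_of_nonneg_left (hM x hx.1) (Real.rpow_nonneg hx.1.le ζ)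
    _ = t ^ (ζ + 1) * (M / (ζ + 1)) := by
        rw [integral_mul_const, integral_Ioo_rpow hζ ht.le]; ring

theorem intervalIntegral_one_rpow_mul_eq (ha0 : 0 < a) (ha1 : a < 1)
    (hint : ∀ t, IntegrableOn (fun x => x ^ ζ * h x) (Ioc 0 t)) {t : ℝ} (ht : 0 < t) :
    ∫ x in (1:ℝ)..t, x ^ ζ * h x =
      t ^ (ζ + 1) * logScaleAverage a ζ h t - logScaleAverage a ζ h 1 := by
  have hfrom0 : ∀ s > 0,
      ∫ x in (0:ℝ)..s, x ^ ζ * h x = s ^ (ζ + 1) * logScaleAverage a ζ h s := fun s hs => by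
      rw [intervalIntegral.integral_of_le hs.le, integral_Ioc_eq_integral_Ioo,
        integral_Ioo_rpow_mul_eq ha0 ha1 hs]
  have hii : ∀ s > 0, IntervalIntegrable (fun x => x ^ ζ * h x) volume 0 s := fun s hs =>
    (intervalIntegrable_iff_integrableOn_Ioc_of_le hs.le).2 (hint s)
  rw [← intervalIntegral.integral_interval_sub_left (hii t ht) (hii 1 one_pos), hfrom0 t ht,
    hfrom0 1 one_pos, Real.one_rpow, one_mul]

end

theorem tendsto_sub_const_div_self {α : Type*} {l : Filter α} {G : α → ℝ}
    (hG : Tendsto G l atTop) (C : ℝ) : Tendsto (fun x => (G x - C) / G x) l (𝓝 1) := by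
  have hlim : Tendsto (fun x => 1 - C * (G x)⁻¹) l (𝓝 (1 - C * 0)) :=
    tendsto_const_nhds.sub (tendsto_const_nhds.mul hG.inv_tendsto_atTop)
  rw [mul_zero, sub_zero] at hlim
  refine hlim.congr' ((hG.eventually_ne_atTop 0).mono fun x hx => ?_)
  field_simp

theorem stmt4_general (a ζ : ℝ) (ha0 : 0 < a) (ha1 : a < 1) (hζ : -1 < ζ)
    (h : ℝ → ℝ)
    (hdiff : DifferentiableOn ℝ h (Set.Ioi 0))
    (hub : ∃ M : ℝ, ∀ t > 0, h t ≤ M)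
    (hlb : ∃ m : ℝ, 0 < m ∧ ∀ t > 0, m ≤ h t)
    (hper : ∀ t > 0, h (a * t) = h t)
    (htilde : ℝ → ℝ)
    (htdef : ∀ t > 0, htilde t =
      (-Real.log a) * ∫ r in Set.Ioi (0:ℝ), a ^ (r * (1 + ζ)) * h (a ^ r * t)) :
    Tendsto (fun t : ℝ => (∫ s in (1:ℝ)..t, s ^ ζ * h s) / (t ^ (ζ + 1) * htilde t))
      atTop (𝓝 1) ∧
    (∀ t > 0, htilde (a * t) = htilde t) ∧
    (∃ M : ℝ, ∀ t > 0, htilde t ≤ M) ∧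
    (∃ m : ℝ, 0 < m ∧ ∀ t > 0, m ≤ htilde t) := by
  obtain ⟨M, hM⟩ := hub
  obtain ⟨m, hm0, hm⟩ := hlb
  have hζ1 : 0 < ζ + 1 := by linarith
  have hint : ∀ t, IntegrableOn (fun x => x ^ ζ * h x) (Ioc 0 t) :=
    integrableOn_rpow_mul_Ioc hζ hdiff.continuousOn fun x hx =>
      abs_le.2 ⟨by linarith [hm x hx, hM x hx], hM x hx⟩
  have hintIoo : ∀ t, IntegrableOn (fun x => x ^ ζ * h x) (Ioo 0 t) := fun t =>
    (hint t).mono_set Ioo_subset_Ioc_self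
  have hlow : ∀ t > 0, m / (ζ + 1) ≤ htilde t := fun t ht =>
    (htdef t ht).symm ▸ le_logScaleAverage ha0 ha1 hζ hm ht (hintIoo t)
  have hG : Tendsto (fun t : ℝ => t ^ (ζ + 1) * htilde t) atTop atTop := by
    refine tendsto_atTop_mono' _ ?_
      ((tendsto_rpow_atTop hζ1).atTop_mul_const (div_pos hm0 hζ1))
    filter_upwards [eventually_gt_atTop 0] with t ht
    exact mul_le_mul_of_nonneg_left (hlow t ht) (Real.rpow_nonneg ht.le _)
  refine ⟨?_, fun t ht => ?_, ⟨M / (ζ + 1), fun t ht => ?_⟩,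
    ⟨m / (ζ + 1), div_pos hm0 hζ1, hlow⟩⟩
  · refine (tendsto_sub_const_div_self hG (htilde 1)).congr' ?_
    filter_upwards [eventually_gt_atTop 0] with t ht
    rw [intervalIntegral_one_rpow_mul_eq ha0 ha1 hint ht, htdef t ht, htdef 1 one_pos]
    rfl
  · rw [htdef _ (mul_pos ha0 ht), htdef t ht]
    exact logScaleAverage_mul_left ha0 hper ht
  · rw [htdef t ht]
    exact logScaleAverage_le ha0 ha1 hζ hM ht (hintIoo t)

theorem stmt4 (a ζ : ℝ) (ha0 : 0 < a) (ha1 : a < 1) (hζ : -1 < ζ)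
    (h : ℝ → ℝ) (hpos : ∀ t > 0, 0 < h t)
    (hdiff : DifferentiableOn ℝ h (Set.Ioi 0))
    (hub : ∃ M : ℝ, ∀ t > 0, h t ≤ M)
    (hlb : ∃ m : ℝ, 0 < m ∧ ∀ t > 0, m ≤ h t)
    (hper : ∀ t > 0, h (a * t) = h t)
    (htilde : ℝ → ℝ)
    (htdef : ∀ t > 0, htilde t =
      (-Real.log a) * ∫ r in Set.Ioi (0:ℝ), a ^ (r * (1 + ζ)) * h (a ^ r * t)) :
    Tendsto (fun t : ℝ => (∫ s in (1:ℝ)..t, s ^ ζ * h s) / (t ^ (ζ + 1) * htilde t))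
      atTop (𝓝 1) ∧
    (∀ t > 0, htilde (a * t) = htilde t) ∧
    (∃ M : ℝ, ∀ t > 0, htilde t ≤ M) ∧
    (∃ m : ℝ, 0 < m ∧ ∀ t > 0, m ≤ htilde t) :=
  stmt4_general a ζ ha0 ha1 hζ h hdiff hub hlb hper htilde htdef
end

section
/- Let a ∈ (0,1), θ > 0 and ζ > 0. Then for every t > 0, Γ(ζ+1)/(a^{−ζ}−1) ≤ Σ_{j∈ℤ} (θ a^j t)^ζ e^{−θ a^j t} ≤ a^{−ζ} Γ(ζ+1)/(a^{−ζ}−1), where Γ is the Gamma function (and the two-sided series converges for every t > 0). -/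
open Filter Topology

open Real MeasureTheory Set

lemma gmax {p x : ℝ} (hp : 0 < p) (hx : 0 < x) :
    x ^ p * Real.exp (-x) ≤ p ^ p * Real.exp (-p) := by
  rw [Real.rpow_def_of_pos hx, Real.rpow_def_of_pos hp, ← Real.exp_add, ← Real.exp_add]
  apply Real.exp_le_exp.2
  have h := Real.log_le_sub_one_of_pos (div_pos hx hp)
  rw [Real.log_div hx.ne' hp.ne'] at h
  have h2 := mul_le_mul_of_nonneg_right h hp.le
  have h3 : x / p * p = x := div_mul_cancel₀ x hp.ne'
  nlinarith

lemma sumA {a c ζ : ℝ} (ha0 : 0 < a) (ha1 : a < 1) (hc : 0 < c) (hζ : 0 < ζ) :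
    Summable (fun j : ℤ => (c * a ^ j) ^ ζ * Real.exp (-(c * a ^ j))) := by
  have hu : ∀ j : ℤ, 0 < c * a ^ j := fun j => mul_pos hc (zpow_pos ha0 j)
  apply Summable.of_nat_of_neg
  · -- positive indices: geometric via exp ≤ 1
    have hb : (0:ℝ) ≤ a ^ ζ := (Real.rpow_pos_of_pos ha0 ζ).le
    have hb1 : a ^ ζ < 1 := Real.rpow_lt_one ha0.le ha1 hζ
    refine Summable.of_nonneg_of_le (fun n => by positivity) (fun n => ?_)
      (((summable_geometric_of_lt_one hb hb1)).mul_left (c ^ ζ))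
    have h1 : (c * a ^ (n:ℤ)) ^ ζ = c ^ ζ * (a ^ ζ) ^ n := by
      rw [Real.mul_rpow hc.le (zpow_pos ha0 _).le, zpow_natCast,
        ← Real.rpow_natCast a n, ← Real.rpow_mul ha0.le, mul_comm (n:ℝ) ζ,
        Real.rpow_mul ha0.le, Real.rpow_natCast]
    rw [h1]
    have : Real.exp (-(c * a ^ (n:ℤ))) ≤ 1 := Real.exp_le_one_iff.2 (by linarith [hu n])
    exact mul_le_of_le_one_right (by positivity) this
  · -- negative indices
    obtain ⟨δ, hδ⟩ : ∃ δ : ℝ, δ = 1/a - 1 := ⟨_, rfl⟩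
    have hδ0 : 0 < δ := hδ ▸ sub_pos.2 ((one_lt_div ha0).2 ha1)
    obtain ⟨C, hC⟩ : ∃ C : ℝ, C = (2:ℝ) ^ ζ * ζ ^ ζ * Real.exp (-ζ) * Real.exp (-(c/2)) :=
      ⟨_, rfl⟩
    obtain ⟨q, hq⟩ : ∃ q : ℝ, q = Real.exp (-(c*δ/2)) := ⟨_, rfl⟩
    have hq0 : 0 ≤ q := hq ▸ (Real.exp_nonneg _)
    have hq1 : q < 1 := by
      rw [hq]
      apply Real.exp_lt_one_iff.2
      have := mul_pos hc hδ0
      linarith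
    refine Summable.of_nonneg_of_le (fun n => by positivity) (fun n => ?_)
      ((summable_geometric_of_lt_one hq0 hq1).mul_left C)
    obtain ⟨y, hy⟩ : ∃ y : ℝ, y = c * a ^ (-(n:ℤ)) := ⟨_, rfl⟩
    rw [← hy]
    have hy0 : 0 < y := hy ▸ hu _
    have h1 : y ^ ζ * Real.exp (-(y/2)) ≤ (2:ℝ) ^ ζ * ζ ^ ζ * Real.exp (-ζ) := by
      have h := gmax hζ (half_pos hy0)
      rw [Real.div_rpow hy0.le (by norm_num : (0:ℝ) ≤ 2)] at h
      have h2 : (0:ℝ) < (2:ℝ) ^ ζ := Real.rpow_pos_of_pos (by norm_num) ζ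
      rw [div_mul_eq_mul_div, div_le_iff₀ h2] at h
      calc y ^ ζ * Real.exp (-(y/2)) ≤ ζ ^ ζ * Real.exp (-ζ) * 2 ^ ζ := h
        _ = (2:ℝ) ^ ζ * ζ ^ ζ * Real.exp (-ζ) := by ring
    have h2 : 1 + (n:ℝ) * δ ≤ a ^ (-(n:ℤ)) := by
      have hB := one_add_mul_le_pow (a := δ) (by linarith) n
      have he : (1 + δ) ^ n = a ^ (-(n:ℤ)) := by
        rw [zpow_neg, zpow_natCast, ← inv_pow]
        congr 1
        rw [hδ]
        field_simp
        ring
      rw [← he]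
      exact hB
    have h3 : Real.exp (-(y/2)) ≤ Real.exp (-(c/2)) * q ^ n := by
      rw [hq, ← Real.exp_nat_mul, ← Real.exp_add]
      apply Real.exp_le_exp.2
      have hcy : c * (1 + (n:ℝ)*δ) ≤ y := by
        rw [hy]
        exact mul_le_mul_of_nonneg_left h2 hc.le
      nlinarith
    have hsplit : Real.exp (-y) = Real.exp (-(y/2)) * Real.exp (-(y/2)) := by
      rw [← Real.exp_add]
      congr 1
      ring
    calc y ^ ζ * Real.exp (-y)
        = (y ^ ζ * Real.exp (-(y/2))) * Real.exp (-(y/2)) := by rw [hsplit]; ring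
      _ ≤ ((2:ℝ) ^ ζ * ζ ^ ζ * Real.exp (-ζ)) * (Real.exp (-(c/2)) * q ^ n) :=
          mul_le_mul h1 h3 (Real.exp_nonneg _) (by positivity)
      _ = C * q ^ n := by rw [hC]; ring

lemma union_Ioc {a c : ℝ} (ha0 : 0 < a) (ha1 : a < 1) (hc : 0 < c) :
    (⋃ j : ℤ, Set.Ioc (c * a ^ (j+1)) (c * a ^ j)) = Set.Ioi 0 := by
  have hL : Real.log a < 0 := Real.log_neg ha0 ha1
  have hzpow : ∀ j : ℤ, a ^ j = Real.exp ((j:ℝ) * Real.log a) := by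
    intro j
    rw [← Real.rpow_intCast a j, Real.rpow_def_of_pos ha0, mul_comm]
  ext x
  simp only [Set.mem_iUnion, Set.mem_Ioc, Set.mem_Ioi]
  constructor
  · rintro ⟨j, h1, h2⟩
    have : 0 < c * a ^ (j+1) := mul_pos hc (zpow_pos ha0 _)
    linarith
  · intro hx
    have hr0 : 0 < x / c := div_pos hx hc
    have hxc : c * (x / c) = x := by field_simp
    refine ⟨⌊Real.log (x/c) / Real.log a⌋, ?_, ?_⟩
    · have h1 : (⌊Real.log (x/c) / Real.log a⌋ : ℝ) + 1 > Real.log (x/c) / Real.log a :=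
        Int.lt_floor_add_one _
      have h2 : ((⌊Real.log (x/c) / Real.log a⌋ : ℝ) + 1) * Real.log a < Real.log (x/c) := by
        have := (div_lt_iff_of_neg hL).1 h1
        linarith
      have h3 : a ^ (⌊Real.log (x/c) / Real.log a⌋ + 1) < x / c := by
        rw [hzpow]
        calc Real.exp ((((⌊Real.log (x/c) / Real.log a⌋ + 1) : ℤ):ℝ) * Real.log a)
            < Real.exp (Real.log (x/c)) := by
              apply Real.exp_lt_exp.2
              push_cast
              linarith
          _ = x / c := Real.exp_log hr0
      calc c * a ^ (⌊Real.log (x/c) / Real.log a⌋ + 1) < c * (x / c) :=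
            mul_lt_mul_of_pos_left h3 hc
        _ = x := hxc
    · have h1 : (⌊Real.log (x/c) / Real.log a⌋ : ℝ) ≤ Real.log (x/c) / Real.log a :=
        Int.floor_le _
      have h2 : Real.log (x/c) ≤ (⌊Real.log (x/c) / Real.log a⌋ : ℝ) * Real.log a := by
        have := (le_div_iff_of_neg hL).1 h1
        linarith
      have h3 : x / c ≤ a ^ ⌊Real.log (x/c) / Real.log a⌋ := by
        rw [hzpow]
        calc x / c = Real.exp (Real.log (x/c)) := (Real.exp_log hr0).symm
          _ ≤ Real.exp (((⌊Real.log (x/c) / Real.log a⌋ : ℤ):ℝ) * Real.log a) := by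
              apply Real.exp_le_exp.2
              linarith
      calc x = c * (x / c) := hxc.symm
        _ ≤ c * a ^ ⌊Real.log (x/c) / Real.log a⌋ := mul_le_mul_of_nonneg_left h3 hc.le

lemma mainA {a c ζ : ℝ} (ha0 : 0 < a) (ha1 : a < 1) (hc : 0 < c) (hζ : 0 < ζ) :
    Real.Gamma (ζ + 1) / (a ^ (-ζ) - 1) ≤
        (∑' j : ℤ, (c * a ^ j) ^ ζ * Real.exp (-(c * a ^ j))) ∧
      (∑' j : ℤ, (c * a ^ j) ^ ζ * Real.exp (-(c * a ^ j))) ≤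
        a ^ (-ζ) * Real.Gamma (ζ + 1) / (a ^ (-ζ) - 1) := by
  classical
  have hsum := sumA ha0 ha1 hc hζ
  set b : ℝ := a ^ ζ with hb
  set K : ℝ := a ^ (-ζ) with hK
  have hb0 : 0 < b := Real.rpow_pos_of_pos ha0 ζ
  have hb1 : b < 1 := Real.rpow_lt_one ha0.le ha1 hζ
  have hK1 : 1 < K := Real.one_lt_rpow_of_pos_of_lt_one_of_neg ha0 ha1 (by linarith)
  have hKb : K * b = 1 := by
    rw [hK, hb, ← Real.rpow_add ha0]
    simp
  have hK0 : 0 < K := by linarith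
  -- notation
  set u : ℤ → ℝ := fun j => c * a ^ j with hu
  have hu0 : ∀ j, 0 < u j := fun j => mul_pos hc (zpow_pos ha0 _)
  have hustep : ∀ j : ℤ, u (j+1) = u j * a := by
    intro j
    simp only [hu, zpow_add_one₀ ha0.ne']
    ring
  have huvw : ∀ j : ℤ, u (j+1) < u j := by
    intro j
    rw [hustep]
    nlinarith [hu0 j]
  have hmono : ∀ j k : ℤ, j ≤ k → u k ≤ u j := by
    intro j k hjk
    apply mul_le_mul_of_nonneg_left _ hc.le
    exact zpow_le_zpow_right_of_le_one₀ ha0 ha1.le hjk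
  set term : ℤ → ℝ := fun j => u j ^ ζ * Real.exp (-u j) with hterm
  -- key rpow relation : u j ^ ζ = K * u (j+1) ^ ζ
  have hkey : ∀ j : ℤ, u j ^ ζ = K * u (j+1) ^ ζ := by
    intro j
    rw [hustep, Real.mul_rpow (hu0 j).le ha0.le, ← hb, hK]
    rw [Real.rpow_neg ha0.le, ← hb]
    field_simp
  -- integrability
  have hint : MeasureTheory.IntegrableOn (fun x => Real.exp (-x) * x ^ ζ) (Set.Ioi 0) := by
    have := Real.GammaIntegral_convergent (show (0:ℝ) < ζ + 1 by linarith)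
    simpa using this
  have hGam : Real.Gamma (ζ + 1) = ∫ x in Set.Ioi (0:ℝ), Real.exp (-x) * x ^ ζ := by
    rw [Real.Gamma_eq_integral (by linarith)]
    simp
  -- disjointness
  have hdisj : Pairwise (Function.onFun Disjoint fun j : ℤ => Set.Ioc (u (j+1)) (u j)) := by
    have key : ∀ j k : ℤ, j < k → Disjoint (Set.Ioc (u (j+1)) (u j)) (Set.Ioc (u (k+1)) (u k)) := by
      intro j k h
      apply Set.disjoint_left.2
      rintro x ⟨h1, h2⟩ ⟨h3, h4⟩
      have : u k ≤ u (j+1) := hmono _ _ (by omega)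
      linarith
    intro j k hjk
    rcases lt_or_gt_of_ne hjk with h | h
    · exact key _ _ h
    · exact (key _ _ h).symm
  have hUnion : (⋃ j : ℤ, Set.Ioc (u (j+1)) (u j)) = Set.Ioi 0 := union_Ioc ha0 ha1 hc
  -- HasSum of integrals
  have hI : HasSum (fun j : ℤ => ∫ x in Set.Ioc (u (j+1)) (u j), Real.exp (-x) * x ^ ζ)
      (Real.Gamma (ζ + 1)) := by
    have h := MeasureTheory.hasSum_integral_iUnion
      (μ := MeasureTheory.volume)
      (f := fun x => Real.exp (-x) * x ^ ζ)
      (fun j : ℤ => measurableSet_Ioc) hdisj (by rw [hUnion]; exact hint)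
    rw [hUnion, ← hGam] at h
    exact h
  -- per interval bounds
  have hIocint : ∀ j : ℤ, MeasureTheory.IntegrableOn (fun x => Real.exp (-x) * x ^ ζ)
      (Set.Ioc (u (j+1)) (u j)) := by
    intro j
    apply hint.mono_set
    intro x hx
    exact (hu0 (j+1)).trans hx.1
  have hexpint : ∀ j : ℤ, MeasureTheory.IntegrableOn (fun x => Real.exp (-x))
      (Set.Ioc (u (j+1)) (u j)) := by
    intro j
    exact (Real.continuous_exp.comp continuous_neg).integrableOn_Ioc
  have hIexp : ∀ j : ℤ, ∫ x in Set.Ioc (u (j+1)) (u j), Real.exp (-x)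
      = Real.exp (-u (j+1)) - Real.exp (-u j) := by
    intro j
    rw [← intervalIntegral.integral_of_le (huvw j).le,
      intervalIntegral.integral_comp_neg (fun x => Real.exp x), integral_exp]
  have hIub : ∀ j : ℤ, ∫ x in Set.Ioc (u (j+1)) (u j), Real.exp (-x) * x ^ ζ
      ≤ K * term (j+1) - term j := by
    intro j
    have step1 : ∫ x in Set.Ioc (u (j+1)) (u j), Real.exp (-x) * x ^ ζ
        ≤ ∫ x in Set.Ioc (u (j+1)) (u j), u j ^ ζ * Real.exp (-x) := by
      apply MeasureTheory.setIntegral_mono_on (hIocint j) ((hexpint j).const_mul _)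
        measurableSet_Ioc
      rintro x ⟨h1, h2⟩
      rw [mul_comm]
      apply mul_le_mul_of_nonneg_right _ (Real.exp_nonneg _)
      exact Real.rpow_le_rpow ((hu0 (j+1)).trans h1).le h2 hζ.le
    rw [MeasureTheory.integral_const_mul, hIexp j] at step1
    calc (∫ x in Set.Ioc (u (j+1)) (u j), Real.exp (-x) * x ^ ζ)
        ≤ u j ^ ζ * (Real.exp (-u (j+1)) - Real.exp (-u j)) := step1
      _ = K * term (j+1) - term j := by
          simp only [hterm]
          linear_combination Real.exp (-u (j+1)) * hkey j
  have hIlb : ∀ j : ℤ, b * (K * term (j+1) - term j)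
      ≤ ∫ x in Set.Ioc (u (j+1)) (u j), Real.exp (-x) * x ^ ζ := by
    intro j
    have step1 : ∫ x in Set.Ioc (u (j+1)) (u j), u (j+1) ^ ζ * Real.exp (-x)
        ≤ ∫ x in Set.Ioc (u (j+1)) (u j), Real.exp (-x) * x ^ ζ := by
      apply MeasureTheory.setIntegral_mono_on ((hexpint j).const_mul _) (hIocint j)
        measurableSet_Ioc
      rintro x ⟨h1, h2⟩
      rw [mul_comm]
      exact mul_le_mul_of_nonneg_left
        (Real.rpow_le_rpow (hu0 (j+1)).le h1.le hζ.le) (Real.exp_nonneg _)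
    rw [MeasureTheory.integral_const_mul, hIexp j] at step1
    refine le_trans (le_of_eq ?_) step1
    have h1 : u (j+1) ^ ζ = b * u j ^ ζ := by
      rw [hustep, Real.mul_rpow (hu0 j).le ha0.le, hb]
      ring
    simp only [hterm]
    linear_combination (u (j+1) ^ ζ * Real.exp (-u (j+1))) * hKb + Real.exp (-u j) * h1
  -- summabilities
  have hshift : Summable (fun j : ℤ => term (j+1)) := by
    have := (Equiv.addRight (1:ℤ)).summable_iff (f := term)
    apply this.2
    exact hsum
  have hshift_eq : (∑' j : ℤ, term (j+1)) = ∑' j : ℤ, term j := by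
    have := Equiv.tsum_eq (Equiv.addRight (1:ℤ)) term
    simpa using this
  have hAsum : Summable (fun j : ℤ => K * term (j+1) - term j) :=
    (hshift.mul_left K).sub hsum
  have hAtsum : (∑' j : ℤ, (K * term (j+1) - term j)) = (K - 1) * ∑' j, term j := by
    rw [Summable.tsum_sub (hshift.mul_left K) hsum, tsum_mul_left, hshift_eq]
    ring
  set T : ℝ := ∑' j, term j with hT
  have hupper : Real.Gamma (ζ + 1) ≤ (K - 1) * T := by
    rw [← hAtsum]
    rw [← hI.tsum_eq]
    exact Summable.tsum_le_tsum hIub hI.summable hAsum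
  have hlower : b * ((K - 1) * T) ≤ Real.Gamma (ζ + 1) := by
    have : (∑' j : ℤ, b * (K * term (j+1) - term j)) = b * ((K-1) * T) := by
      rw [tsum_mul_left, hAtsum]
    rw [← this, ← hI.tsum_eq]
    exact Summable.tsum_le_tsum hIlb (hAsum.mul_left b) hI.summable
  constructor
  · rw [div_le_iff₀ (by linarith : (0:ℝ) < K - 1)]
    linarith [hupper]
  · rw [div_eq_mul_inv, mul_comm (K * Real.Gamma (ζ+1)), ← div_eq_inv_mul,
      le_div_iff₀ (by linarith : (0:ℝ) < K - 1)]
    nlinarith [hlower, hKb, hK0]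

theorem stmt5 (a θ ζ : ℝ) (ha0 : 0 < a) (ha1 : a < 1) (hθ : 0 < θ) (hζ : 0 < ζ) :
    ∀ t > 0,
      Summable (fun j : ℤ => (θ * a ^ j * t) ^ ζ * Real.exp (-(θ * a ^ j * t))) ∧
      Real.Gamma (ζ + 1) / (a ^ (-ζ) - 1) ≤
        ∑' j : ℤ, (θ * a ^ j * t) ^ ζ * Real.exp (-(θ * a ^ j * t)) ∧
      ∑' j : ℤ, (θ * a ^ j * t) ^ ζ * Real.exp (-(θ * a ^ j * t)) ≤
        a ^ (-ζ) * Real.Gamma (ζ + 1) / (a ^ (-ζ) - 1) := by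
  intro t ht
  have hc : 0 < θ * t := mul_pos hθ ht
  have hfun : (fun j : ℤ => (θ * a ^ j * t) ^ ζ * Real.exp (-(θ * a ^ j * t)))
      = fun j : ℤ => ((θ * t) * a ^ j) ^ ζ * Real.exp (-((θ * t) * a ^ j)) := by
    funext j
    rw [show θ * a ^ j * t = (θ * t) * a ^ j from by ring]
  refine ⟨?_, ?_, ?_⟩
  · rw [hfun]
    exact sumA ha0 ha1 hc hζ
  · rw [hfun]
    exact (mainA ha0 ha1 hc hζ).1
  · rw [hfun]
    exact (mainA ha0 ha1 hc hζ).2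
end

section
/- Let a ∈ (0,1), θ > 0 and −1 < ζ < 0. Then for every t > 0, a^{−ζ} Γ(ζ+1)/(1−a^{−ζ}) ≤ Σ_{j∈ℤ} (θ a^j t)^ζ (1−e^{−θ a^j t}) ≤ Γ(ζ+1)/(1−a^{−ζ}), where Γ is the Gamma function (and the two-sided series converges for every t > 0). -/
open Filter Topology

/-!
Write `x k = c * a ^ k` (with `c = θ * t`), `r = a ^ (-ζ)` and `H k = x k ^ ζ * (1 - exp (-x k))`.
Since `r * x (k + 1) ^ ζ = x k ^ ζ`, Abel summation gives `(1 - r) * ∑ H = ∑ S` with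
`S k = x k ^ ζ * (exp (-x (k + 1)) - exp (-x k))`. Let `I k` be the integral of `exp (-u) * u ^ ζ`
over `(x (k + 1), x k]`; as `u ^ ζ` is decreasing, `r * I k ≤ S k ≤ I k`. These intervals tile
`(0, ∞)`, so `∑ I = Γ(ζ + 1)`.
-/

open Real Set MeasureTheory

section Geometric

variable {a c : ℝ}

lemma rpow_mul_zpow (hc : 0 ≤ c) (ha : 0 ≤ a) (s : ℝ) (j : ℤ) :
    (c * a ^ j) ^ s = c ^ s * (a ^ s) ^ j := by
  rw [mul_rpow hc (zpow_nonneg ha j), ← rpow_intCast_mul ha, mul_comm (j : ℝ), rpow_mul_intCast ha,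
    mul_comm]

lemma summable_rpow_mul_zpow_natCast (hc : 0 ≤ c) (ha0 : 0 < a) (ha1 : a < 1) {s : ℝ}
    (hs : 0 < s) : Summable fun n : ℕ => (c * a ^ (n : ℤ)) ^ s := by
  simp_rw [rpow_mul_zpow hc ha0.le, zpow_natCast]
  exact (summable_geometric_of_lt_one (rpow_nonneg ha0.le s) (rpow_lt_one ha0.le ha1 hs)).mul_left _

lemma summable_rpow_mul_zpow_neg_natCast (hc : 0 ≤ c) (ha0 : 0 < a) (ha1 : a < 1) {s : ℝ}
    (hs : s < 0) : Summable fun n : ℕ => (c * a ^ (-(n : ℤ))) ^ s := by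
  simp_rw [rpow_mul_zpow hc ha0.le, zpow_neg, zpow_natCast, ← inv_pow, ← rpow_neg ha0.le]
  exact (summable_geometric_of_lt_one (rpow_nonneg ha0.le _)
    (rpow_lt_one ha0.le ha1 (neg_pos.2 hs))).mul_left _

lemma iUnion_Ioc_mul_zpow (hc : 0 < c) (ha0 : 0 < a) (ha1 : a < 1) :
    ⋃ k : ℤ, Ioc (c * a ^ (k + 1)) (c * a ^ k) = Ioi 0 := by
  refine Subset.antisymm (iUnion_subset fun k u hu => ?_) fun u hu => ?_
  · exact (mul_pos hc (zpow_pos ha0 _)).trans hu.1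
  · obtain ⟨n, hn⟩ := exists_mem_Ioc_zpow (div_pos hu hc) (one_lt_inv₀ ha0 |>.2 ha1)
    refine mem_iUnion.2 ⟨-(n + 1), ?_⟩
    rw [inv_zpow', inv_zpow', mem_Ioc, lt_div_iff₀' hc, div_le_iff₀' hc] at hn
    rwa [neg_add, neg_add_cancel_right, mem_Ioc, ← neg_add]

lemma pairwise_disjoint_Ioc_mul_zpow (hc : 0 < c) (ha0 : 0 < a) (ha1 : a < 1) :
    Pairwise (Function.onFun Disjoint fun k : ℤ => Ioc (c * a ^ (k + 1)) (c * a ^ k)) := by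
  simpa only [Order.succ_eq_add_one] using
    ((zpow_right_anti₀ ha0 ha1.le).const_mul hc.le).pairwise_disjoint_on_Ioc_succ

end Geometric

lemma hasSum_sub_mul_add_one {α : Type*} [Ring α] [TopologicalSpace α] [IsTopologicalRing α]
    {f : ℤ → α} {s : α} (hf : HasSum f s) (r : α) :
    HasSum (fun k => f k - r * f (k + 1)) ((1 - r) * s) := by
  have hshift : HasSum (fun k => f (k + 1)) s := (Equiv.addRight (1 : ℤ)).hasSum_iff.2 hf
  simpa only [sub_mul, one_mul] using hf.sub (hshift.mul_left r)

section OneSubExp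

variable {x : ℝ}

lemma rpow_mul_one_sub_exp_neg_nonneg (hx : 0 ≤ x) (s : ℝ) : 0 ≤ x ^ s * (1 - exp (-x)) :=
  mul_nonneg (rpow_nonneg hx s) (sub_nonneg.2 (exp_le_one_iff.2 (neg_nonpos.2 hx)))

lemma rpow_mul_one_sub_exp_neg_le_rpow (hx : 0 ≤ x) (s : ℝ) : x ^ s * (1 - exp (-x)) ≤ x ^ s :=
  mul_le_of_le_one_right (rpow_nonneg hx s) (sub_le_self _ (exp_nonneg _))

lemma rpow_mul_one_sub_exp_neg_le_rpow_add_one (hx : 0 < x) (s : ℝ) :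
    x ^ s * (1 - exp (-x)) ≤ x ^ (s + 1) := by
  rw [rpow_add_one hx.ne']
  exact mul_le_mul_of_nonneg_left (by linarith [add_one_le_exp (-x)]) (rpow_nonneg hx.le s)

end OneSubExp

lemma integral_Ioc_exp_neg {p q : ℝ} (hpq : p ≤ q) :
    ∫ u in Ioc p q, exp (-u) = exp (-p) - exp (-q) := by
  rw [← intervalIntegral.integral_of_le hpq, intervalIntegral.integral_comp_neg (fun u => exp u),
    integral_exp]

lemma integral_Ioc_exp_neg_mul_rpow_mem_Icc {p q s : ℝ} (hp : 0 < p) (hpq : p ≤ q) (hs : s ≤ 0) :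
    ∫ u in Ioc p q, exp (-u) * u ^ s ∈
      Icc (q ^ s * (exp (-p) - exp (-q))) (p ^ s * (exp (-p) - exp (-q))) := by
  have hint : ∀ C : ℝ, ∫ u in Ioc p q, exp (-u) * C = C * (exp (-p) - exp (-q)) := fun C => by
    rw [integral_mul_const, integral_Ioc_exp_neg hpq, mul_comm]
  have hf : IntegrableOn (fun u => exp (-u) * u ^ s) (Ioc p q) := by
    refine ContinuousOn.integrableOn_Icc ?_ |>.mono_set Ioc_subset_Icc_self
    exact fun u hu => ((continuous_exp.comp continuous_neg).continuousAt.mul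
      (continuousAt_rpow_const _ _ (Or.inl (hp.trans_le hu.1).ne'))).continuousWithinAt
  have hC : ∀ C : ℝ, IntegrableOn (fun u => exp (-u) * C) (Ioc p q) := fun C =>
    ((continuous_exp.comp continuous_neg).mul continuous_const).integrableOn_Ioc
  rw [← hint, ← hint]
  refine ⟨setIntegral_mono_on (hC _) hf measurableSet_Ioc fun u hu => ?_,
    setIntegral_mono_on hf (hC _) measurableSet_Ioc fun u hu => ?_⟩
  · exact mul_le_mul_of_nonneg_left (rpow_le_rpow_of_nonpos (hp.trans hu.1) hu.2 hs) (exp_nonneg _)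
  · exact mul_le_mul_of_nonneg_left (rpow_le_rpow_of_nonpos hp hu.1.le hs) (exp_nonneg _)

lemma hasSum_integral_Ioc_mul_zpow {E : Type*} [NormedAddCommGroup E] [NormedSpace ℝ E]
    {f : ℝ → E} {a c : ℝ} (hc : 0 < c) (ha0 : 0 < a) (ha1 : a < 1) (hf : IntegrableOn f (Ioi 0)) :
    HasSum (fun k : ℤ => ∫ u in Ioc (c * a ^ (k + 1)) (c * a ^ k), f u) (∫ u in Ioi 0, f u) := by
  rw [← iUnion_Ioc_mul_zpow hc ha0 ha1] at hf ⊢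
  exact hasSum_integral_iUnion (fun _ => measurableSet_Ioc)
    (pairwise_disjoint_Ioc_mul_zpow hc ha0 ha1) hf

lemma hasSum_integral_Ioc_mul_zpow_exp_neg_mul_rpow {a c ζ : ℝ} (hc : 0 < c) (ha0 : 0 < a)
    (ha1 : a < 1) (hζ : -1 < ζ) :
    HasSum (fun k : ℤ => ∫ u in Ioc (c * a ^ (k + 1)) (c * a ^ k), exp (-u) * u ^ ζ)
      (Gamma (ζ + 1)) := by
  have hs : 0 < ζ + 1 := neg_lt_iff_pos_add.1 hζ
  rw [Gamma_eq_integral hs, add_sub_cancel_right]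
  refine hasSum_integral_Ioc_mul_zpow hc ha0 ha1 ?_
  simpa only [add_sub_cancel_right] using GammaIntegral_convergent hs

theorem summable_rpow_mul_one_sub_exp_neg {a c ζ : ℝ} (hc : 0 < c) (ha0 : 0 < a) (ha1 : a < 1)
    (hζ0 : -1 < ζ) (hζ1 : ζ < 0) :
    Summable fun j : ℤ => (c * a ^ j) ^ ζ * (1 - exp (-(c * a ^ j))) := by
  have hx : ∀ j : ℤ, 0 < c * a ^ j := fun j => mul_pos hc (zpow_pos ha0 j)
  refine .of_nat_of_neg ?_ ?_
  · exact (summable_rpow_mul_zpow_natCast hc.le ha0 ha1 (neg_lt_iff_pos_add.1 hζ0)).of_nonneg_of_le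
      (fun n => rpow_mul_one_sub_exp_neg_nonneg (hx n).le ζ)
      (fun n => rpow_mul_one_sub_exp_neg_le_rpow_add_one (hx n) ζ)
  · exact (summable_rpow_mul_zpow_neg_natCast hc.le ha0 ha1 hζ1).of_nonneg_of_le
      (fun n => rpow_mul_one_sub_exp_neg_nonneg (hx _).le ζ)
      (fun n => rpow_mul_one_sub_exp_neg_le_rpow (hx _).le ζ)

theorem tsum_rpow_mul_one_sub_exp_neg_mem_Icc {a c ζ : ℝ} (hc : 0 < c) (ha0 : 0 < a) (ha1 : a < 1)
    (hζ0 : -1 < ζ) (hζ1 : ζ < 0) :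
    ∑' j : ℤ, (c * a ^ j) ^ ζ * (1 - exp (-(c * a ^ j))) ∈
      Icc (a ^ (-ζ) * Gamma (ζ + 1) / (1 - a ^ (-ζ))) (Gamma (ζ + 1) / (1 - a ^ (-ζ))) := by
  set r := a ^ (-ζ) with hr_def
  set x : ℤ → ℝ := fun k => c * a ^ k
  have hx : ∀ k, 0 < x k := fun k => mul_pos hc (zpow_pos ha0 k)
  have hx_anti : Antitone x := (zpow_right_anti₀ ha0 ha1.le).const_mul hc.le
  have hra : r * a ^ ζ = 1 := by
    rw [hr_def, rpow_neg ha0.le, inv_mul_cancel₀ (rpow_pos_of_pos ha0 ζ).ne']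
  have hx_succ : ∀ k, r * x (k + 1) ^ ζ = x k ^ ζ := fun k => by
    rw [rpow_mul_zpow hc.le ha0.le, rpow_mul_zpow hc.le ha0.le,
      zpow_add_one₀ (rpow_pos_of_pos ha0 ζ).ne']
    linear_combination (c ^ ζ * (a ^ ζ) ^ k) * hra
  set E : ℤ → ℝ := fun k => exp (-x (k + 1)) - exp (-x k)
  have hS : HasSum (fun k => x k ^ ζ * E k) ((1 - r) * ∑' j : ℤ, x j ^ ζ * (1 - exp (-x j))) := by
    refine (hasSum_sub_mul_add_one
      (summable_rpow_mul_one_sub_exp_neg hc ha0 ha1 hζ0 hζ1).hasSum r).congr_fun fun k => ?_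
    rw [← hx_succ k]
    ring
  have hI := hasSum_integral_Ioc_mul_zpow_exp_neg_mul_rpow hc ha0 ha1 hζ0
  have hbounds : ∀ k, r * (∫ u in Ioc (x (k + 1)) (x k), exp (-u) * u ^ ζ) ≤ x k ^ ζ * E k ∧
      x k ^ ζ * E k ≤ ∫ u in Ioc (x (k + 1)) (x k), exp (-u) * u ^ ζ := fun k => by
    have hmem := integral_Ioc_exp_neg_mul_rpow_mem_Icc (hx (k + 1)) (hx_anti (lt_add_one k).le)
      hζ1.le
    refine ⟨?_, hmem.1⟩
    calc r * _ ≤ r * (x (k + 1) ^ ζ * E k) :=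
          mul_le_mul_of_nonneg_left hmem.2 (rpow_nonneg ha0.le _)
      _ = x k ^ ζ * E k := by rw [← mul_assoc, hx_succ]
  have h1r : 0 < 1 - r := sub_pos.2 (rpow_lt_one ha0.le ha1 (neg_pos.2 hζ1))
  rw [mem_Icc, div_le_iff₀' h1r, le_div_iff₀' h1r]
  exact ⟨hasSum_le (fun k => (hbounds k).1) (hI.mul_left r) hS,
    hasSum_le (fun k => (hbounds k).2) hS hI⟩

theorem stmt6 (a θ ζ : ℝ) (ha0 : 0 < a) (ha1 : a < 1) (hθ : 0 < θ)
    (hζ0 : -1 < ζ) (hζ1 : ζ < 0) :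
    ∀ t > 0,
      Summable (fun j : ℤ => (θ * a ^ j * t) ^ ζ * (1 - Real.exp (-(θ * a ^ j * t)))) ∧
      a ^ (-ζ) * Real.Gamma (ζ + 1) / (1 - a ^ (-ζ)) ≤
        ∑' j : ℤ, (θ * a ^ j * t) ^ ζ * (1 - Real.exp (-(θ * a ^ j * t))) ∧
      ∑' j : ℤ, (θ * a ^ j * t) ^ ζ * (1 - Real.exp (-(θ * a ^ j * t))) ≤
        Real.Gamma (ζ + 1) / (1 - a ^ (-ζ)) := by
  intro t ht
  have hc : 0 < θ * t := mul_pos hθ ht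
  simp_rw [mul_right_comm θ _ t]
  exact ⟨summable_rpow_mul_one_sub_exp_neg hc ha0 ha1 hζ0 hζ1,
    tsum_rpow_mul_one_sub_exp_neg_mem_Icc hc ha0 ha1 hζ0 hζ1⟩
end

section
/- Let a ∈ (0,1), θ > 0 and −1 < ζ < 0. Then for every t > 0, a^{−ζ}(2−2^{−ζ}) Γ(ζ+1)/(1−a^{−ζ}) ≤ Σ_{j∈ℤ} (θ a^j t)^ζ (1−e^{−θ a^j t})² ≤ (2−2^{−ζ}) Γ(ζ+1)/(1−a^{−ζ}), where Γ is the Gamma function (and the two-sided series converges for every t > 0). -/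
open Filter Topology

open Real Set MeasureTheory in
private lemma ff_contOn (ζ : ℝ) :
    ContinuousOn (fun y : ℝ => y ^ ζ * (2 * Real.exp (-y) - 2 * Real.exp (-(2*y)))) (Ioi 0) := by
  apply ContinuousOn.mul
  · exact continuousOn_id.rpow_const fun x hx => Or.inl (ne_of_gt hx)
  · fun_prop

open Real Set MeasureTheory in
private lemma ff_integrable {ζ : ℝ} (hζ0 : -1 < ζ) :
    IntegrableOn (fun y : ℝ => y ^ ζ * (2 * Real.exp (-y) - 2 * Real.exp (-(2*y)))) (Ioi 0) := by
  have hbase : IntegrableOn (fun y : ℝ => 2 * (Real.exp (-y) * y ^ ζ)) (Ioi 0) := by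
    have := (Real.GammaIntegral_convergent (s := ζ + 1) (by linarith)).const_mul 2
    simpa [IntegrableOn] using this
  refine hbase.mono' ((ff_contOn ζ).aestronglyMeasurable measurableSet_Ioi) ?_
  rw [ae_restrict_iff' measurableSet_Ioi]
  filter_upwards with y hy
  have hy0 : (0:ℝ) < y := hy
  have h1 : Real.exp (-(2*y)) ≤ Real.exp (-y) := by
    apply Real.exp_le_exp.2; linarith
  have h2 : (0:ℝ) ≤ 2 * Real.exp (-y) - 2 * Real.exp (-(2*y)) := by linarith
  have h3 : 0 ≤ y ^ ζ := (Real.rpow_pos_of_pos hy0 ζ).le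
  rw [Real.norm_eq_abs, abs_of_nonneg (mul_nonneg h3 h2)]
  have : 2 * Real.exp (-y) - 2 * Real.exp (-(2*y)) ≤ 2 * Real.exp (-y) := by
    have := Real.exp_pos (-(2*y)); linarith
  calc y ^ ζ * (2 * Real.exp (-y) - 2 * Real.exp (-(2*y))) ≤ y ^ ζ * (2 * Real.exp (-y)) :=
        mul_le_mul_of_nonneg_left this h3
    _ = 2 * (Real.exp (-y) * y ^ ζ) := by ring

open Real Set MeasureTheory in
private lemma ff_integral {ζ : ℝ} (hζ0 : -1 < ζ) :
    ∫ y in Ioi (0:ℝ), y ^ ζ * (2 * Real.exp (-y) - 2 * Real.exp (-(2*y)))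
      = (2 - (2:ℝ) ^ (-ζ)) * Real.Gamma (ζ + 1) := by
  have hs : (0:ℝ) < ζ + 1 := by linarith
  have hint1 : IntegrableOn (fun y : ℝ => y ^ ζ * (2 * Real.exp (-y))) (Ioi 0) := by
    have := (Real.GammaIntegral_convergent (s := ζ + 1) hs).const_mul 2
    apply IntegrableOn.congr_fun (this) _ measurableSet_Ioi
    intro y hy; simp; ring
  have hint2 : IntegrableOn (fun y : ℝ => y ^ ζ * (2 * Real.exp (-(2*y)))) (Ioi 0) := by
    refine hint1.mono' ?_ ?_
    · apply ContinuousOn.aestronglyMeasurable _ measurableSet_Ioi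
      apply ContinuousOn.mul
      · exact continuousOn_id.rpow_const fun x hx => Or.inl (ne_of_gt hx)
      · fun_prop
    · rw [ae_restrict_iff' measurableSet_Ioi]
      filter_upwards with y hy
      have hy0 : (0:ℝ) < y := hy
      have h1 : Real.exp (-(2*y)) ≤ Real.exp (-y) := by apply Real.exp_le_exp.2; linarith
      have h3 : 0 ≤ y ^ ζ := (Real.rpow_pos_of_pos hy0 ζ).le
      rw [Real.norm_eq_abs, abs_of_nonneg (by positivity)]
      apply mul_le_mul_of_nonneg_left (by linarith) h3
  have hsplit : ∫ y in Ioi (0:ℝ), y ^ ζ * (2 * Real.exp (-y) - 2 * Real.exp (-(2*y)))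
      = (∫ y in Ioi (0:ℝ), y ^ ζ * (2 * Real.exp (-y)))
        - ∫ y in Ioi (0:ℝ), y ^ ζ * (2 * Real.exp (-(2*y))) := by
    rw [← integral_sub hint1 hint2]
    congr 1; ext y; ring
  have e1 : ∫ y in Ioi (0:ℝ), y ^ ζ * (2 * Real.exp (-y)) = 2 * Real.Gamma (ζ+1) := by
    have := Real.integral_rpow_mul_exp_neg_mul_Ioi hs one_pos
    rw [show (fun y:ℝ => y ^ ζ * (2 * Real.exp (-y)))
          = fun y:ℝ => 2 * (y ^ (ζ+1-1) * Real.exp (-(1*y))) from funext fun y => by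
        rw [show ζ+1-1 = ζ by ring]; rw [one_mul]; ring]
    rw [MeasureTheory.integral_const_mul, this]
    norm_num
  have e2 : ∫ y in Ioi (0:ℝ), y ^ ζ * (2 * Real.exp (-(2*y)))
      = 2 * ((1/2:ℝ) ^ (ζ+1) * Real.Gamma (ζ+1)) := by
    have := Real.integral_rpow_mul_exp_neg_mul_Ioi hs two_pos
    rw [show (fun y:ℝ => y ^ ζ * (2 * Real.exp (-(2*y))))
          = fun y:ℝ => 2 * (y ^ (ζ+1-1) * Real.exp (-(2*y))) from funext fun y => by
        rw [show ζ+1-1 = ζ by ring]; ring]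
    rw [MeasureTheory.integral_const_mul, this]
  rw [hsplit, e1, e2]
  have h2 : (1/2:ℝ) ^ (ζ+1) = (2:ℝ) ^ (-(ζ+1)) := by
    rw [one_div, Real.inv_rpow (by norm_num : (0:ℝ) ≤ 2), ← Real.rpow_neg (by norm_num : (0:ℝ) ≤ 2)]
  rw [h2]
  have h3 : (2:ℝ) * (2:ℝ) ^ (-(ζ+1)) = (2:ℝ) ^ (-ζ) := by
    nth_rewrite 1 [← Real.rpow_one (2:ℝ)]
    rw [← Real.rpow_add (by norm_num : (0:ℝ) < 2)]
    norm_num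
  rw [show (2:ℝ) * ((2:ℝ) ^ (-(ζ+1)) * Real.Gamma (ζ+1)) = (2 * (2:ℝ) ^ (-(ζ+1))) * Real.Gamma (ζ+1) by ring, h3]
  ring

private noncomputable def Xf (a θ t : ℝ) (j : ℤ) : ℝ := θ * a ^ j * t

private noncomputable def Ff (ζ : ℝ) (y : ℝ) : ℝ :=
  y ^ ζ * (2 * Real.exp (-y) - 2 * Real.exp (-(2*y)))

private noncomputable def Uf (y : ℝ) : ℝ := (1 - Real.exp (-y)) ^ 2

section main
variable {a θ ζ t : ℝ} (ha0 : 0 < a) (ha1 : a < 1) (hθ : 0 < θ)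
  (hζ0 : -1 < ζ) (hζ1 : ζ < 0) (ht : 0 < t)

open Real Set MeasureTheory intervalIntegral

include ha0 hθ ht in
private lemma X_pos : ∀ j, 0 < Xf a θ t j := by
  intro j; unfold Xf
  have := zpow_pos ha0 j
  positivity

include ha0 in
private lemma X_succ : ∀ j, Xf a θ t (j+1) = a * Xf a θ t j := by
  intro j; unfold Xf; rw [zpow_add_one₀ ha0.ne']; ring

include ha0 ha1 hθ ht in
private lemma X_anti : ∀ {i j : ℤ}, i ≤ j → Xf a θ t j ≤ Xf a θ t i := by
  intro i j hij
  unfold Xf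
  have : a ^ j ≤ a ^ i := zpow_le_zpow_right_of_le_one₀ ha0 ha1.le hij
  have h2 := mul_pos hθ ht
  nlinarith [zpow_pos ha0 i, zpow_pos ha0 j]

include ha0 ha1 hθ ht in
private lemma X_succ_lt : ∀ j, Xf a θ t (j+1) < Xf a θ t j := by
  intro j
  rw [X_succ ha0]
  nlinarith [X_pos (a := a) (θ := θ) (t := t) ha0 hθ ht j]

include ha0 hθ ht in
private lemma X_rpow : ∀ (s : ℝ) (j : ℤ),
    (Xf a θ t j) ^ s = (Xf a θ t 0) ^ s * (a ^ s) ^ j := by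
  intro s j
  have h0 : Xf a θ t j = Xf a θ t 0 * a ^ j := by unfold Xf; simp; ring
  rw [h0, Real.mul_rpow (X_pos ha0 hθ ht 0).le (zpow_pos ha0 j).le]
  congr 1
  rw [← Real.rpow_intCast a j, ← Real.rpow_mul ha0.le, mul_comm, Real.rpow_mul ha0.le,
    Real.rpow_intCast]

private lemma U_hasDeriv : ∀ y : ℝ, HasDerivAt Uf (2 * Real.exp (-y) - 2 * Real.exp (-(2*y))) y := by
  intro y
  have h1 : HasDerivAt (fun z : ℝ => 1 - Real.exp (-z)) (Real.exp (-y)) y := by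
    simpa using ((Real.hasDerivAt_exp (-y)).comp y (hasDerivAt_neg y)).const_sub 1
  have h2 := h1.pow 2
  have h3 := h2.congr_deriv (show _ = 2 * Real.exp (-y) - 2 * Real.exp (-(2*y)) by
    rw [show -(2*y) = -y + -y by ring, Real.exp_add]; push_cast; ring)
  exact h3

private lemma U_nonneg (y : ℝ) : 0 ≤ Uf y := sq_nonneg _

private lemma U_mono {p q : ℝ} (hp : 0 ≤ p) (hpq : p ≤ q) : Uf p ≤ Uf q := by
  unfold Uf
  have h1 : Real.exp (-p) ≤ 1 := Real.exp_le_one_iff.2 (by linarith)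
  have h2 : Real.exp (-q) ≤ Real.exp (-p) := Real.exp_le_exp.2 (by linarith)
  nlinarith [Real.exp_pos (-p), Real.exp_pos (-q)]

private lemma U_le_one {y : ℝ} (hy : 0 ≤ y) : Uf y ≤ 1 := by
  unfold Uf
  have h1 : Real.exp (-y) ≤ 1 := Real.exp_le_one_iff.2 (by linarith)
  nlinarith [Real.exp_pos (-y)]

private lemma U_le_sq {y : ℝ} (hy : 0 ≤ y) : Uf y ≤ y ^ 2 := by
  unfold Uf
  have h1 : Real.exp (-y) ≤ 1 := Real.exp_le_one_iff.2 (by linarith)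
  have h2 : 1 - y ≤ Real.exp (-y) := by
    have := Real.add_one_le_exp (-y); linarith
  nlinarith [Real.exp_pos (-y)]

private lemma Udiff_eq {p q : ℝ} (hp : 0 < p) (hq : 0 < q) :
    ∫ y in p..q, (2 * Real.exp (-y) - 2 * Real.exp (-(2*y))) = Uf q - Uf p := by
  apply intervalIntegral.integral_eq_sub_of_hasDerivAt (fun y _ => U_hasDeriv y)
  apply Continuous.intervalIntegrable
  fun_prop

private lemma Ff_intInt {ζ : ℝ} {p q : ℝ} (hp : 0 < p) (hq : 0 < q) :
    IntervalIntegrable (Ff ζ) MeasureTheory.volume p q := by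
  apply ContinuousOn.intervalIntegrable
  apply (ff_contOn ζ).mono
  intro y hy
  have := hy.1
  simp only [Set.mem_Ioi]
  calc (0:ℝ) < min p q := lt_min hp hq
    _ ≤ y := by simpa using hy.1

private lemma uderiv_nonneg {y : ℝ} (hy : 0 ≤ y) :
    0 ≤ 2 * Real.exp (-y) - 2 * Real.exp (-(2*y)) := by
  have : Real.exp (-(2*y)) ≤ Real.exp (-y) := Real.exp_le_exp.2 (by linarith)
  linarith

private lemma Ff_integrableOn' {ζ : ℝ} (hζ0 : -1 < ζ) :
    MeasureTheory.IntegrableOn (Ff ζ) (Set.Ioi 0) MeasureTheory.volume := ff_integrable hζ0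

private lemma Ff_integral' {ζ : ℝ} (hζ0 : -1 < ζ) :
    ∫ y in Set.Ioi (0:ℝ), Ff ζ y = (2 - (2:ℝ) ^ (-ζ)) * Real.Gamma (ζ + 1) := ff_integral hζ0

private noncomputable def Tf (a θ ζ t : ℝ) (j : ℤ) : ℝ :=
  (Xf a θ t j) ^ ζ * (Uf (Xf a θ t j) - Uf (Xf a θ t (j+1)))

private noncomputable def If (a θ ζ t : ℝ) (j : ℤ) : ℝ :=
  ∫ y in (Xf a θ t (j+1))..(Xf a θ t j), Ff ζ y

include ha0 ha1 hθ ht in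
private lemma T_nonneg : ∀ j, 0 ≤ Tf a θ ζ t j := by
  intro j
  apply mul_nonneg (Real.rpow_pos_of_pos (X_pos ha0 hθ ht j) ζ).le
  have := U_mono (X_pos ha0 hθ ht (j+1)).le (X_succ_lt ha0 ha1 hθ ht j).le
  linarith

include ha0 ha1 hθ hζ1 ht in
private lemma T_le_I : ∀ j, Tf a θ ζ t j ≤ If a θ ζ t j := by
  intro j
  set p := Xf a θ t (j+1) with hp_def
  set q := Xf a θ t j with hq_def
  have hp : 0 < p := X_pos ha0 hθ ht _
  have hq : 0 < q := X_pos ha0 hθ ht _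
  have hpq : p ≤ q := (X_succ_lt ha0 ha1 hθ ht j).le
  have hT : Tf a θ ζ t j = ∫ y in p..q, q ^ ζ * (2 * Real.exp (-y) - 2 * Real.exp (-(2*y))) := by
    rw [intervalIntegral.integral_const_mul, Udiff_eq hp hq]; rfl
  rw [hT]
  apply intervalIntegral.integral_mono_on hpq
  · apply Continuous.intervalIntegrable; fun_prop
  · exact Ff_intInt hp hq
  · intro y hy
    have hy0 : 0 < y := lt_of_lt_of_le hp hy.1
    have h1 : q ^ ζ ≤ y ^ ζ := Real.rpow_le_rpow_of_nonpos hy0 hy.2 hζ1.le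
    exact mul_le_mul_of_nonneg_right h1 (uderiv_nonneg hy0.le)

include ha0 ha1 hθ hζ1 ht in
private lemma I_le_T : ∀ j, If a θ ζ t j ≤ a ^ ζ * Tf a θ ζ t j := by
  intro j
  set p := Xf a θ t (j+1) with hp_def
  set q := Xf a θ t j with hq_def
  have hp : 0 < p := X_pos ha0 hθ ht _
  have hq : 0 < q := X_pos ha0 hθ ht _
  have hpq : p ≤ q := (X_succ_lt ha0 ha1 hθ ht j).le
  have hT : a ^ ζ * Tf a θ ζ t j
      = ∫ y in p..q, (a ^ ζ * q ^ ζ) * (2 * Real.exp (-y) - 2 * Real.exp (-(2*y))) := by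
    rw [intervalIntegral.integral_const_mul, Udiff_eq hp hq]
    show a ^ ζ * (q ^ ζ * (Uf q - Uf p)) = a ^ ζ * q ^ ζ * (Uf q - Uf p)
    ring
  rw [hT]
  apply intervalIntegral.integral_mono_on hpq
  · exact Ff_intInt hp hq
  · apply Continuous.intervalIntegrable; fun_prop
  · intro y hy
    have hy0 : 0 < y := lt_of_lt_of_le hp hy.1
    have hpζ : y ^ ζ ≤ p ^ ζ := Real.rpow_le_rpow_of_nonpos hp hy.1 hζ1.le
    have hpq2 : p ^ ζ = a ^ ζ * q ^ ζ := by
      rw [hp_def, X_succ ha0, Real.mul_rpow ha0.le hq.le]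
    show y ^ ζ * _ ≤ _
    rw [← hpq2]
    exact mul_le_mul_of_nonneg_right hpζ (uderiv_nonneg hy0.le)

private noncomputable def Gf (a θ ζ t : ℝ) (j : ℤ) : ℝ :=
  (Xf a θ t j) ^ ζ * Uf (Xf a θ t j)

include ha0 hθ ht in
private lemma G_nonneg : ∀ j, 0 ≤ Gf a θ ζ t j := fun j =>
  mul_nonneg (Real.rpow_pos_of_pos (X_pos ha0 hθ ht j) ζ).le (U_nonneg _)

include ha0 ha1 hθ hζ0 hζ1 ht in
private lemma G_summable : Summable (Gf a θ ζ t) := by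
  have hX0 := X_pos ha0 hθ ht 0
  apply Summable.of_nat_of_neg
  · have hq1 : a ^ (ζ+2) < 1 := Real.rpow_lt_one ha0.le ha1 (by linarith)
    have hq0 : (0:ℝ) ≤ a ^ (ζ+2) := (Real.rpow_pos_of_pos ha0 _).le
    refine Summable.of_nonneg_of_le (fun n => G_nonneg ha0 hθ ht _) ?_
      ((summable_geometric_of_lt_one hq0 hq1).mul_left ((Xf a θ t 0) ^ (ζ+2)))
    · intro n
      have hXn := X_pos ha0 hθ ht (n : ℤ)
      have h1 : Gf a θ ζ t n ≤ (Xf a θ t n) ^ (ζ+2) := by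
        have h2 : Uf (Xf a θ t n) ≤ (Xf a θ t n) ^ (2:ℕ) := U_le_sq hXn.le
        have h3 : (Xf a θ t n) ^ ζ * (Xf a θ t n) ^ (2:ℕ) = (Xf a θ t n) ^ (ζ+2) := by
          rw [← Real.rpow_natCast (Xf a θ t n) 2, ← Real.rpow_add hXn]
          norm_num
        calc Gf a θ ζ t n ≤ (Xf a θ t n) ^ ζ * (Xf a θ t n) ^ (2:ℕ) :=
              mul_le_mul_of_nonneg_left h2 (Real.rpow_pos_of_pos hXn ζ).le
          _ = _ := h3
      calc Gf a θ ζ t n ≤ (Xf a θ t n) ^ (ζ+2) := h1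
        _ = (Xf a θ t 0) ^ (ζ+2) * (a ^ (ζ+2)) ^ n := by
            rw [X_rpow ha0 hθ ht (ζ+2) n, zpow_natCast]
  · have hq1 : a ^ (-ζ) < 1 := Real.rpow_lt_one ha0.le ha1 (by linarith)
    have hq0 : (0:ℝ) ≤ a ^ (-ζ) := (Real.rpow_pos_of_pos ha0 _).le
    refine Summable.of_nonneg_of_le (fun n => G_nonneg ha0 hθ ht _) ?_
      ((summable_geometric_of_lt_one hq0 hq1).mul_left ((Xf a θ t 0) ^ ζ))
    · intro n
      have hXn := X_pos ha0 hθ ht (-n : ℤ)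
      have h1 : Gf a θ ζ t (-n) ≤ (Xf a θ t (-n)) ^ ζ := by
        have h2 : Uf (Xf a θ t (-n)) ≤ 1 := U_le_one hXn.le
        calc Gf a θ ζ t (-n) ≤ (Xf a θ t (-n)) ^ ζ * 1 :=
              mul_le_mul_of_nonneg_left h2 (Real.rpow_pos_of_pos hXn ζ).le
          _ = _ := mul_one _
      calc Gf a θ ζ t (-n) ≤ (Xf a θ t (-n)) ^ ζ := h1
        _ = (Xf a θ t 0) ^ ζ * (a ^ (-ζ)) ^ n := by
            rw [X_rpow ha0 hθ ht ζ (-n), zpow_neg, zpow_natCast, ← inv_pow,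
              ← Real.rpow_neg ha0.le]

include ha0 ha1 hθ hζ0 hζ1 ht in
private lemma G_shift_summable : Summable (fun j : ℤ => Gf a θ ζ t (j+1)) :=
  (G_summable ha0 ha1 hθ hζ0 hζ1 ht).comp_injective (fun x y h => by omega)

include ha0 hθ ht in
private lemma T_eq : ∀ j : ℤ, Tf a θ ζ t j = Gf a θ ζ t j - a ^ (-ζ) * Gf a θ ζ t (j+1) := by
  intro j
  have hXj := X_pos ha0 hθ ht j
  have key : a ^ (-ζ) * (Xf a θ t (j+1)) ^ ζ = (Xf a θ t j) ^ ζ := by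
    rw [X_succ ha0, Real.mul_rpow ha0.le hXj.le, ← mul_assoc,
      ← Real.rpow_add ha0]
    norm_num
  unfold Tf Gf
  rw [show a ^ (-ζ) * ((Xf a θ t (j+1)) ^ ζ * Uf (Xf a θ t (j+1)))
      = (a ^ (-ζ) * (Xf a θ t (j+1)) ^ ζ) * Uf (Xf a θ t (j+1)) by ring, key]
  ring

include ha0 ha1 hθ hζ0 hζ1 ht in
private lemma T_summable : Summable (Tf a θ ζ t) := by
  rw [show Tf a θ ζ t = fun j => Gf a θ ζ t j - a ^ (-ζ) * Gf a θ ζ t (j+1)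
      from funext (T_eq ha0 hθ ht)]
  exact (G_summable ha0 ha1 hθ hζ0 hζ1 ht).sub
    ((G_shift_summable ha0 ha1 hθ hζ0 hζ1 ht).mul_left _)

include ha0 ha1 hθ hζ0 hζ1 ht in
private lemma T_tsum : ∑' j, Tf a θ ζ t j = (1 - a ^ (-ζ)) * ∑' j, Gf a θ ζ t j := by
  have hs := G_summable ha0 ha1 hθ hζ0 hζ1 ht
  have hs2 := G_shift_summable ha0 ha1 hθ hζ0 hζ1 ht
  calc ∑' j, Tf a θ ζ t j
      = ∑' j, (Gf a θ ζ t j - a ^ (-ζ) * Gf a θ ζ t (j+1)) := by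
        exact tsum_congr (T_eq ha0 hθ ht)
    _ = (∑' j, Gf a θ ζ t j) - ∑' j, a ^ (-ζ) * Gf a θ ζ t (j+1) :=
        Summable.tsum_sub hs (hs2.mul_left _)
    _ = (∑' j, Gf a θ ζ t j) - a ^ (-ζ) * ∑' j, Gf a θ ζ t (j+1) := by rw [tsum_mul_left]
    _ = (∑' j, Gf a θ ζ t j) - a ^ (-ζ) * ∑' j, Gf a θ ζ t j := by
        have he : ∑' j : ℤ, Gf a θ ζ t (j+1) = ∑' j, Gf a θ ζ t j := by
          simpa using (Equiv.addRight (1:ℤ)).tsum_eq (Gf a θ ζ t)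
        rw [he]
    _ = _ := by ring

include ha0 ha1 hθ hζ1 ht in
private lemma I_nonneg : ∀ j, 0 ≤ If a θ ζ t j := fun j =>
  le_trans (T_nonneg ha0 ha1 hθ ht j) (T_le_I ha0 ha1 hθ hζ1 ht j)

include ha0 ha1 hθ hζ0 hζ1 ht in
private lemma I_summable : Summable (If a θ ζ t) :=
  Summable.of_nonneg_of_le (I_nonneg ha0 ha1 hθ hζ1 ht) (I_le_T ha0 ha1 hθ hζ1 ht)
    ((T_summable ha0 ha1 hθ hζ0 hζ1 ht).mul_left _)

include ha0 ha1 hθ ht in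
private lemma X_tendsto_zero : Tendsto (fun n : ℕ => Xf a θ t n) atTop (𝓝 0) := by
  have he : (fun n : ℕ => Xf a θ t n) = fun n : ℕ => (θ * t) * a ^ n := by
    funext n; unfold Xf; rw [zpow_natCast]; ring
  rw [he]
  simpa using (tendsto_pow_atTop_nhds_zero_of_lt_one ha0.le ha1).const_mul (θ * t)

include ha0 ha1 hθ ht in
private lemma X_tendsto_top : Tendsto (fun n : ℕ => Xf a θ t (-n)) atTop atTop := by
  have he : (fun n : ℕ => Xf a θ t (-n)) = fun n : ℕ => (θ * t) * (a⁻¹) ^ n := by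
    funext n; unfold Xf; rw [zpow_neg, zpow_natCast, inv_pow]; ring
  rw [he]
  exact (tendsto_pow_atTop_atTop_of_one_lt ((one_lt_inv₀ ha0).2 ha1)).const_mul_atTop
    (mul_pos hθ ht)

include ha0 hθ ht in
private lemma sum_I_pos : ∀ n : ℕ,
    ∑ k ∈ Finset.range n, If a θ ζ t (k : ℤ) = ∫ y in (Xf a θ t (n : ℤ))..(Xf a θ t 0), Ff ζ y := by
  intro n
  induction n with
  | zero => simp
  | succ n ih =>
    rw [Finset.sum_range_succ, ih]
    have h1 : If a θ ζ t (n : ℤ) = ∫ y in (Xf a θ t ((n : ℤ)+1))..(Xf a θ t (n : ℤ)), Ff ζ y := rfl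
    rw [h1, add_comm]
    have h2 := intervalIntegral.integral_add_adjacent_intervals
      (Ff_intInt (ζ := ζ) (X_pos ha0 hθ ht ((n : ℤ)+1)) (X_pos ha0 hθ ht (n : ℤ)))
      (Ff_intInt (ζ := ζ) (X_pos ha0 hθ ht (n : ℤ)) (X_pos ha0 hθ ht 0))
    rw [h2]
    norm_cast

include ha0 hθ ht in
private lemma sum_I_neg : ∀ n : ℕ,
    ∑ k ∈ Finset.range n, If a θ ζ t (-((k : ℤ)+1))
      = ∫ y in (Xf a θ t 0)..(Xf a θ t (-(n : ℤ))), Ff ζ y := by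
  intro n
  induction n with
  | zero => simp
  | succ n ih =>
    rw [Finset.sum_range_succ, ih]
    have h1 : If a θ ζ t (-((n : ℤ)+1))
        = ∫ y in (Xf a θ t (-(n : ℤ)))..(Xf a θ t (-((n : ℤ)+1))), Ff ζ y := by
      unfold If
      norm_num
    rw [h1]
    have h2 := intervalIntegral.integral_add_adjacent_intervals
      (Ff_intInt (ζ := ζ) (X_pos ha0 hθ ht 0) (X_pos ha0 hθ ht (-(n : ℤ))))
      (Ff_intInt (ζ := ζ) (X_pos ha0 hθ ht (-(n : ℤ))) (X_pos ha0 hθ ht (-((n : ℤ)+1))))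
    rw [h2]
    norm_cast

include ha0 ha1 hθ hζ0 hζ1 ht in
private lemma I_tsum_nat :
    ∑' n : ℕ, If a θ ζ t (n : ℤ) = ∫ y in Ioc 0 (Xf a θ t 0), Ff ζ y := by
  have hunion : (⋃ n : ℕ, Ioc (Xf a θ t (n:ℤ)) (Xf a θ t 0)) = Ioc 0 (Xf a θ t 0) := by
    ext y
    simp only [mem_iUnion, mem_Ioc]
    constructor
    · rintro ⟨n, h1, h2⟩
      exact ⟨(X_pos ha0 hθ ht (n:ℤ)).trans h1, h2⟩
    · rintro ⟨hy0, hy1⟩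
      obtain ⟨n, hn⟩ := ((X_tendsto_zero ha0 ha1 hθ ht).eventually (gt_mem_nhds hy0)).exists
      exact ⟨n, hn, hy1⟩
  have hmono : Monotone (fun n : ℕ => Ioc (Xf a θ t (n:ℤ)) (Xf a θ t 0)) := by
    intro n m hnm
    exact Set.Ioc_subset_Ioc_left (X_anti ha0 ha1 hθ ht (by exact_mod_cast hnm))
  have hIntOn : MeasureTheory.IntegrableOn (Ff ζ)
      (⋃ n : ℕ, Ioc (Xf a θ t (n:ℤ)) (Xf a θ t 0)) := by
    rw [hunion]
    exact (ff_integrable hζ0).mono_set Set.Ioc_subset_Ioi_self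
  have hlim := MeasureTheory.tendsto_setIntegral_of_monotone
    (fun n : ℕ => measurableSet_Ioc) hmono hIntOn
  rw [hunion] at hlim
  have heq : (fun n : ℕ => ∫ y in Ioc (Xf a θ t (n:ℤ)) (Xf a θ t 0), Ff ζ y)
      = fun n : ℕ => ∑ k ∈ Finset.range n, If a θ ζ t (k : ℤ) := by
    funext n
    rw [sum_I_pos ha0 hθ ht n,
      intervalIntegral.integral_of_le (X_anti ha0 ha1 hθ ht (by positivity))]
  rw [heq] at hlim
  have hsum : Summable (fun n : ℕ => If a θ ζ t (n : ℤ)) :=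
    (I_summable ha0 ha1 hθ hζ0 hζ1 ht).comp_injective (fun x y h => by omega)
  exact tendsto_nhds_unique hsum.hasSum.tendsto_sum_nat hlim

include ha0 ha1 hθ hζ0 hζ1 ht in
private lemma I_tsum_neg :
    ∑' n : ℕ, If a θ ζ t (-((n:ℤ)+1)) = ∫ y in Ioi (Xf a θ t 0), Ff ζ y := by
  have hunion : (⋃ n : ℕ, Ioc (Xf a θ t 0) (Xf a θ t (-(n:ℤ)))) = Ioi (Xf a θ t 0) := by
    ext y
    simp only [mem_iUnion, mem_Ioc, mem_Ioi]
    constructor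
    · rintro ⟨n, h1, h2⟩; exact h1
    · intro hy
      obtain ⟨n, hn⟩ := ((X_tendsto_top ha0 ha1 hθ ht).eventually_ge_atTop y).exists
      exact ⟨n, hy, hn⟩
  have hmono : Monotone (fun n : ℕ => Ioc (Xf a θ t 0) (Xf a θ t (-(n:ℤ)))) := by
    intro n m hnm
    exact Set.Ioc_subset_Ioc_right (X_anti ha0 ha1 hθ ht (by exact_mod_cast neg_le_neg (Int.ofNat_le.2 hnm)))
  have hIntOn : MeasureTheory.IntegrableOn (Ff ζ)
      (⋃ n : ℕ, Ioc (Xf a θ t 0) (Xf a θ t (-(n:ℤ)))) := by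
    rw [hunion]
    exact (ff_integrable hζ0).mono_set (Set.Ioi_subset_Ioi (X_pos ha0 hθ ht 0).le)
  have hlim := MeasureTheory.tendsto_setIntegral_of_monotone
    (fun n : ℕ => measurableSet_Ioc) hmono hIntOn
  rw [hunion] at hlim
  have heq : (fun n : ℕ => ∫ y in Ioc (Xf a θ t 0) (Xf a θ t (-(n:ℤ))), Ff ζ y)
      = fun n : ℕ => ∑ k ∈ Finset.range n, If a θ ζ t (-((k:ℤ)+1)) := by
    funext n
    rw [sum_I_neg ha0 hθ ht n,
      intervalIntegral.integral_of_le (X_anti ha0 ha1 hθ ht (by omega))]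
  rw [heq] at hlim
  have hsum : Summable (fun n : ℕ => If a θ ζ t (-((n:ℤ)+1))) :=
    (I_summable ha0 ha1 hθ hζ0 hζ1 ht).comp_injective (fun x y h => by omega)
  exact tendsto_nhds_unique hsum.hasSum.tendsto_sum_nat hlim

include ha0 ha1 hθ hζ0 hζ1 ht in
private lemma I_tsum : ∑' j : ℤ, If a θ ζ t j = (2 - (2:ℝ) ^ (-ζ)) * Real.Gamma (ζ + 1) := by
  have hsum1 : Summable (fun n : ℕ => If a θ ζ t (n : ℤ)) :=
    (I_summable ha0 ha1 hθ hζ0 hζ1 ht).comp_injective (fun x y h => by omega)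
  have hsum2 : Summable (fun n : ℕ => If a θ ζ t (-((n:ℤ)+1))) :=
    (I_summable ha0 ha1 hθ hζ0 hζ1 ht).comp_injective (fun x y h => by omega)
  rw [tsum_of_nat_of_neg_add_one hsum1 hsum2,
    I_tsum_nat ha0 ha1 hθ hζ0 hζ1 ht, I_tsum_neg ha0 ha1 hθ hζ0 hζ1 ht]
  have hdisj : Disjoint (Ioc (0:ℝ) (Xf a θ t 0)) (Ioi (Xf a θ t 0)) := by
    apply Set.disjoint_left.2
    rintro y ⟨_, h2⟩ h3
    exact absurd h3 (not_lt.2 h2)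
  have hunion : Ioc (0:ℝ) (Xf a θ t 0) ∪ Ioi (Xf a θ t 0) = Ioi 0 :=
    Set.Ioc_union_Ioi_eq_Ioi (X_pos ha0 hθ ht 0).le
  rw [← MeasureTheory.setIntegral_union hdisj measurableSet_Ioi
    ((Ff_integrableOn' hζ0).mono_set Set.Ioc_subset_Ioi_self)
    ((Ff_integrableOn' hζ0).mono_set (Set.Ioi_subset_Ioi (X_pos ha0 hθ ht 0).le)),
    hunion]
  exact Ff_integral' hζ0

end main

theorem stmt7 (a θ ζ : ℝ) (ha0 : 0 < a) (ha1 : a < 1) (hθ : 0 < θ)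
    (hζ0 : -1 < ζ) (hζ1 : ζ < 0) :
    ∀ t > 0,
      Summable (fun j : ℤ => (θ * a ^ j * t) ^ ζ * (1 - Real.exp (-(θ * a ^ j * t))) ^ 2) ∧
      a ^ (-ζ) * (2 - (2:ℝ) ^ (-ζ)) * Real.Gamma (ζ + 1) / (1 - a ^ (-ζ)) ≤
        ∑' j : ℤ, (θ * a ^ j * t) ^ ζ * (1 - Real.exp (-(θ * a ^ j * t))) ^ 2 ∧
      ∑' j : ℤ, (θ * a ^ j * t) ^ ζ * (1 - Real.exp (-(θ * a ^ j * t))) ^ 2 ≤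
        (2 - (2:ℝ) ^ (-ζ)) * Real.Gamma (ζ + 1) / (1 - a ^ (-ζ)) := by
  intro t ht
  have hr0 : 0 < a ^ (-ζ) := Real.rpow_pos_of_pos ha0 _
  have hr1 : a ^ (-ζ) < 1 := Real.rpow_lt_one ha0.le ha1 (by linarith)
  have h1r : 0 < 1 - a ^ (-ζ) := by linarith
  have hGsum := G_summable ha0 ha1 hθ hζ0 hζ1 ht
  have hTsum := T_summable ha0 ha1 hθ hζ0 hζ1 ht
  have hIsum := I_summable ha0 ha1 hθ hζ0 hζ1 ht
  have hSeq : (∑' j : ℤ, (θ * a ^ j * t) ^ ζ * (1 - Real.exp (-(θ * a ^ j * t))) ^ 2)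
      = ∑' j, Gf a θ ζ t j := rfl
  set S := ∑' j, Gf a θ ζ t j with hS_def
  have hTeq : ∑' j, Tf a θ ζ t j = (1 - a ^ (-ζ)) * S := T_tsum ha0 ha1 hθ hζ0 hζ1 ht
  have hC : ∑' j, If a θ ζ t j = (2 - (2:ℝ) ^ (-ζ)) * Real.Gamma (ζ + 1) :=
    I_tsum ha0 ha1 hθ hζ0 hζ1 ht
  have hupper : ∑' j, Tf a θ ζ t j ≤ ∑' j, If a θ ζ t j :=
    Summable.tsum_le_tsum (T_le_I ha0 ha1 hθ hζ1 ht) hTsum hIsum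
  have hlow : a ^ (-ζ) * ∑' j, If a θ ζ t j ≤ ∑' j, Tf a θ ζ t j := by
    have hkey : ∀ j, a ^ (-ζ) * If a θ ζ t j ≤ Tf a θ ζ t j := by
      intro j
      have h1 : a ^ (-ζ) * If a θ ζ t j ≤ a ^ (-ζ) * (a ^ ζ * Tf a θ ζ t j) :=
        mul_le_mul_of_nonneg_left (I_le_T ha0 ha1 hθ hζ1 ht j) hr0.le
      have h2 : a ^ (-ζ) * (a ^ ζ * Tf a θ ζ t j) = Tf a θ ζ t j := by
        rw [← mul_assoc, ← Real.rpow_add ha0]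
        norm_num
      linarith
    calc a ^ (-ζ) * ∑' j, If a θ ζ t j = ∑' j, a ^ (-ζ) * If a θ ζ t j := tsum_mul_left.symm
      _ ≤ ∑' j, Tf a θ ζ t j := Summable.tsum_le_tsum hkey (hIsum.mul_left _) hTsum
  rw [hC] at hlow hupper
  rw [hTeq] at hlow hupper
  refine ⟨hGsum, ?_, ?_⟩
  · rw [hSeq, div_le_iff₀ h1r]
    calc a ^ (-ζ) * (2 - (2:ℝ) ^ (-ζ)) * Real.Gamma (ζ + 1)
        = a ^ (-ζ) * ((2 - (2:ℝ) ^ (-ζ)) * Real.Gamma (ζ + 1)) := by ring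
      _ ≤ (1 - a ^ (-ζ)) * S := hlow
      _ = S * (1 - a ^ (-ζ)) := by ring
  · rw [hSeq, le_div_iff₀ h1r]
    calc S * (1 - a ^ (-ζ)) = (1 - a ^ (-ζ)) * S := by ring
      _ ≤ (2 - (2:ℝ) ^ (-ζ)) * Real.Gamma (ζ + 1) := hupper
end

section
/- Let a ∈ (0,1), θ > 0 and −1 < ζ < 0. Then for every t > 0, a^{−ζ} Γ(ζ+1)/((1−a^{−ζ})(1−ζ)) ≤ Σ_{j∈ℤ} (θ a^j t)^{ζ−1} ( e^{−θ a^j t} − 1 + θ a^j t ) ≤ Γ(ζ+1)/((1−a^{−ζ})(1−ζ)), where Γ is the Gamma function (and the two-sided series converges for every t > 0). -/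
open MeasureTheory Real Set Filter

set_option linter.unusedSectionVars false

lemma hq2_eq {a ζ : ℝ} (ha0 : 0 < a) : a ^ (1-ζ) = a * a ^ (-ζ) := by
  rw [show (1-ζ) = 1 + (-ζ) by ring, Real.rpow_add ha0, Real.rpow_one]

lemma K1 {a ζ : ℝ} (ha0 : 0 < a) (ha1 : a < 1) (hζ1 : ζ < 0) :
    (-ζ) * (1 - a ^ (1-ζ)) ≤ (1-ζ) * (1 - a ^ (-ζ)) := by
  have h1 : ζ * Real.log a + 1 ≤ a ^ ζ := by
    rw [Real.rpow_def_of_pos ha0, mul_comm]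
    exact Real.add_one_le_exp _
  have h2 : Real.log a ≤ a - 1 := Real.log_le_sub_one_of_pos ha0
  have h3 : ζ * (a - 1) ≤ ζ * Real.log a := mul_le_mul_of_nonpos_left h2 hζ1.le
  have h4 : 1 + ζ * (a-1) ≤ a ^ ζ := by linarith
  have h5 : a ^ (-ζ) * a ^ ζ = 1 := by
    rw [← Real.rpow_add ha0]; simp
  have hq1 : 0 < a ^ (-ζ) := Real.rpow_pos_of_pos ha0 _
  have hq2e := hq2_eq (ζ := ζ) ha0
  nlinarith [mul_le_mul_of_nonneg_left h4 hq1.le]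

lemma K2 {a ζ : ℝ} (ha0 : 0 < a) (hζ1 : ζ < 0) :
    1 - a ^ (1-ζ) ≤ (1-ζ) * (1-a) := by
  have := one_add_mul_self_le_rpow_one_add (show (-1:ℝ) ≤ a - 1 by linarith)
    (show (1:ℝ) ≤ 1 - ζ by linarith)
  rw [show (1:ℝ) + (a-1) = a by ring] at this
  nlinarith

lemma psi_upper {a ζ : ℝ} (ha0 : 0 < a) (ha1 : a < 1) (hζ0 : -1 < ζ) (hζ1 : ζ < 0)
    {r : ℝ} (hr : 1 ≤ r) :
    (1 - a ^ (-ζ))⁻¹ * r ^ ζ - (1 - a ^ (1-ζ))⁻¹ * r ^ (ζ-1)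
      ≤ (1 - a ^ (-ζ))⁻¹ / (1-ζ) := by
  set q₁ := a ^ (-ζ) with hq₁def
  set q₂ := a ^ (1-ζ) with hq₂def
  have hq1 : 0 < q₁ := Real.rpow_pos_of_pos ha0 _
  have hq1' : q₁ < 1 := Real.rpow_lt_one ha0.le ha1 (by linarith)
  have hq2 : 0 < q₂ := Real.rpow_pos_of_pos ha0 _
  have hq2' : q₂ < 1 := Real.rpow_lt_one ha0.le ha1 (by linarith)
  set A := (1 - q₁)⁻¹ with hAdef
  set B := (1 - q₂)⁻¹ with hBdef
  have hA : 0 < A := inv_pos.mpr (by linarith)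
  have hB : 0 < B := inv_pos.mpr (by linarith)
  have hr0 : (0:ℝ) < r := lt_of_lt_of_le one_pos hr
  have hp : (0:ℝ) < 1 - ζ := by linarith
  have hbern : 1 + (1-ζ) * (r - 1) ≤ r ^ (1-ζ) := by
    have := one_add_mul_self_le_rpow_one_add (show (-1:ℝ) ≤ r - 1 by linarith)
      (show (1:ℝ) ≤ 1-ζ by linarith)
    rwa [show (1:ℝ) + (r-1) = r by ring] at this
  have hkey : (-ζ) * A ≤ (1-ζ) * B := by
    rw [hAdef, hBdef, ← div_eq_mul_inv, ← div_eq_mul_inv,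
      div_le_div_iff₀ (by linarith) (by linarith)]
    nlinarith [K1 ha0 ha1 hζ1]
  have h2 : A * r - B ≤ (A/(1-ζ)) * r ^ (1-ζ) := by
    have hc : 0 ≤ A/(1-ζ) := le_of_lt (div_pos hA hp)
    have h1 := mul_le_mul_of_nonneg_left hbern hc
    have heq : A/(1-ζ) * (1 + (1-ζ)*(r-1)) = A*r - (-ζ)*A/(1-ζ) := by
      field_simp; ring
    have h4 : (-ζ)*A/(1-ζ) ≤ B := by
      rw [div_le_iff₀ hp]; nlinarith
    nlinarith
  have hrp : (0:ℝ) < r ^ (ζ-1) := Real.rpow_pos_of_pos hr0 _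
  have h3 := mul_le_mul_of_nonneg_right h2 hrp.le
  have e1 : r * r ^ (ζ-1) = r ^ ζ := by
    nth_rewrite 1 [← Real.rpow_one r]
    rw [← Real.rpow_add hr0]; norm_num
  have e2 : r ^ (1-ζ) * r ^ (ζ-1) = 1 := by
    rw [← Real.rpow_add hr0]; norm_num
  calc A * r ^ ζ - B * r ^ (ζ-1) = (A * r - B) * r ^ (ζ-1) := by
        rw [sub_mul, mul_assoc, e1]
    _ ≤ A/(1-ζ) * r ^ (1-ζ) * r ^ (ζ-1) := h3
    _ = A/(1-ζ) := by rw [mul_assoc, e2, mul_one]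

set_option maxHeartbeats 1000000 in
lemma psi_lower {a ζ : ℝ} (ha0 : 0 < a) (ha1 : a < 1) (hζ0 : -1 < ζ) (hζ1 : ζ < 0)
    {r : ℝ} (hr : 1 ≤ r) (hr' : r ≤ a⁻¹) :
    a ^ (-ζ) * (1 - a ^ (-ζ))⁻¹ / (1-ζ)
      ≤ (1 - a ^ (-ζ))⁻¹ * r ^ ζ - (1 - a ^ (1-ζ))⁻¹ * r ^ (ζ-1) := by
  set q₁ := a ^ (-ζ) with hq₁def
  set q₂ := a ^ (1-ζ) with hq₂def
  have hq1 : 0 < q₁ := Real.rpow_pos_of_pos ha0 _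
  have hq1' : q₁ < 1 := Real.rpow_lt_one ha0.le ha1 (by linarith)
  have hq2 : 0 < q₂ := Real.rpow_pos_of_pos ha0 _
  have hq2' : q₂ < 1 := Real.rpow_lt_one ha0.le ha1 (by linarith)
  have hq2e : q₂ = a * q₁ := hq2_eq ha0
  set A := (1 - q₁)⁻¹ with hAdef
  set B := (1 - q₂)⁻¹ with hBdef
  have hA : 0 < A := inv_pos.mpr (by linarith)
  have hB : 0 < B := inv_pos.mpr (by linarith)
  have e1 : (1 - q₁) * A = 1 := mul_inv_cancel₀ (by linarith)
  have e2 : (1 - q₂) * B = 1 := mul_inv_cancel₀ (by linarith)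
  have e3 : A - B = (q₁ - q₂) * (A * B) := by
    linear_combination (-A) * e2 + B * e1
  have hr0 : (0:ℝ) < r := lt_of_lt_of_le one_pos hr
  have hp : (0:ℝ) < 1 - ζ := by linarith
  have hK2 : 1 - q₂ ≤ (1-ζ)*(1-a) := K2 ha0 hζ1
  set K := q₁ * A / (1-ζ) with hKdef
  have hKpos : 0 < K := by rw [hKdef]; positivity
  have hconvex : ConvexOn ℝ (Ici 0) (fun s : ℝ => K * s ^ (1-ζ) + (B - A * s)) := by
    apply ConvexOn.add
    · have h1 : ConvexOn ℝ (Ici 0) (fun s : ℝ => s ^ (1-ζ)) :=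
        convexOn_rpow (by linarith)
      have := h1.smul hKpos.le
      simpa [smul_eq_mul] using this
    · refine ⟨convex_Ici 0, ?_⟩
      intro x _ y _ c d hc hd hcd
      simp only [smul_eq_mul]
      apply le_of_eq
      linear_combination (-B) * hcd
  -- endpoint 1
  have hF1 : K * (1:ℝ) ^ (1-ζ) + (B - A * 1) ≤ 0 := by
    rw [Real.one_rpow, mul_one, mul_one]
    have goal1 : q₁ * A ≤ (A - B) * (1-ζ) := by
      rw [e3]
      have e4 : q₁ * A = (q₁*(1-q₂))*(A*B) := by linear_combination (-(q₁*A)) * e2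
      rw [e4]
      have h5 : q₁*(1-q₂) ≤ (q₁ - q₂)*(1-ζ) := by nlinarith
      exact mul_le_mul_of_nonneg_right h5 (by positivity) |>.trans (le_of_eq (by ring))
    have : K ≤ A - B := by
      rw [hKdef, div_le_iff₀ hp]; linarith [goal1]
    linarith
  -- endpoint a⁻¹
  have hFa : K * (a⁻¹:ℝ) ^ (1-ζ) + (B - A * a⁻¹) ≤ 0 := by
    have einv : (a⁻¹ : ℝ) ^ (1-ζ) = q₂⁻¹ := by
      rw [hq₂def, ← Real.inv_rpow ha0.le]
    rw [einv]
    have h6 : a*(1-ζ)*(1-q₁) ≤ (-ζ)*(1-q₂) := by nlinarith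
    have h7 : a*(1-ζ)*B ≤ (-ζ)*A := by
      have e5 : a*(1-ζ)*B = (a*(1-ζ)*(1-q₁))*(A*B) := by
        linear_combination (-(a*(1-ζ)*B)) * e1
      have e6 : (-ζ)*A = ((-ζ)*(1-q₂))*(A*B) := by
        linear_combination (ζ*A) * e2
      rw [e5, e6]
      exact mul_le_mul_of_nonneg_right h6 (by positivity)
    -- K * q₂⁻¹ = A/(a*(1-ζ))
    have eq2 : q₂ * q₂⁻¹ = 1 := mul_inv_cancel₀ (ne_of_gt hq2)
    have eq3 : a * a⁻¹ = 1 := mul_inv_cancel₀ (ne_of_gt ha0)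
    have eK : K * q₂⁻¹ * ((1-ζ)*a) = q₁ * A * (q₂⁻¹ * a) := by
      rw [hKdef]; field_simp
    -- goal : K*q₂⁻¹ + B - A*a⁻¹ ≤ 0; multiply by (1-ζ)*a > 0
    rw [← sub_nonpos]
    have hmul : (K * q₂⁻¹ + (B - A * a⁻¹)) * ((1-ζ)*a) ≤ 0 := by
      have expand : (K * q₂⁻¹ + (B - A * a⁻¹)) * ((1-ζ)*a)
          = q₁ * A * (q₂⁻¹ * a) + (a*(1-ζ)*B - (1-ζ)*A*(a*a⁻¹)) := by
        rw [← eK]; ring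
      rw [expand, eq3, mul_one]
      have eq4 : q₂⁻¹ * a = q₁⁻¹ := by
        rw [hq2e]; field_simp
      rw [eq4]
      have eq5 : q₁ * A * q₁⁻¹ = A := by field_simp
      rw [eq5]
      -- A + a(1-ζ)B - (1-ζ)A ≤ 0  ⇔  a(1-ζ)B ≤ -ζ A
      linarith [h7]
    nlinarith [hmul, mul_pos hp ha0]
  have ha_inv : (1:ℝ) ≤ a⁻¹ := by
    have := mul_inv_cancel₀ (ne_of_gt ha0)
    nlinarith [inv_pos.mpr ha0]
  have hseg : r ∈ segment ℝ (1:ℝ) a⁻¹ := by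
    rw [segment_eq_Icc ha_inv]
    exact ⟨hr, hr'⟩
  have hFr := hconvex.le_on_segment (by norm_num : (1:ℝ) ∈ Ici (0:ℝ))
    (by simp only [mem_Ici]; positivity : (a⁻¹:ℝ) ∈ Ici (0:ℝ)) hseg
  have hFr0 : K * r ^ (1-ζ) + (B - A * r) ≤ 0 :=
    le_trans hFr (sup_le hF1 hFa)
  have hrp : (0:ℝ) < r ^ (ζ-1) := Real.rpow_pos_of_pos hr0 _
  have h2 : K * r ^ (1-ζ) ≤ A * r - B := by linarith
  have h3 := mul_le_mul_of_nonneg_right h2 hrp.le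
  have f1 : r * r ^ (ζ-1) = r ^ ζ := by
    nth_rewrite 1 [← Real.rpow_one r]
    rw [← Real.rpow_add hr0]; norm_num
  have f2 : r ^ (1-ζ) * r ^ (ζ-1) = 1 := by
    rw [← Real.rpow_add hr0]; norm_num
  calc q₁ * A / (1-ζ) = K := by rw [hKdef]
    _ = K * (r ^ (1-ζ) * r ^ (ζ-1)) := by rw [f2, mul_one]
    _ = K * r ^ (1-ζ) * r ^ (ζ-1) := by ring
    _ ≤ (A * r - B) * r ^ (ζ-1) := h3
    _ = A * r ^ ζ - B * r ^ (ζ-1) := by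
        rw [sub_mul, mul_assoc, f1]

lemma scaled_upper {a ζ u y : ℝ} (ha0 : 0 < a) (ha1 : a < 1) (hζ0 : -1 < ζ) (hζ1 : ζ < 0)
    (hu : 0 < u) (huy : u ≤ y) :
    (1 - a ^ (-ζ))⁻¹ * y ^ ζ - (1 - a ^ (1-ζ))⁻¹ * (u * y ^ (ζ-1))
      ≤ (1 - a ^ (-ζ))⁻¹ / (1-ζ) * u ^ ζ := by
  have hy0 : 0 < y := lt_of_lt_of_le hu huy
  set r := y / u with hrdef
  have hr0 : 0 < r := div_pos hy0 hu
  have hr : 1 ≤ r := (one_le_div hu).2 huy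
  have hyr : y = u * r := by rw [hrdef]; field_simp
  have hup : (0:ℝ) < u ^ ζ := Real.rpow_pos_of_pos hu _
  have ey : y ^ ζ = u ^ ζ * r ^ ζ := by rw [hyr, Real.mul_rpow hu.le hr0.le]
  have ey' : u * y ^ (ζ-1) = u ^ ζ * r ^ (ζ-1) := by
    rw [hyr, Real.mul_rpow hu.le hr0.le, ← mul_assoc]
    congr 1
    nth_rewrite 1 [← Real.rpow_one u]
    rw [← Real.rpow_add hu]; norm_num
  have hpsi := psi_upper ha0 ha1 hζ0 hζ1 hr
  calc (1 - a ^ (-ζ))⁻¹ * y ^ ζ - (1 - a ^ (1-ζ))⁻¹ * (u * y ^ (ζ-1))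
      = ((1 - a ^ (-ζ))⁻¹ * r ^ ζ - (1 - a ^ (1-ζ))⁻¹ * r ^ (ζ-1)) * u ^ ζ := by
        rw [ey, ey']; ring
    _ ≤ (1 - a ^ (-ζ))⁻¹ / (1-ζ) * u ^ ζ :=
        mul_le_mul_of_nonneg_right hpsi hup.le

lemma scaled_lower {a ζ u y : ℝ} (ha0 : 0 < a) (ha1 : a < 1) (hζ0 : -1 < ζ) (hζ1 : ζ < 0)
    (hu : 0 < u) (huy : u ≤ y) (hay : a * y ≤ u) :
    a ^ (-ζ) * (1 - a ^ (-ζ))⁻¹ / (1-ζ) * u ^ ζ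
      ≤ (1 - a ^ (-ζ))⁻¹ * y ^ ζ - (1 - a ^ (1-ζ))⁻¹ * (u * y ^ (ζ-1)) := by
  have hy0 : 0 < y := lt_of_lt_of_le hu huy
  set r := y / u with hrdef
  have hr0 : 0 < r := div_pos hy0 hu
  have hr : 1 ≤ r := (one_le_div hu).2 huy
  have hr' : r ≤ a⁻¹ := by
    rw [hrdef, div_le_iff₀ hu]
    have h1 := mul_le_mul_of_nonneg_left hay (inv_pos.mpr ha0).le
    rw [← mul_assoc, inv_mul_cancel₀ (ne_of_gt ha0), one_mul] at h1
    linarith [h1]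
  have hyr : y = u * r := by rw [hrdef]; field_simp
  have hup : (0:ℝ) < u ^ ζ := Real.rpow_pos_of_pos hu _
  have ey : y ^ ζ = u ^ ζ * r ^ ζ := by rw [hyr, Real.mul_rpow hu.le hr0.le]
  have ey' : u * y ^ (ζ-1) = u ^ ζ * r ^ (ζ-1) := by
    rw [hyr, Real.mul_rpow hu.le hr0.le, ← mul_assoc]
    congr 1
    nth_rewrite 1 [← Real.rpow_one u]
    rw [← Real.rpow_add hu]; norm_num
  have hpsi := psi_lower ha0 ha1 hζ0 hζ1 hr hr'
  calc a ^ (-ζ) * (1 - a ^ (-ζ))⁻¹ / (1-ζ) * u ^ ζ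
      ≤ ((1 - a ^ (-ζ))⁻¹ * r ^ ζ - (1 - a ^ (1-ζ))⁻¹ * r ^ (ζ-1)) * u ^ ζ :=
        mul_le_mul_of_nonneg_right hpsi hup.le
    _ = (1 - a ^ (-ζ))⁻¹ * y ^ ζ - (1 - a ^ (1-ζ))⁻¹ * (u * y ^ (ζ-1)) := by
        rw [ey, ey']; ring

lemma g_nonneg (x : ℝ) : 0 ≤ Real.exp (-x) - 1 + x := by
  nlinarith [Real.add_one_le_exp (-x)]

lemma g_le_self {x : ℝ} (hx : 0 ≤ x) : Real.exp (-x) - 1 + x ≤ x := by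
  nlinarith [Real.exp_le_one_iff.mpr (by linarith : -x ≤ 0)]

lemma g_le_sq {x : ℝ} (hx : 0 ≤ x) : Real.exp (-x) - 1 + x ≤ x ^ 2 := by
  rcases le_total x 1 with h | h
  · have habs : |(-x)| ≤ 1 := by rw [abs_neg, abs_of_nonneg hx]; exact h
    have := Real.abs_exp_sub_one_sub_id_le habs
    have h2 := (abs_le.mp this).2
    nlinarith [h2]
  · nlinarith [Real.exp_le_one_iff.mpr (by linarith : -x ≤ 0)]

lemma exp_integrableOn : IntegrableOn (fun u : ℝ => Real.exp (-u)) (Ioi 0) := by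
  simpa using exp_neg_integrableOn_Ioi 0 one_pos

lemma exp_mul_integrableOn : IntegrableOn (fun u : ℝ => Real.exp (-u) * u) (Ioi 0) := by
  have := Real.GammaIntegral_convergent (by norm_num : (0:ℝ) < 2)
  norm_num at this
  simpa [Real.rpow_one] using this

lemma exp_integral_val : ∫ u in Ioi (0:ℝ), Real.exp (-u) = 1 := by
  have h := Real.Gamma_eq_integral (by norm_num : (0:ℝ) < 1)
  rw [Real.Gamma_one] at h
  simp only [sub_self, Real.rpow_zero, mul_one] at h
  exact h.symm

lemma exp_mul_integral_val : ∫ u in Ioi (0:ℝ), Real.exp (-u) * u = 1 := by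
  have h := Real.Gamma_eq_integral (by norm_num : (0:ℝ) < 2)
  rw [Real.Gamma_two] at h
  norm_num [Real.rpow_one] at h
  exact h.symm

lemma shifted_integral {x : ℝ} (hx : 0 < x) :
    ∫ u in Ioi x, Real.exp (-u) * (u - x) = Real.exp (-x) := by
  have hderiv : ∀ u ∈ Ioi x, HasDerivAt (fun u : ℝ => -(Real.exp (-u) * (u + 1 - x)))
      (Real.exp (-u) * (u - x)) u := by
    intro u _
    have hexp : HasDerivAt (fun u : ℝ => Real.exp (-u)) (-Real.exp (-u)) u := by
      simpa using (hasDerivAt_neg u).exp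
    have hlin : HasDerivAt (fun u : ℝ => u + 1 - x) 1 u := by
      simpa using ((hasDerivAt_id u).add_const (1:ℝ)).sub_const x
    have hmul := (hexp.mul hlin).neg
    have : Real.exp (-u) * (u - x) = -((-Real.exp (-u)) * (u + 1 - x) + Real.exp (-u) * 1) := by
      ring
    rw [this]
    exact hmul
  have hcont : ContinuousWithinAt (fun u : ℝ => -(Real.exp (-u) * (u + 1 - x))) (Ici x) x :=
    (Continuous.neg ((Real.continuous_exp.comp continuous_neg).mul
      (by continuity))).continuousWithinAt
  have hint : IntegrableOn (fun u : ℝ => Real.exp (-u) * (u - x)) (Ioi x) := by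
    have heq : (fun u : ℝ => Real.exp (-u) * (u - x))
        = (fun u : ℝ => Real.exp (-u) * u - Real.exp (-u) * x) := by
      funext u; ring
    rw [heq]
    exact (exp_mul_integrableOn.mono_set (Ioi_subset_Ioi hx.le)).sub
      ((exp_integrableOn.mono_set (Ioi_subset_Ioi hx.le)).mul_const x)
  have htend : Tendsto (fun u : ℝ => -(Real.exp (-u) * (u + 1 - x))) atTop (nhds 0) := by
    have t1 := Real.tendsto_pow_mul_exp_neg_atTop_nhds_zero 1
    have t2 := Real.tendsto_exp_neg_atTop_nhds_zero
    have t3 : Tendsto (fun u : ℝ => u ^ 1 * Real.exp (-u) + (1 - x) * Real.exp (-u))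
        atTop (nhds (0 + (1-x) * 0)) := t1.add (t2.const_mul (1-x))
    have t4 : Tendsto (fun u : ℝ => -(u ^ 1 * Real.exp (-u) + (1 - x) * Real.exp (-u)))
        atTop (nhds (-(0 + (1-x) * 0))) := t3.neg
    norm_num at t4
    refine t4.congr fun u => ?_
    ring
  have := integral_Ioi_of_hasDerivAt_of_tendsto hcont hderiv hint htend
  rw [this]
  norm_num

lemma g_integral {x : ℝ} (hx : 0 < x) :
    ∫ u in Ioi (0:ℝ), Real.exp (-u) * max (x - u) 0 = Real.exp (-x) - 1 + x := by
  have Ia : IntegrableOn (fun u : ℝ => Real.exp (-u) * x) (Ioi 0) :=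
    exp_integrableOn.mul_const x
  have Ib := exp_mul_integrableOn
  have Ic : IntegrableOn (fun u : ℝ => Real.exp (-u) * max (u - x) 0) (Ioi 0) := by
    apply Integrable.mono' Ib
    · exact ((Real.continuous_exp.comp continuous_neg).mul
        ((continuous_id.sub continuous_const).max continuous_const)).aestronglyMeasurable
    · rw [ae_restrict_iff' measurableSet_Ioi]
      filter_upwards with u
      intro hu
      have h0 : (0:ℝ) ≤ Real.exp (-u) * max (u - x) 0 :=
        mul_nonneg (Real.exp_nonneg _) (le_max_right _ _)
      rw [Real.norm_of_nonneg h0]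
      exact mul_le_mul_of_nonneg_left
        (max_le (by linarith [hx, mem_Ioi.mp hu]) (le_of_lt (mem_Ioi.mp hu)))
        (Real.exp_nonneg _)
  have hsplit : ∀ u : ℝ, Real.exp (-u) * max (x - u) 0
      = (Real.exp (-u) * x - Real.exp (-u) * u) + Real.exp (-u) * max (u - x) 0 := by
    intro u
    rcases le_total u x with h | h
    · rw [max_eq_left (by linarith), max_eq_right (by linarith)]; ring
    · rw [max_eq_right (by linarith), max_eq_left (by linarith)]; ring
  have Ic_val : ∫ u in Ioi (0:ℝ), Real.exp (-u) * max (u - x) 0 = Real.exp (-x) := by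
    have hunion : Ioc (0:ℝ) x ∪ Ioi x = Ioi 0 := Ioc_union_Ioi_eq_Ioi hx.le
    have hdisj : Disjoint (Ioc (0:ℝ) x) (Ioi x) := Ioc_disjoint_Ioi le_rfl
    have h1 : ∫ u in Ioc (0:ℝ) x ∪ Ioi x, Real.exp (-u) * max (u - x) 0
        = (∫ u in Ioc (0:ℝ) x, Real.exp (-u) * max (u - x) 0)
          + ∫ u in Ioi x, Real.exp (-u) * max (u - x) 0 :=
      setIntegral_union hdisj measurableSet_Ioi
        (Ic.mono_set (by rw [← hunion]; exact subset_union_left))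
        (Ic.mono_set (by rw [← hunion]; exact subset_union_right))
    have h2 : ∫ u in Ioc (0:ℝ) x, Real.exp (-u) * max (u - x) 0 = 0 := by
      rw [setIntegral_congr_fun measurableSet_Ioc
        (fun u hu => by
          rw [max_eq_right (by linarith [hu.2] : u - x ≤ 0), mul_zero] : EqOn _ (fun _ => (0:ℝ)) _)]
      simp
    have h3 : ∫ u in Ioi x, Real.exp (-u) * max (u - x) 0
        = ∫ u in Ioi x, Real.exp (-u) * (u - x) := by
      apply setIntegral_congr_fun measurableSet_Ioi
      intro u hu
      dsimp only
      rw [max_eq_left (by linarith [mem_Ioi.mp hu] : (0:ℝ) ≤ u - x)]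
    rw [← hunion, h1, h2, h3, shifted_integral hx, zero_add]
  have heq : (fun u : ℝ => Real.exp (-u) * max (x - u) 0)
      = (fun u : ℝ => (Real.exp (-u) * x - Real.exp (-u) * u) + Real.exp (-u) * max (u - x) 0) := by
    funext u; exact hsplit u
  have Iab : IntegrableOn (fun u : ℝ => Real.exp (-u) * x - Real.exp (-u) * u) (Ioi 0) :=
    Ia.sub Ib
  rw [heq, integral_add Iab Ic, integral_sub Ia Ib, MeasureTheory.integral_mul_const,
    exp_integral_val, exp_mul_integral_val, Ic_val]
  ring

lemma pow_rpow_comm {a : ℝ} (ha : 0 ≤ a) (c : ℝ) (n : ℕ) : ((a ^ n : ℝ)) ^ c = (a ^ c) ^ n := by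
  rw [← Real.rpow_natCast a n, ← Real.rpow_mul ha, mul_comm, Real.rpow_mul ha, Real.rpow_natCast]

set_option maxHeartbeats 2000000 in
theorem stmt8 (a θ ζ : ℝ) (ha0 : 0 < a) (ha1 : a < 1) (hθ : 0 < θ)
    (hζ0 : -1 < ζ) (hζ1 : ζ < 0) :
    ∀ t > 0,
      Summable (fun j : ℤ =>
        (θ * a ^ j * t) ^ (ζ - 1) * (Real.exp (-(θ * a ^ j * t)) - 1 + θ * a ^ j * t)) ∧
      a ^ (-ζ) * Real.Gamma (ζ + 1) / ((1 - a ^ (-ζ)) * (1 - ζ)) ≤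
        ∑' j : ℤ, (θ * a ^ j * t) ^ (ζ - 1) * (Real.exp (-(θ * a ^ j * t)) - 1 + θ * a ^ j * t) ∧
      ∑' j : ℤ, (θ * a ^ j * t) ^ (ζ - 1) * (Real.exp (-(θ * a ^ j * t)) - 1 + θ * a ^ j * t) ≤
        Real.Gamma (ζ + 1) / ((1 - a ^ (-ζ)) * (1 - ζ)) := by
  intro t ht
  have hP : 0 < θ * t := mul_pos hθ ht
  have hq1 : 0 < a ^ (-ζ) := Real.rpow_pos_of_pos ha0 _
  have hq1' : a ^ (-ζ) < 1 := Real.rpow_lt_one ha0.le ha1 (by linarith)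
  have hq2 : 0 < a ^ (1-ζ) := Real.rpow_pos_of_pos ha0 _
  have hq2' : a ^ (1-ζ) < 1 := Real.rpow_lt_one ha0.le ha1 (by linarith)
  have hp : (0:ℝ) < 1 - ζ := by linarith
  have hxpos : ∀ j : ℤ, 0 < θ * a ^ j * t :=
    fun j => mul_pos (mul_pos hθ (zpow_pos ha0 j)) ht
  set f : ℤ → ℝ := fun j =>
    (θ * a ^ j * t) ^ (ζ - 1) * (Real.exp (-(θ * a ^ j * t)) - 1 + θ * a ^ j * t) with hfdef
  have hf_nonneg : ∀ j, 0 ≤ f j :=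
    fun j => mul_nonneg (Real.rpow_nonneg (hxpos j).le _) (g_nonneg _)
  -- summability
  have hsum : Summable f := by
    apply Summable.of_nat_of_neg
    · apply Summable.of_nonneg_of_le (fun n => hf_nonneg (n:ℤ))
        (g := fun n : ℕ => f (n:ℤ))
        (f := fun n : ℕ => (θ*t) ^ (ζ+1) * (a ^ (ζ+1)) ^ n)
      · intro n
        set X := θ * a ^ (n:ℤ) * t with hXdef
        have hX : 0 < X := hxpos n
        have h1 : f (n:ℤ) ≤ X ^ (ζ-1) * X ^ 2 :=
          mul_le_mul_of_nonneg_left (g_le_sq hX.le) (Real.rpow_nonneg hX.le _)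
        have h2 : X ^ (ζ-1) * X ^ 2 = X ^ (ζ+1) := by
          rw [← Real.rpow_natCast X 2, ← Real.rpow_add hX]
          congr 1; ring
        have h3 : X ^ (ζ+1) = (θ*t) ^ (ζ+1) * (a ^ (ζ+1)) ^ n := by
          have e0 : X = (θ*t) * a ^ n := by
            rw [hXdef, zpow_natCast]; ring
          rw [e0, Real.mul_rpow hP.le (pow_nonneg ha0.le n), pow_rpow_comm ha0.le]
        rw [← h3, ← h2]; exact h1
      · exact (summable_geometric_of_lt_one (Real.rpow_nonneg ha0.le _)
          (Real.rpow_lt_one ha0.le ha1 (by linarith))).mul_left _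
    · apply Summable.of_nonneg_of_le (fun n => hf_nonneg (-(n:ℤ)))
        (g := fun n : ℕ => f (-(n:ℤ)))
        (f := fun n : ℕ => (θ*t) ^ ζ * (a ^ (-ζ)) ^ n)
      · intro n
        set X := θ * a ^ (-(n:ℤ)) * t with hXdef
        have hX : 0 < X := hxpos _
        have h1 : f (-(n:ℤ)) ≤ X ^ (ζ-1) * X :=
          mul_le_mul_of_nonneg_left (g_le_self hX.le) (Real.rpow_nonneg hX.le _)
        have h2 : X ^ (ζ-1) * X = X ^ ζ := by
          nth_rewrite 2 [← Real.rpow_one X]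
          rw [← Real.rpow_add hX]; congr 1; ring
        have h3 : X ^ ζ = (θ*t) ^ ζ * (a ^ (-ζ)) ^ n := by
          have e0 : X = (θ*t) * ((a ^ n)⁻¹ : ℝ) := by
            rw [hXdef, zpow_neg, zpow_natCast]; ring
          rw [e0, Real.mul_rpow hP.le (by positivity),
            Real.inv_rpow (pow_nonneg ha0.le n), pow_rpow_comm ha0.le, ← inv_pow,
            ← Real.rpow_neg ha0.le]
        rw [← h3, ← h2]; exact h1
      · exact (summable_geometric_of_lt_one hq1.le hq1').mul_left _
  -- the integrand family
  set F : ℤ → ℝ → ℝ := fun j u =>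
    (θ * a ^ j * t) ^ (ζ - 1) * (Real.exp (-u) * max (θ * a ^ j * t - u) 0) with hFdef
  have hF_cont : ∀ j, Continuous (F j) := fun j =>
    continuous_const.mul ((Real.continuous_exp.comp continuous_neg).mul
      ((continuous_const.sub continuous_id).max continuous_const))
  have hF_nonneg : ∀ j u, 0 ≤ F j u := fun j u =>
    mul_nonneg (Real.rpow_nonneg (hxpos j).le _)
      (mul_nonneg (Real.exp_nonneg _) (le_max_right _ _))
  have hF_int : ∀ j, IntegrableOn (F j) (Set.Ioi 0) := by
    intro j
    apply Integrable.const_mul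
    apply Integrable.mono' (exp_integrableOn.mul_const (θ * a ^ j * t))
    · exact ((Real.continuous_exp.comp continuous_neg).mul
        ((continuous_const.sub continuous_id).max continuous_const)).aestronglyMeasurable
    · rw [ae_restrict_iff' measurableSet_Ioi]
      filter_upwards with u hu
      have h0 : (0:ℝ) ≤ Real.exp (-u) * max (θ * a ^ j * t - u) 0 :=
        mul_nonneg (Real.exp_nonneg _) (le_max_right _ _)
      rw [Real.norm_of_nonneg h0]
      exact mul_le_mul_of_nonneg_left
        (max_le (by linarith [Set.mem_Ioi.mp hu]) (hxpos j).le) (Real.exp_nonneg _)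
  have hF_val : ∀ j, ∫ u in Set.Ioi (0:ℝ), F j u = f j := by
    intro j
    simp only [hFdef]
    rw [integral_const_mul, g_integral (hxpos j)]
  have hmeasF : ∀ j : ℤ, AEMeasurable (fun u => ENNReal.ofReal (F j u))
      (volume.restrict (Set.Ioi (0:ℝ))) :=
    fun j => ((hF_cont j).measurable.ennreal_ofReal).aemeasurable
  have hkey : ENNReal.ofReal (∑' j, f j)
      = ∫⁻ u in Set.Ioi (0:ℝ), ∑' j : ℤ, ENNReal.ofReal (F j u) := by
    rw [ENNReal.ofReal_tsum_of_nonneg hf_nonneg hsum, MeasureTheory.lintegral_tsum hmeasF]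
    congr 1
    funext j
    rw [← hF_val j]
    exact MeasureTheory.ofReal_integral_eq_lintegral_ofReal (hF_int j)
      (Filter.Eventually.of_forall fun u => hF_nonneg j u)
  -- pointwise bounds for the inner sum
  have hpoint : ∀ u : ℝ, u ∈ Set.Ioi (0:ℝ) →
      ENNReal.ofReal (a^(-ζ) * (1 - a^(-ζ))⁻¹ / (1-ζ) * (Real.exp (-u) * u ^ ζ))
        ≤ (∑' j : ℤ, ENNReal.ofReal (F j u))
      ∧ (∑' j : ℤ, ENNReal.ofReal (F j u))
        ≤ ENNReal.ofReal ((1 - a^(-ζ))⁻¹ / (1-ζ) * (Real.exp (-u) * u ^ ζ)) := by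
    intro u hu
    replace hu : 0 < u := hu
    obtain ⟨n, hn1, hn2⟩ := exists_mem_Ioc_zpow (div_pos hu hP)
      (one_lt_inv_iff₀.mpr ⟨ha0, ha1⟩)
    set j₀ : ℤ := -(n+1) with hj₀def
    set y : ℝ := θ * t * a ^ j₀ with hydef
    have hy0 : 0 < y := mul_pos hP (zpow_pos ha0 _)
    have haj : (a:ℝ) ^ j₀ = (a⁻¹) ^ (n+1) := by
      rw [hj₀def, zpow_neg, ← inv_zpow]
    have haj1 : (a:ℝ) ^ (j₀+1) = (a⁻¹) ^ n := by
      rw [hj₀def, show -(n+1)+1 = -n by ring, zpow_neg, ← inv_zpow]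
    have hy1 : u ≤ y := by
      rw [div_le_iff₀ hP] at hn2
      calc u ≤ (a⁻¹) ^ (n+1) * (θ * t) := hn2
        _ = y := by rw [hydef, haj]; ring
    have hy2 : a * y ≤ u := by
      rw [lt_div_iff₀ hP] at hn1
      have e : a * y = (a⁻¹) ^ n * (θ * t) := by
        rw [hydef, ← haj1, zpow_add₀ (ne_of_gt ha0), zpow_one]; ring
      rw [e]; exact hn1.le
    set φ : ℤ → ℝ := fun j => F j u with hφdef
    have hφ0 : ∀ j : ℤ, j₀ < j → φ j = 0 := by
      intro j hj
      have hle : (a:ℝ) ^ j ≤ a ^ (j₀+1) := zpow_le_zpow_right_of_le_one₀ ha0 ha1.le hj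
      have hXle : θ * a ^ j * t ≤ u := by
        have h1 : θ * a ^ j * t ≤ θ * a ^ (j₀+1) * t :=
          mul_le_mul_of_nonneg_right (mul_le_mul_of_nonneg_left hle hθ.le) ht.le
        have e2 : θ * a ^ (j₀+1) * t = a * y := by
          rw [hydef, zpow_add₀ (ne_of_gt ha0), zpow_one]; ring
        linarith
      simp only [hφdef, hFdef]
      rw [max_eq_right (by linarith : θ * a ^ j * t - u ≤ 0), mul_zero, mul_zero]
    have hsupp : Function.support φ ⊆ Set.range (fun m : ℕ => j₀ - (m:ℤ)) := by
      intro j hj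
      rcases le_or_gt j j₀ with h | h
      · exact ⟨(j₀ - j).toNat, by simp only; omega⟩
      · exact absurd (hφ0 j h) hj
    have hinj : Function.Injective (fun m : ℕ => j₀ - (m:ℤ)) := by
      intro m m' h; simp only at h; omega
    have hterm : ∀ m : ℕ, φ (j₀ - (m:ℤ))
        = (Real.exp (-u) * y ^ ζ) * (a^(-ζ))^m
          - (Real.exp (-u) * (u * y ^ (ζ-1))) * (a^(1-ζ))^m := by
      intro m
      have hXeq : θ * a ^ (j₀ - (m:ℤ)) * t = y * ((a ^ m : ℝ))⁻¹ := by
        rw [zpow_sub₀ (ne_of_gt ha0), zpow_natCast, hydef]; ring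
      have hw0 : (0:ℝ) < ((a ^ m : ℝ))⁻¹ := by positivity
      have hw1 : (1:ℝ) ≤ ((a ^ m : ℝ))⁻¹ :=
        one_le_inv_iff₀.mpr ⟨pow_pos ha0 m, pow_le_one₀ ha0.le ha1.le⟩
      have hyw : (0:ℝ) < y * ((a ^ m : ℝ))⁻¹ := by positivity
      have hXge : u ≤ y * ((a ^ m : ℝ))⁻¹ := by nlinarith
      have e1 : (y * ((a ^ m : ℝ))⁻¹) ^ (ζ-1) = y ^ (ζ-1) * (a^(1-ζ))^m := by
        rw [Real.mul_rpow hy0.le hw0.le, Real.inv_rpow (pow_nonneg ha0.le m),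
          pow_rpow_comm ha0.le, ← inv_pow, ← Real.rpow_neg ha0.le, neg_sub]
      have e2 : (y * ((a ^ m : ℝ))⁻¹) ^ ζ = y ^ ζ * (a^(-ζ))^m := by
        rw [Real.mul_rpow hy0.le hw0.le, Real.inv_rpow (pow_nonneg ha0.le m),
          pow_rpow_comm ha0.le, ← inv_pow, ← Real.rpow_neg ha0.le]
      have e3 : (y * ((a ^ m : ℝ))⁻¹) ^ (ζ-1) * (y * ((a ^ m : ℝ))⁻¹)
          = (y * ((a ^ m : ℝ))⁻¹) ^ ζ := by
        nth_rewrite 2 [← Real.rpow_one (y * ((a ^ m : ℝ))⁻¹)]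
        rw [← Real.rpow_add hyw]; congr 1; ring
      simp only [hφdef, hFdef]
      rw [hXeq, max_eq_left (by linarith : (0:ℝ) ≤ y * ((a ^ m : ℝ))⁻¹ - u)]
      calc (y * ((a ^ m : ℝ))⁻¹) ^ (ζ-1) * (Real.exp (-u) * (y * ((a ^ m : ℝ))⁻¹ - u))
          = Real.exp (-u) * ((y * ((a ^ m : ℝ))⁻¹) ^ (ζ-1) * (y * ((a ^ m : ℝ))⁻¹))
            - Real.exp (-u) * (u * (y * ((a ^ m : ℝ))⁻¹) ^ (ζ-1)) := by ring
        _ = (Real.exp (-u) * y ^ ζ) * (a^(-ζ))^m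
            - (Real.exp (-u) * (u * y ^ (ζ-1))) * (a^(1-ζ))^m := by
            rw [e3, e2, e1]; ring
    have hgeom1 : Summable (fun m : ℕ => (Real.exp (-u) * y ^ ζ) * (a^(-ζ))^m) :=
      (summable_geometric_of_lt_one hq1.le hq1').mul_left _
    have hgeom2 : Summable
        (fun m : ℕ => (Real.exp (-u) * (u * y ^ (ζ-1))) * (a^(1-ζ))^m) :=
      (summable_geometric_of_lt_one hq2.le hq2').mul_left _
    have hφcomp : Summable (fun m : ℕ => φ (j₀ - (m:ℤ))) := by
      apply Summable.congr (hgeom1.sub hgeom2)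
      intro m; exact (hterm m).symm
    have hzero : ∀ j ∉ Set.range (fun m : ℕ => j₀ - (m:ℤ)), φ j = 0 := by
      intro j hj
      by_contra h0
      exact hj (hsupp (Function.mem_support.mpr h0))
    have hφsum : Summable φ := (hinj.summable_iff hzero).mp hφcomp
    have hφtsum : ∑' j : ℤ, φ j
        = Real.exp (-u) * y ^ ζ * (1 - a^(-ζ))⁻¹
          - Real.exp (-u) * (u * y ^ (ζ-1)) * (1 - a^(1-ζ))⁻¹ := by
      rw [← hinj.tsum_eq hsupp, tsum_congr hterm, Summable.tsum_sub hgeom1 hgeom2,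
        tsum_mul_left, tsum_mul_left, tsum_geometric_of_lt_one hq1.le hq1',
        tsum_geometric_of_lt_one hq2.le hq2']
    have hofreal : ∑' j : ℤ, ENNReal.ofReal (φ j) = ENNReal.ofReal (∑' j, φ j) :=
      (ENNReal.ofReal_tsum_of_nonneg (fun j => hF_nonneg j u) hφsum).symm
    have hrw : (∑' j : ℤ, ENNReal.ofReal (F j u)) = ENNReal.ofReal (∑' j : ℤ, φ j) := hofreal
    constructor
    · rw [hrw, hφtsum]
      apply ENNReal.ofReal_le_ofReal
      have hs := scaled_lower ha0 ha1 hζ0 hζ1 hu hy1 hy2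
      have hs2 := mul_le_mul_of_nonneg_left hs (Real.exp_nonneg (-u))
      calc a^(-ζ) * (1 - a^(-ζ))⁻¹ / (1-ζ) * (Real.exp (-u) * u ^ ζ)
          = Real.exp (-u) * (a^(-ζ) * (1 - a^(-ζ))⁻¹ / (1-ζ) * u ^ ζ) := by ring
        _ ≤ Real.exp (-u) * ((1 - a^(-ζ))⁻¹ * y ^ ζ - (1 - a^(1-ζ))⁻¹ * (u * y ^ (ζ-1))) := hs2
        _ = Real.exp (-u) * y ^ ζ * (1 - a^(-ζ))⁻¹
            - Real.exp (-u) * (u * y ^ (ζ-1)) * (1 - a^(1-ζ))⁻¹ := by ring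
    · rw [hrw, hφtsum]
      apply ENNReal.ofReal_le_ofReal
      have hs := scaled_upper ha0 ha1 hζ0 hζ1 hu hy1
      have hs2 := mul_le_mul_of_nonneg_left hs (Real.exp_nonneg (-u))
      calc Real.exp (-u) * y ^ ζ * (1 - a^(-ζ))⁻¹
            - Real.exp (-u) * (u * y ^ (ζ-1)) * (1 - a^(1-ζ))⁻¹
          = Real.exp (-u) * ((1 - a^(-ζ))⁻¹ * y ^ ζ - (1 - a^(1-ζ))⁻¹ * (u * y ^ (ζ-1))) := by
            ring
        _ ≤ Real.exp (-u) * ((1 - a^(-ζ))⁻¹ / (1-ζ) * u ^ ζ) := hs2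
        _ = (1 - a^(-ζ))⁻¹ / (1-ζ) * (Real.exp (-u) * u ^ ζ) := by ring
  -- Gamma integral facts
  have hΓ_int : IntegrableOn (fun u : ℝ => Real.exp (-u) * u ^ ζ) (Set.Ioi 0) := by
    have := Real.GammaIntegral_convergent (show (0:ℝ) < ζ + 1 by linarith)
    simpa using this
  have hΓ_val : ∫ u in Set.Ioi (0:ℝ), Real.exp (-u) * u ^ ζ = Real.Gamma (ζ+1) := by
    rw [Real.Gamma_eq_integral (show (0:ℝ) < ζ+1 by linarith)]
    norm_num
  have hΓpos := Real.Gamma_pos_of_pos (show (0:ℝ) < ζ+1 by linarith)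
  have hconst : ∀ c : ℝ, 0 ≤ c →
      ∫⁻ u in Set.Ioi (0:ℝ), ENNReal.ofReal (c * (Real.exp (-u) * u ^ ζ))
        = ENNReal.ofReal (c * Real.Gamma (ζ+1)) := by
    intro c hc
    rw [← MeasureTheory.ofReal_integral_eq_lintegral_ofReal (hΓ_int.const_mul c)
      ((ae_restrict_iff' measurableSet_Ioi).2 (Filter.Eventually.of_forall fun u hu =>
        mul_nonneg hc (mul_nonneg (Real.exp_nonneg _)
          (Real.rpow_nonneg (le_of_lt hu) _))))]
    rw [integral_const_mul, hΓ_val]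
  have hone : (0:ℝ) < 1 - a^(-ζ) := by linarith
  have hclow : (0:ℝ) ≤ a^(-ζ) * (1 - a^(-ζ))⁻¹ / (1-ζ) :=
    div_nonneg (mul_nonneg hq1.le (inv_nonneg.mpr hone.le)) hp.le
  have hcup : (0:ℝ) ≤ (1 - a^(-ζ))⁻¹ / (1-ζ) :=
    div_nonneg (inv_nonneg.mpr hone.le) hp.le
  have hlow2 : ENNReal.ofReal (a^(-ζ) * (1 - a^(-ζ))⁻¹ / (1-ζ) * Real.Gamma (ζ+1))
      ≤ ENNReal.ofReal (∑' j, f j) := by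
    rw [hkey, ← hconst _ hclow]
    apply lintegral_mono_ae
    rw [ae_restrict_iff' measurableSet_Ioi]
    exact Filter.Eventually.of_forall fun u hu => (hpoint u hu).1
  have hhigh2 : ENNReal.ofReal (∑' j, f j)
      ≤ ENNReal.ofReal ((1 - a^(-ζ))⁻¹ / (1-ζ) * Real.Gamma (ζ+1)) := by
    rw [hkey, ← hconst _ hcup]
    apply lintegral_mono_ae
    rw [ae_restrict_iff' measurableSet_Ioi]
    exact Filter.Eventually.of_forall fun u hu => (hpoint u hu).2
  refine ⟨hsum, ?_, ?_⟩
  · have h := (ENNReal.ofReal_le_ofReal_iff (tsum_nonneg hf_nonneg)).1 hlow2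
    calc a^(-ζ) * Real.Gamma (ζ+1) / ((1 - a^(-ζ)) * (1-ζ))
        = a^(-ζ) * (1 - a^(-ζ))⁻¹ / (1-ζ) * Real.Gamma (ζ+1) := by
          rw [div_eq_mul_inv, div_eq_mul_inv, mul_inv]; ring
      _ ≤ ∑' j, f j := h
  · have h := (ENNReal.ofReal_le_ofReal_iff
      (mul_nonneg hcup hΓpos.le)).1 hhigh2
    calc ∑' j, f j ≤ (1 - a^(-ζ))⁻¹ / (1-ζ) * Real.Gamma (ζ+1) := h
      _ = Real.Gamma (ζ+1) / ((1 - a^(-ζ)) * (1-ζ)) := by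
          rw [div_eq_mul_inv, div_eq_mul_inv, mul_inv]; ring
end

section
/- Let a ∈ (0,1), θ > 0 and −1 < ζ < 0. Then for every t > 0, a^{−ζ}(2−2^{−ζ}) Γ(ζ+1)/((1−a^{−ζ})(1−ζ)) ≤ Σ_{j∈ℤ} (θ a^j t)^{ζ−1} ( 2e^{−θ a^j t} − (1/2)e^{−2θ a^j t} + θ a^j t − 3/2 ) ≤ (2−2^{−ζ}) Γ(ζ+1)/((1−a^{−ζ})(1−ζ)), where Γ is the Gamma function (and the two-sided series converges for every t > 0). -/
set_option maxHeartbeats 1000000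

open Filter Topology

namespace Stmt9Aux

open Real Set MeasureTheory
open scoped NNReal ENNReal


/-- KEY1: `a^(-ζ) * (1 + (-ζ)*(1-a)) ≤ 1`. -/
lemma key1 {a ζ : ℝ} (ha0 : 0 < a) (ha1 : a < 1) (hζ1 : ζ < 0) :
    a ^ (-ζ) * (1 + (-ζ) * (1 - a)) ≤ 1 := by
  have h1 : (1 : ℝ) + (-ζ) * (1 - a) ≤ Real.exp ((-ζ) * (1 - a)) := by
    have := Real.add_one_le_exp ((-ζ) * (1 - a)); linarith
  have h2 : a ^ (-ζ) = Real.exp ((-ζ) * Real.log a) := by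
    rw [Real.rpow_def_of_pos ha0, mul_comm]
  have h3 : Real.log a ≤ a - 1 := by
    have := Real.log_le_sub_one_of_pos ha0; linarith
  have h4 : (0:ℝ) < 1 + (-ζ) * (1 - a) := by nlinarith
  calc a ^ (-ζ) * (1 + (-ζ) * (1 - a))
      ≤ Real.exp ((-ζ) * Real.log a) * Real.exp ((-ζ) * (1 - a)) := by
        rw [h2]; exact mul_le_mul_of_nonneg_left h1 (Real.exp_pos _).le
    _ = Real.exp ((-ζ) * (Real.log a + (1 - a))) := by rw [← Real.exp_add]; ring_nf
    _ ≤ 1 := by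
        rw [Real.exp_le_one_iff]
        have : Real.log a + (1 - a) ≤ 0 := by linarith
        nlinarith

/-- KEY2: `a + ζ*(1-a) ≤ a^(1-ζ)`. -/
lemma key2 {a ζ : ℝ} (ha0 : 0 < a) (ha1 : a < 1) (hζ1 : ζ < 0) :
    a + ζ * (1 - a) ≤ a ^ (1 - ζ) := by
  have h2 : a ^ (-ζ) = Real.exp ((-ζ) * Real.log a) := by
    rw [Real.rpow_def_of_pos ha0, mul_comm]
  have h1 : 1 + (-ζ) * Real.log a ≤ a ^ (-ζ) := by
    rw [h2]; have := Real.add_one_le_exp ((-ζ) * Real.log a); linarith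
  have h3 : a * Real.log a ≥ a - 1 := by
    have h := Real.log_le_sub_one_of_pos (inv_pos.2 ha0)
    rw [Real.log_inv] at h
    have : -Real.log a ≤ a⁻¹ - 1 := h
    nlinarith [mul_le_mul_of_nonneg_left this ha0.le, mul_inv_cancel₀ (ne_of_gt ha0)]
  have h4 : a ^ (1 - ζ) = a * a ^ (-ζ) := by
    rw [show (1 - ζ) = 1 + (-ζ) by ring, Real.rpow_add ha0, Real.rpow_one]
  rw [h4]
  nlinarith [mul_le_mul_of_nonneg_left h1 ha0.le]

lemma P_upper {a ζ u v : ℝ} (ha0 : 0 < a) (ha1 : a < 1) (hζ1 : ζ < 0)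
    (hu : 0 < u) (huv : u ≤ v) :
    v ^ ζ / (1 - a ^ (-ζ)) - u * v ^ (ζ - 1) / (1 - a ^ (1 - ζ)) ≤
      u ^ ζ / ((1 - a ^ (-ζ)) * (1 - ζ)) := by
  have hv : 0 < v := lt_of_lt_of_le hu huv
  set B := a ^ (-ζ) with hBdef
  set C := a ^ (1 - ζ) with hCdef
  have hB0 : 0 < B := rpow_pos_of_pos ha0 _
  have hB1 : B < 1 := Real.rpow_lt_one ha0.le ha1 (by linarith)
  have hC0 : 0 < C := rpow_pos_of_pos ha0 _
  have hC1 : C < 1 := Real.rpow_lt_one ha0.le ha1 (by linarith)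
  have hCaB : C = a * B := by
    rw [hCdef, hBdef, show (1 - ζ) = 1 + (-ζ) by ring, Real.rpow_add ha0, Real.rpow_one]
  set w := v / u with hwdef
  have hw0 : 0 < w := div_pos hv hu
  have hw1 : 1 ≤ w := (one_le_div hu).2 huv
  have hvuw : v = u * w := by rw [hwdef, mul_comm, div_mul_cancel₀ v hu.ne']
  have hA : v ^ ζ = u ^ ζ * w ^ ζ := by
    rw [hvuw, Real.mul_rpow hu.le hw0.le]
  have huζ : u * u ^ (ζ - 1) = u ^ ζ := by
    rw [Real.rpow_sub_one hu.ne']; field_simp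
  have hBw : u * v ^ (ζ - 1) = u ^ ζ * w ^ (ζ - 1) := by
    rw [hvuw, Real.mul_rpow hu.le hw0.le, ← mul_assoc, huζ]
  set A := w ^ ζ with hAdef
  set Bw := w ^ (ζ - 1) with hBwdef
  set Cw := w ^ (1 - ζ) with hCwdef
  have hBw0 : 0 < Bw := rpow_pos_of_pos hw0 _
  have hAB : A = w * Bw := by
    rw [hAdef, hBwdef, Real.rpow_sub_one hw0.ne']; field_simp
  have hBC : Bw * Cw = 1 := by
    rw [hBwdef, hCwdef, ← Real.rpow_add hw0]; norm_num
  have hCw : 1 + (1 - ζ) * (w - 1) ≤ Cw := by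
    have h := one_add_mul_self_le_rpow_one_add (by linarith : (-1:ℝ) ≤ w - 1)
      (by linarith : (1:ℝ) ≤ 1 - ζ)
    simpa [show 1 + (w - 1) = w by ring] using h
  have K1 : (B - C) * (1 - ζ) ≤ 1 - C := by
    have h := key1 ha0 ha1 hζ1
    rw [← hBdef] at h
    rw [hCaB]
    linarith
  have G'' : (1 - C) * (1 - ζ) * w - (1 - B) * (1 - ζ) ≤ (1 - C) * Cw := by
    linarith [mul_le_mul_of_nonneg_left hCw (by linarith : (0:ℝ) ≤ 1 - C), K1]
  have G' : (1 - C) * (1 - ζ) * A - (1 - B) * (1 - ζ) * Bw ≤ 1 - C := by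
    calc (1 - C) * (1 - ζ) * A - (1 - B) * (1 - ζ) * Bw
        = ((1 - C) * (1 - ζ) * w - (1 - B) * (1 - ζ)) * Bw := by rw [hAB]; ring
      _ ≤ ((1 - C) * Cw) * Bw := mul_le_mul_of_nonneg_right G'' hBw0.le
      _ = (1 - C) * (Bw * Cw) := by ring
      _ = 1 - C := by rw [hBC, mul_one]
  have G : (1 - C) * (1 - ζ) * (v ^ ζ) - (1 - B) * (1 - ζ) * (u * v ^ (ζ - 1))
      ≤ (1 - C) * u ^ ζ := by
    rw [hA, hBw]
    have h := mul_le_mul_of_nonneg_left G' (Real.rpow_nonneg hu.le ζ)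
    linarith [h]
  rw [div_sub_div _ _ (by linarith : (1:ℝ) - B ≠ 0) (by linarith : (1:ℝ) - C ≠ 0),
    div_le_div_iff₀ (mul_pos (by linarith) (by linarith) : (0:ℝ) < (1 - B) * (1 - C))
      (mul_pos (by linarith) (by linarith) : (0:ℝ) < (1 - B) * (1 - ζ))]
  calc (v ^ ζ * (1 - C) - (1 - B) * (u * v ^ (ζ - 1))) * ((1 - B) * (1 - ζ))
      = ((1 - C) * (1 - ζ) * (v ^ ζ) - (1 - B) * (1 - ζ) * (u * v ^ (ζ - 1))) * (1 - B) := by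
        ring
    _ ≤ ((1 - C) * u ^ ζ) * (1 - B) := mul_le_mul_of_nonneg_right G (by linarith)
    _ = u ^ ζ * ((1 - B) * (1 - C)) := by ring

lemma P_lower {a ζ u v : ℝ} (ha0 : 0 < a) (ha1 : a < 1) (hζ1 : ζ < 0)
    (hu : 0 < u) (huv : u ≤ v) (hav : a * v ≤ u) :
    a ^ (-ζ) * u ^ ζ / ((1 - a ^ (-ζ)) * (1 - ζ)) ≤
      v ^ ζ / (1 - a ^ (-ζ)) - u * v ^ (ζ - 1) / (1 - a ^ (1 - ζ)) := by
  have hv : 0 < v := lt_of_lt_of_le hu huv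
  set B := a ^ (-ζ) with hBdef
  set C := a ^ (1 - ζ) with hCdef
  have hB0 : 0 < B := rpow_pos_of_pos ha0 _
  have hB1 : B < 1 := Real.rpow_lt_one ha0.le ha1 (by linarith)
  have hC0 : 0 < C := rpow_pos_of_pos ha0 _
  have hC1 : C < 1 := Real.rpow_lt_one ha0.le ha1 (by linarith)
  have hCaB : C = a * B := by
    rw [hCdef, hBdef, show (1 - ζ) = 1 + (-ζ) by ring, Real.rpow_add ha0, Real.rpow_one]
  set w := v / u with hwdef
  have hw0 : 0 < w := div_pos hv hu
  have hw1 : 1 ≤ w := (one_le_div hu).2 huv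
  have hwa : w ≤ a⁻¹ := by
    have hva : v ≤ a⁻¹ * u := by
      rw [← div_eq_inv_mul]
      exact (le_div_iff₀ ha0).2 (by linarith)
    rw [hwdef, div_le_iff₀ hu]
    linarith
  have hvuw : v = u * w := by rw [hwdef, mul_comm, div_mul_cancel₀ v hu.ne']
  have hA : v ^ ζ = u ^ ζ * w ^ ζ := by rw [hvuw, Real.mul_rpow hu.le hw0.le]
  have huζ : u * u ^ (ζ - 1) = u ^ ζ := by rw [Real.rpow_sub_one hu.ne']; field_simp
  have hBw : u * v ^ (ζ - 1) = u ^ ζ * w ^ (ζ - 1) := by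
    rw [hvuw, Real.mul_rpow hu.le hw0.le, ← mul_assoc, huζ]
  set A := w ^ ζ with hAdef
  set Bw := w ^ (ζ - 1) with hBwdef
  set Cw := w ^ (1 - ζ) with hCwdef
  have hBw0 : 0 < Bw := rpow_pos_of_pos hw0 _
  have hAB : A = w * Bw := by
    rw [hAdef, hBwdef, Real.rpow_sub_one hw0.ne']; field_simp
  have hBC : Bw * Cw = 1 := by rw [hBwdef, hCwdef, ← Real.rpow_add hw0]; norm_num
  -- convexity bound on Cw
  have hainv1 : 1 < a⁻¹ := (one_lt_inv₀ ha0).2 ha1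
  set ν := (w - 1) / (a⁻¹ - 1) with hνdef
  set μ := 1 - ν with hμdef
  have hν0 : 0 ≤ ν := div_nonneg (by linarith) (by linarith)
  have hν1 : ν ≤ 1 := by
    rw [hνdef, div_le_one (by linarith)]; linarith
  have hμ0 : 0 ≤ μ := by rw [hμdef]; linarith
  have hwμν : μ * 1 + ν * a⁻¹ = w := by
    have : ν * (a⁻¹ - 1) = w - 1 := div_mul_cancel₀ _ (by linarith : a⁻¹ - 1 ≠ 0)
    rw [hμdef]; nlinarith [this]
  have hD : (a⁻¹) ^ (1 - ζ) = C⁻¹ := by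
    rw [hCdef, ← Real.inv_rpow ha0.le]
  have hconv : Cw ≤ μ + ν * C⁻¹ := by
    have h := (convexOn_rpow (by linarith : (1:ℝ) ≤ 1 - ζ)).2
      (Set.mem_Ici.2 (by norm_num : (0:ℝ) ≤ 1))
      (Set.mem_Ici.2 (by positivity : (0:ℝ) ≤ a⁻¹)) hμ0 hν0 (by rw [hμdef]; ring)
    simp only [smul_eq_mul] at h
    rw [hwμν] at h
    calc Cw ≤ μ * (1:ℝ) ^ (1 - ζ) + ν * (a⁻¹) ^ (1 - ζ) := h
      _ = μ + ν * C⁻¹ := by rw [Real.one_rpow, hD, mul_one]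
  -- key endpoint facts
  have K2 : a + ζ * (1 - a) ≤ C := by
    have := key2 ha0 ha1 hζ1; rwa [← hCdef] at this
  have K2' : a + ζ * (1 - a) ≤ a * B := by rw [← hCaB]; exact K2
  have F1 : B * (1 - C) ≤ (B - C) * (1 - ζ) := by
    rw [hCaB]; linarith [mul_le_mul_of_nonneg_left K2' hB0.le]
  have F2 : (1 - C) ≤ (1 - C) * (1 - ζ) - a * (1 - B) * (1 - ζ) := by
    rw [hCaB]; linarith [K2']
  -- combine: B*(1-C)*Cw ≤ (1-C)*(1-ζ)*w - (1-B)*(1-ζ)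
  have hBCnn : 0 ≤ B * (1 - C) := mul_nonneg hB0.le (by linarith)
  have haC : a * (B * C⁻¹) = 1 := by
    rw [hCaB]; field_simp
  have G'' : B * (1 - C) * Cw ≤ (1 - C) * (1 - ζ) * w - (1 - B) * (1 - ζ) := by
    have h1 : B * (1 - C) * Cw ≤ B * (1 - C) * (μ + ν * C⁻¹) :=
      mul_le_mul_of_nonneg_left hconv hBCnn
    have hF2' : B * (1 - C) * C⁻¹ ≤ ((1 - C) * (1 - ζ) * a⁻¹ - (1 - B) * (1 - ζ)) := by
      -- multiply F2 by a⁻¹ and use a * (B * C⁻¹) = 1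
      have hia : 0 < a⁻¹ := by positivity
      have h2 := mul_le_mul_of_nonneg_left F2 hia.le
      have hBCi : B * C⁻¹ = a⁻¹ := by
        rw [hCaB, mul_inv, mul_comm a⁻¹ B⁻¹, ← mul_assoc, mul_inv_cancel₀ hB0.ne', one_mul]
      calc B * (1 - C) * C⁻¹ = (1 - C) * (B * C⁻¹) := by ring
        _ = a⁻¹ * (1 - C) := by rw [hBCi]; ring
        _ ≤ a⁻¹ * ((1 - C) * (1 - ζ) - a * (1 - B) * (1 - ζ)) := h2
        _ = (1 - C) * (1 - ζ) * a⁻¹ - (a * a⁻¹) * ((1 - B) * (1 - ζ)) := by ring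
        _ = (1 - C) * (1 - ζ) * a⁻¹ - (1 - B) * (1 - ζ) := by
            rw [mul_inv_cancel₀ ha0.ne']; ring
    have hF1' : B * (1 - C) * 1 ≤ (1 - C) * (1 - ζ) * 1 - (1 - B) * (1 - ζ) := by
      linarith [F1]
    calc B * (1 - C) * Cw ≤ B * (1 - C) * (μ + ν * C⁻¹) := h1
      _ = μ * (B * (1 - C) * 1) + ν * (B * (1 - C) * C⁻¹) := by ring
      _ ≤ μ * ((1 - C) * (1 - ζ) * 1 - (1 - B) * (1 - ζ))
          + ν * ((1 - C) * (1 - ζ) * a⁻¹ - (1 - B) * (1 - ζ)) := by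
          exact add_le_add (mul_le_mul_of_nonneg_left hF1' hμ0)
            (mul_le_mul_of_nonneg_left hF2' hν0)
      _ = (1 - C) * (1 - ζ) * (μ * 1 + ν * a⁻¹) - (μ + ν) * ((1 - B) * (1 - ζ)) := by ring
      _ = (1 - C) * (1 - ζ) * w - (1 - B) * (1 - ζ) := by
          rw [hwμν, hμdef]; ring
  have G' : B * (1 - C) ≤ (1 - C) * (1 - ζ) * A - (1 - B) * (1 - ζ) * Bw := by
    have h := mul_le_mul_of_nonneg_right G'' hBw0.le
    calc B * (1 - C) = B * (1 - C) * (Bw * Cw) := by rw [hBC, mul_one]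
      _ = B * (1 - C) * Cw * Bw := by ring
      _ ≤ ((1 - C) * (1 - ζ) * w - (1 - B) * (1 - ζ)) * Bw := h
      _ = (1 - C) * (1 - ζ) * (w * Bw) - (1 - B) * (1 - ζ) * Bw := by ring
      _ = (1 - C) * (1 - ζ) * A - (1 - B) * (1 - ζ) * Bw := by rw [hAB]
  have G : B * (1 - C) * u ^ ζ ≤
      (1 - C) * (1 - ζ) * (v ^ ζ) - (1 - B) * (1 - ζ) * (u * v ^ (ζ - 1)) := by
    rw [hA, hBw]
    have h := mul_le_mul_of_nonneg_left G' (Real.rpow_nonneg hu.le ζ)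
    linarith [h]
  rw [div_sub_div _ _ (by linarith : (1:ℝ) - B ≠ 0) (by linarith : (1:ℝ) - C ≠ 0),
    div_le_div_iff₀ (mul_pos (by linarith) (by linarith) : (0:ℝ) < (1 - B) * (1 - ζ))
      (mul_pos (by linarith) (by linarith) : (0:ℝ) < (1 - B) * (1 - C))]
  calc B * u ^ ζ * ((1 - B) * (1 - C))
      = (B * (1 - C) * u ^ ζ) * (1 - B) := by ring
    _ ≤ ((1 - C) * (1 - ζ) * (v ^ ζ) - (1 - B) * (1 - ζ) * (u * v ^ (ζ - 1))) * (1 - B) :=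
        mul_le_mul_of_nonneg_right G (by linarith)
    _ = (v ^ ζ * (1 - C) - (1 - B) * (u * v ^ (ζ - 1))) * ((1 - B) * (1 - ζ)) := by ring

/-- The core estimate on `T(u) = ∑_{j ∈ ℤ} (a^j s)^{ζ-1} (a^j s - u)₊`. -/
lemma T_bound {a ζ s u : ℝ} (ha0 : 0 < a) (ha1 : a < 1) (hζ1 : ζ < 0)
    (hs : 0 < s) (hu : 0 < u) :
    Summable (fun j : ℤ => (a ^ j * s) ^ (ζ - 1) * max (a ^ j * s - u) 0) ∧
    a ^ (-ζ) * u ^ ζ / ((1 - a ^ (-ζ)) * (1 - ζ)) ≤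
      (∑' j : ℤ, (a ^ j * s) ^ (ζ - 1) * max (a ^ j * s - u) 0) ∧
    (∑' j : ℤ, (a ^ j * s) ^ (ζ - 1) * max (a ^ j * s - u) 0) ≤
      u ^ ζ / ((1 - a ^ (-ζ)) * (1 - ζ)) := by
  set t : ℤ → ℝ := fun j => (a ^ j * s) ^ (ζ - 1) * max (a ^ j * s - u) 0 with htdef
  set m : ℤ := ⌊Real.logb a (u / s)⌋ with hmdef
  have hus : 0 < u / s := div_pos hu hs
  have ham : ∀ j : ℤ, (a : ℝ) ^ j = a ^ (j : ℝ) := fun j => (Real.rpow_intCast a j).symm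
  have hm1 : u ≤ a ^ m * s := by
    have h1 : (m : ℝ) ≤ Real.logb a (u / s) := Int.floor_le _
    have h2 : a ^ Real.logb a (u / s) ≤ a ^ (m : ℝ) :=
      (Real.rpow_le_rpow_left_iff_of_base_lt_one ha0 ha1).2 h1
    rw [Real.rpow_logb ha0 (ne_of_lt ha1) hus] at h2
    rw [ham]
    calc u = u / s * s := by field_simp
      _ ≤ a ^ (m : ℝ) * s := by nlinarith
  have hm2 : a ^ (m + 1) * s < u := by
    have h1 : Real.logb a (u / s) < (m : ℝ) + 1 := Int.lt_floor_add_one _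
    have h2 : a ^ ((m : ℝ) + 1) < a ^ Real.logb a (u / s) :=
      (Real.rpow_lt_rpow_left_iff_of_base_lt_one ha0 ha1).2 h1
    rw [Real.rpow_logb ha0 (ne_of_lt ha1) hus] at h2
    have : (a : ℝ) ^ (m + 1) = a ^ ((m : ℝ) + 1) := by
      rw [ham (m + 1)]; norm_num
    rw [this]
    calc a ^ ((m : ℝ) + 1) * s < u / s * s := by nlinarith
      _ = u := by field_simp
  set v : ℝ := a ^ m * s with hvdef
  have hv0 : 0 < v := mul_pos (zpow_pos ha0 m) hs
  have huv : u ≤ v := hm1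
  have hav : a * v ≤ u := by
    have : a ^ (m + 1) = a ^ m * a := zpow_add_one₀ (ne_of_gt ha0) m
    nlinarith [hm2]
  -- reindexing
  set e : ℕ → ℤ := fun k => m - k with hedef
  have he : Function.Injective e := by
    intro x y hxy
    simp only [hedef, sub_right_inj, Int.natCast_inj] at hxy
    exact hxy
  have hout : ∀ j ∉ Set.range e, t j = 0 := by
    intro j hj
    have hjm : m < j := by
      by_contra h
      push_neg at h
      exact hj ⟨(m - j).toNat, by simp only [hedef]; omega⟩
    have hj1 : m + 1 ≤ j := hjm
    have hle : (a : ℝ) ^ j ≤ a ^ (m + 1) :=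
      zpow_le_zpow_right_of_le_one₀ ha0 ha1.le hj1
    have : a ^ j * s < u := by nlinarith
    simp only [htdef]
    rw [max_eq_right (by linarith)]
    ring
  -- the composed sequence is an explicit geometric-type series
  set b : ℝ := a ^ (-ζ) with hbdef
  set c : ℝ := a ^ (1 - ζ) with hcdef
  have hb0 : 0 < b := rpow_pos_of_pos ha0 _
  have hb1 : b < 1 := Real.rpow_lt_one ha0.le ha1 (by linarith)
  have hc0 : 0 < c := rpow_pos_of_pos ha0 _
  have hc1 : c < 1 := Real.rpow_lt_one ha0.le ha1 (by linarith)
  have hcomp : ∀ k : ℕ, t (e k) = v ^ ζ * b ^ k - u * v ^ (ζ - 1) * c ^ k := by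
    intro k
    have hx : a ^ (m - (k : ℤ)) * s = v * (a⁻¹) ^ k := by
      rw [zpow_sub₀ (ne_of_gt ha0), hvdef]
      rw [div_eq_mul_inv, ← inv_zpow]
      rw [zpow_natCast]
      ring
    have hik : (1 : ℝ) ≤ (a⁻¹) ^ k := one_le_pow₀ (by
      rw [le_inv_comm₀ one_pos ha0]; simpa using ha1.le)
    have hxv : v ≤ v * (a⁻¹) ^ k := le_mul_of_one_le_right hv0.le hik
    have hx0 : 0 < v * (a⁻¹) ^ k := by positivity
    have hmax : max (a ^ (m - (k : ℤ)) * s - u) 0 = v * (a⁻¹) ^ k - u := by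
      rw [hx]; exact max_eq_left (by linarith)
    have hiak : (0:ℝ) < (a⁻¹) ^ k := by positivity
    -- rpow computations
    have hr1 : (v * (a⁻¹) ^ k) ^ (ζ - 1) = v ^ (ζ - 1) * ((a⁻¹) ^ k) ^ (ζ - 1 : ℝ) := by
      rw [Real.mul_rpow hv0.le hiak.le]
    have hpowk : ∀ q : ℝ, ((a⁻¹ : ℝ) ^ k) ^ (q : ℝ) = (a ^ (-q)) ^ k := by
      intro q
      rw [← Real.rpow_natCast a⁻¹ k, ← Real.rpow_mul (by positivity), mul_comm,
        Real.rpow_mul (by positivity), Real.inv_rpow ha0.le, ← Real.rpow_neg ha0.le,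
        Real.rpow_natCast]
    have hζν : a ^ (-(ζ - 1)) = c := by
      rw [hcdef]; norm_num
    have hζν2 : a ^ (-ζ) = b := rfl
    simp only [htdef, hedef]
    rw [hx, max_eq_left (by linarith : (0:ℝ) ≤ v * a⁻¹ ^ k - u)]
    have hxζ : (v * (a⁻¹) ^ k) ^ (ζ - 1) * (v * (a⁻¹) ^ k) = v ^ ζ * b ^ k := by
      rw [hr1, hpowk, hζν]
      have hvζ : v ^ (ζ - 1) * v = v ^ ζ := by
        rw [Real.rpow_sub_one hv0.ne']; field_simp
      have hck : c ^ k * (a⁻¹) ^ k = b ^ k := by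
        rw [← mul_pow]
        congr 1
        rw [hcdef, hbdef, show (1 - ζ) = 1 + (-ζ) by ring, Real.rpow_add ha0, Real.rpow_one]
        field_simp
      calc v ^ (ζ - 1) * c ^ k * (v * (a⁻¹) ^ k)
          = (v ^ (ζ - 1) * v) * (c ^ k * (a⁻¹) ^ k) := by ring
        _ = v ^ ζ * b ^ k := by rw [hvζ, hck]
    -- now expand
    rw [mul_sub, hxζ, hr1, hpowk, hζν]
    ring
  have hsum_comp : Summable (fun k : ℕ => v ^ ζ * b ^ k - u * v ^ (ζ - 1) * c ^ k) := by
    exact ((summable_geometric_of_lt_one hb0.le hb1).mul_left _).sub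
      ((summable_geometric_of_lt_one hc0.le hc1).mul_left _)
  have hsum_te : Summable (t ∘ e) := by
    refine hsum_comp.congr fun k => ?_
    simp only [Function.comp_apply]
    exact (hcomp k).symm
  have hsum : Summable t := (he.summable_iff hout).1 hsum_te
  have htsum : (∑' j : ℤ, t j) = v ^ ζ / (1 - b) - u * v ^ (ζ - 1) / (1 - c) := by
    rw [← he.tsum_eq (Function.support_subset_iff'.2 hout)]
    have : (∑' k : ℕ, t (e k)) = ∑' k : ℕ, (v ^ ζ * b ^ k - u * v ^ (ζ - 1) * c ^ k) :=
      tsum_congr hcomp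
    rw [this, Summable.tsum_sub ((summable_geometric_of_lt_one hb0.le hb1).mul_left _)
      ((summable_geometric_of_lt_one hc0.le hc1).mul_left _),
      tsum_mul_left, tsum_mul_left, tsum_geometric_of_lt_one hb0.le hb1,
      tsum_geometric_of_lt_one hc0.le hc1]
    simp [div_eq_mul_inv]
  refine ⟨hsum, ?_, ?_⟩
  · rw [htsum]
    have h := P_lower ha0 ha1 hζ1 hu huv hav
    rw [← hbdef, ← hcdef] at h
    exact h
  · rw [htsum]
    have h := P_upper ha0 ha1 hζ1 hu huv
    rw [← hbdef, ← hcdef] at h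
    exact h



noncomputable def dd (u : ℝ) : ℝ := 2 * (Real.exp (-u) - Real.exp (-(2 * u)))

lemma dd_cont : Continuous dd := by
  unfold dd; fun_prop

lemma dd_nonneg {u : ℝ} (hu : 0 ≤ u) : 0 ≤ dd u := by
  unfold dd
  have : Real.exp (-(2 * u)) ≤ Real.exp (-u) := Real.exp_le_exp.2 (by linarith)
  linarith

lemma maxF_cont (x : ℝ) : Continuous (fun u : ℝ => max (x - u) 0 * dd u) :=
  ((continuous_const.sub continuous_id').max continuous_const).mul dd_cont

lemma maxF_integrableOn {x : ℝ} (hx : 0 < x) :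
    IntegrableOn (fun u : ℝ => max (x - u) 0 * dd u) (Ioi 0) := by
  rw [← Ioc_union_Ioi_eq_Ioi hx.le, integrableOn_union]
  constructor
  · exact (maxF_cont x).integrableOn_Ioc
  · have h0 : IntegrableOn (fun _ : ℝ => (0:ℝ)) (Ioi x) := integrableOn_zero
    refine h0.congr_fun (fun u hu => ?_) measurableSet_Ioi
    have : x - u ≤ 0 := by simp only [mem_Ioi] at hu; linarith
    rw [max_eq_right this, zero_mul]

lemma gg_repr {x : ℝ} (hx : 0 < x) :
    2 * Real.exp (-x) - (1/2) * Real.exp (-(2 * x)) + x - 3/2 =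
      ∫ u in Ioi (0:ℝ), max (x - u) 0 * dd u := by
  -- antiderivative
  set H : ℝ → ℝ := fun u =>
    2 * (Real.exp (-u) - (x - u) * Real.exp (-u))
      + (x - u) * Real.exp (-(2 * u)) - (1/2) * Real.exp (-(2 * u)) with hHdef
  have hderiv : ∀ u : ℝ, HasDerivAt H ((x - u) * dd u) u := by
    intro u
    have he1 : HasDerivAt (fun u : ℝ => Real.exp (-u)) (-Real.exp (-u)) u := by
      simpa using ((hasDerivAt_id u).neg).exp
    have he2 : HasDerivAt (fun u : ℝ => Real.exp (-(2 * u))) (-(Real.exp (-(2 * u)) * 2)) u := by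
      have h := (((hasDerivAt_id u).const_mul (2:ℝ)).neg).exp
      simpa using h
    have hlin : HasDerivAt (fun u : ℝ => x - u) (-1) u := by
      exact ((hasDerivAt_const u x).sub (hasDerivAt_id' u)).congr_deriv (by ring)
    have h1 := hlin.mul he1
    have h2 := hlin.mul he2
    have h3 := (((he1.sub h1).const_mul (2:ℝ)).add h2).sub ((he2.const_mul (2:ℝ)).div_const 4)
    have hH : H = fun u => 2 * (Real.exp (-u) - (x - u) * Real.exp (-u))
        + (x - u) * Real.exp (-(2 * u)) - (2 * Real.exp (-(2*u))) / 4 := by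
      funext u; rw [hHdef]; ring
    rw [hH]
    refine h3.congr_deriv ?_
    unfold dd; ring
  have hcont : Continuous (fun u : ℝ => (x - u) * dd u) :=
    (continuous_const.sub continuous_id').mul dd_cont
  have hFTC := intervalIntegral.integral_eq_sub_of_hasDerivAt
    (fun u _ => hderiv u) (hcont.intervalIntegrable 0 x)
  have hval : H x - H 0 = 2 * Real.exp (-x) - (1/2) * Real.exp (-(2 * x)) + x - 3/2 := by
    rw [hHdef]
    simp only [sub_self, zero_mul, mul_zero, neg_zero, Real.exp_zero, sub_zero, mul_one]
    ring
  have h2 : ∫ u in Ioc (0:ℝ) x, (x - u) * dd u =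
      2 * Real.exp (-x) - (1/2) * Real.exp (-(2 * x)) + x - 3/2 := by
    rw [← intervalIntegral.integral_of_le hx.le, hFTC, hval]
  have h3 : ∫ u in Ioc (0:ℝ) x, max (x - u) 0 * dd u =
      ∫ u in Ioc (0:ℝ) x, (x - u) * dd u := by
    refine setIntegral_congr_fun measurableSet_Ioc (fun u hu => ?_)
    have : 0 ≤ x - u := by simp only [mem_Ioc] at hu; linarith [hu.2]
    rw [max_eq_left this]
  have h4 : ∫ u in Ioi (0:ℝ), max (x - u) 0 * dd u =
      ∫ u in Ioc (0:ℝ) x, max (x - u) 0 * dd u := by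
    rw [← Ioc_union_Ioi_eq_Ioi hx.le,
      setIntegral_union (Ioc_disjoint_Ioi le_rfl) measurableSet_Ioi
        ((maxF_cont x).integrableOn_Ioc)
        (by
          have h0 : IntegrableOn (fun _ : ℝ => (0:ℝ)) (Ioi x) := integrableOn_zero
          refine h0.congr_fun (fun u hu => ?_) measurableSet_Ioi
          have : x - u ≤ 0 := by simp only [mem_Ioi] at hu; linarith
          rw [max_eq_right this, zero_mul])]
    have : ∫ u in Ioi x, max (x - u) 0 * dd u = 0 := by
      refine setIntegral_eq_zero_of_forall_eq_zero (fun u hu => ?_)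
      have : x - u ≤ 0 := by simp only [mem_Ioi] at hu; linarith
      rw [max_eq_right this, zero_mul]
    rw [this, add_zero]
  rw [h4, h3, h2]

lemma dd_gamma {ζ : ℝ} (hζ0 : -1 < ζ) (hζ1 : ζ < 0) :
    (∫ u in Ioi (0:ℝ), u ^ ζ * dd u) = (2 - (2:ℝ) ^ (-ζ)) * Real.Gamma (ζ + 1) ∧
    IntegrableOn (fun u : ℝ => u ^ ζ * dd u) (Ioi 0) := by
  have I1 : IntegrableOn (fun u : ℝ => u ^ ζ * Real.exp (-u)) (Ioi 0) := by
    have h := integrableOn_rpow_mul_exp_neg_mul_rpow hζ0 (one_pos : (0:ℝ) < 1) one_pos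
    refine h.congr_fun (fun u _ => ?_) measurableSet_Ioi
    dsimp only; rw [Real.rpow_one]; ring_nf
  have I2 : IntegrableOn (fun u : ℝ => u ^ ζ * Real.exp (-(2 * u))) (Ioi 0) := by
    have h := integrableOn_rpow_mul_exp_neg_mul_rpow hζ0 (one_pos : (0:ℝ) < 1) two_pos
    refine h.congr_fun (fun u _ => ?_) measurableSet_Ioi
    dsimp only; rw [Real.rpow_one]; ring_nf
  have E1 : ∫ u in Ioi (0:ℝ), u ^ ζ * Real.exp (-u) = Real.Gamma (ζ + 1) := by
    have h := integral_rpow_mul_exp_neg_mul_Ioi (by linarith : (0:ℝ) < ζ + 1) one_pos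
    simp only [one_mul, add_sub_cancel_right] at h
    norm_num at h
    exact h
  have E2 : ∫ u in Ioi (0:ℝ), u ^ ζ * Real.exp (-(2 * u)) =
      (1/2 : ℝ) ^ (ζ + 1) * Real.Gamma (ζ + 1) := by
    have h := integral_rpow_mul_exp_neg_mul_Ioi (by linarith : (0:ℝ) < ζ + 1) two_pos
    simp only [add_sub_cancel_right] at h
    exact h
  have hfun : (fun u : ℝ => u ^ ζ * dd u) =
      (fun u : ℝ => 2 * (u ^ ζ * Real.exp (-u)) - 2 * (u ^ ζ * Real.exp (-(2 * u)))) := by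
    funext u; unfold dd; ring
  have hint : IntegrableOn (fun u : ℝ => u ^ ζ * dd u) (Ioi 0) := by
    rw [hfun]
    exact (I1.const_mul 2).sub (I2.const_mul 2)
  refine ⟨?_, hint⟩
  rw [hfun]
  rw [integral_sub (I1.const_mul 2) (I2.const_mul 2), integral_const_mul, integral_const_mul,
    E1, E2]
  have h12 : (1/2 : ℝ) ^ (ζ + 1) = (2:ℝ) ^ (-(ζ + 1)) := by
    rw [one_div, ← Real.rpow_neg_one (2:ℝ), ← Real.rpow_mul (by norm_num : (0:ℝ) ≤ 2)]
    congr 1; ring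
  rw [h12]
  have h2 : (2:ℝ) * (2:ℝ) ^ (-(ζ + 1)) = (2:ℝ) ^ (-ζ) := by
    rw [show -ζ = -(ζ + 1) + 1 by ring, Real.rpow_add_one (by norm_num : (2:ℝ) ≠ 0)]
    ring
  linear_combination (-Real.Gamma (ζ + 1)) * h2

lemma main {a ζ s : ℝ} (ha0 : 0 < a) (ha1 : a < 1) (hζ0 : -1 < ζ) (hζ1 : ζ < 0)
    (hs : 0 < s) :
    Summable (fun j : ℤ =>
      (a ^ j * s) ^ (ζ - 1) *
        (2 * Real.exp (-(a ^ j * s)) - (1/2) * Real.exp (-(2 * (a ^ j * s))) +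
          a ^ j * s - 3/2)) ∧
    a ^ (-ζ) * (2 - (2:ℝ) ^ (-ζ)) * Real.Gamma (ζ + 1) / ((1 - a ^ (-ζ)) * (1 - ζ)) ≤
      (∑' j : ℤ, (a ^ j * s) ^ (ζ - 1) *
        (2 * Real.exp (-(a ^ j * s)) - (1/2) * Real.exp (-(2 * (a ^ j * s))) +
          a ^ j * s - 3/2)) ∧
    (∑' j : ℤ, (a ^ j * s) ^ (ζ - 1) *
        (2 * Real.exp (-(a ^ j * s)) - (1/2) * Real.exp (-(2 * (a ^ j * s))) +
          a ^ j * s - 3/2)) ≤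
      (2 - (2:ℝ) ^ (-ζ)) * Real.Gamma (ζ + 1) / ((1 - a ^ (-ζ)) * (1 - ζ)) := by
  set f : ℤ → ℝ := fun j =>
    (a ^ j * s) ^ (ζ - 1) *
      (2 * Real.exp (-(a ^ j * s)) - (1/2) * Real.exp (-(2 * (a ^ j * s))) +
        a ^ j * s - 3/2) with hfdef
  set B : ℝ := a ^ (-ζ) with hBdef
  have hB0 : 0 < B := rpow_pos_of_pos ha0 _
  have hB1 : B < 1 := Real.rpow_lt_one ha0.le ha1 (by linarith)
  set D : ℝ := (1 - B) * (1 - ζ) with hDdef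
  have hD0 : 0 < D := by rw [hDdef]; exact mul_pos (by linarith) (by linarith)
  set I : ℝ := (2 - (2:ℝ) ^ (-ζ)) * Real.Gamma (ζ + 1) with hIdef
  have hI0 : 0 ≤ I := by
    rw [hIdef]
    have h1 : (2:ℝ) ^ (-ζ) < (2:ℝ) ^ (1:ℝ) :=
      Real.rpow_lt_rpow_of_exponent_lt one_lt_two (by linarith)
    rw [Real.rpow_one] at h1
    have h2 : 0 < Real.Gamma (ζ + 1) := Real.Gamma_pos_of_pos (by linarith)
    nlinarith
  have hx : ∀ j : ℤ, 0 < a ^ j * s := fun j => mul_pos (zpow_pos ha0 j) hs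
  -- kernel
  set K : ℤ → ℝ → ℝ := fun j u => (a ^ j * s) ^ (ζ - 1) * (max (a ^ j * s - u) 0 * dd u)
    with hKdef
  have hKnn : ∀ j, ∀ u ∈ Ioi (0:ℝ), 0 ≤ K j u := by
    intro j u hu
    have := dd_nonneg (le_of_lt (mem_Ioi.1 hu))
    have h1 : (0:ℝ) ≤ (a ^ j * s) ^ (ζ - 1) := (rpow_pos_of_pos (hx j) _).le
    have h2 : (0:ℝ) ≤ max (a ^ j * s - u) 0 := le_max_right _ _
    simp only [hKdef]
    positivity
  have hKint : ∀ j, IntegrableOn (K j) (Ioi 0) := fun j =>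
    (maxF_integrableOn (hx j)).const_mul _
  have hfrepr : ∀ j, f j = ∫ u in Ioi (0:ℝ), K j u := by
    intro j
    simp only [hfdef, hKdef]
    rw [gg_repr (hx j), ← integral_const_mul]
  have hfnn : ∀ j, 0 ≤ f j := by
    intro j
    rw [hfrepr j]
    exact setIntegral_nonneg measurableSet_Ioi (hKnn j)
  have hofReal : ∀ j, ENNReal.ofReal (f j) =
      ∫⁻ u in Ioi (0:ℝ), ENNReal.ofReal (K j u) := by
    intro j
    rw [hfrepr j]
    exact ofReal_integral_eq_lintegral_ofReal (hKint j)
      ((ae_restrict_iff' measurableSet_Ioi).2 (ae_of_all _ (hKnn j)))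
  have hmeas : ∀ j : ℤ, AEMeasurable (fun u => ENNReal.ofReal (K j u))
      (volume.restrict (Ioi 0)) := by
    intro j
    exact ((continuous_const.mul (maxF_cont (a ^ j * s))).measurable.ennreal_ofReal).aemeasurable
  have hlint : ∑' j : ℤ, ENNReal.ofReal (f j) =
      ∫⁻ u in Ioi (0:ℝ), ∑' j : ℤ, ENNReal.ofReal (K j u) := by
    calc ∑' j : ℤ, ENNReal.ofReal (f j)
        = ∑' j : ℤ, ∫⁻ u in Ioi (0:ℝ), ENNReal.ofReal (K j u) := tsum_congr hofReal
      _ = ∫⁻ u in Ioi (0:ℝ), ∑' j : ℤ, ENNReal.ofReal (K j u) := (lintegral_tsum hmeas).symm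
  -- pointwise value and bounds
  have hpt : ∀ u : ℝ, u ∈ Ioi (0:ℝ) →
      ENNReal.ofReal ((B * D⁻¹) * (u ^ ζ * dd u)) ≤ (∑' j : ℤ, ENNReal.ofReal (K j u)) ∧
      (∑' j : ℤ, ENNReal.ofReal (K j u)) ≤ ENNReal.ofReal (D⁻¹ * (u ^ ζ * dd u)) := by
    intro u hu
    rw [mem_Ioi] at hu
    obtain ⟨hTsum, hTl, hTu⟩ := T_bound ha0 ha1 hζ1 hs hu
    have hddnn : 0 ≤ dd u := dd_nonneg hu.le
    have htermnn : ∀ j : ℤ, 0 ≤ (a ^ j * s) ^ (ζ - 1) * max (a ^ j * s - u) 0 :=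
      fun j => mul_nonneg (rpow_pos_of_pos (hx j) _).le (le_max_right _ _)
    have hKsum : (∑' j : ℤ, ENNReal.ofReal (K j u)) =
        ENNReal.ofReal ((∑' j : ℤ, (a ^ j * s) ^ (ζ - 1) * max (a ^ j * s - u) 0) * dd u) := by
      have h1 : ∀ j : ℤ, K j u =
          ((a ^ j * s) ^ (ζ - 1) * max (a ^ j * s - u) 0) * dd u := by
        intro j; simp only [hKdef]; ring
      calc (∑' j : ℤ, ENNReal.ofReal (K j u))
          = ∑' j : ℤ, ENNReal.ofReal
              (((a ^ j * s) ^ (ζ - 1) * max (a ^ j * s - u) 0) * dd u) := by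
            exact tsum_congr fun j => by rw [h1 j]
        _ = ENNReal.ofReal
              (∑' j : ℤ, ((a ^ j * s) ^ (ζ - 1) * max (a ^ j * s - u) 0) * dd u) :=
            (ENNReal.ofReal_tsum_of_nonneg
              (fun j => mul_nonneg (htermnn j) hddnn) (hTsum.mul_right _)).symm
        _ = ENNReal.ofReal
              ((∑' j : ℤ, (a ^ j * s) ^ (ζ - 1) * max (a ^ j * s - u) 0) * dd u) := by
            rw [tsum_mul_right]
    rw [hKsum]
    constructor
    · apply ENNReal.ofReal_le_ofReal
      have h2 := mul_le_mul_of_nonneg_right hTl hddnn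
      calc (B * D⁻¹) * (u ^ ζ * dd u) = (B * u ^ ζ / D) * dd u := by
            rw [div_eq_mul_inv]; ring
        _ ≤ _ := by
            rw [hBdef, hDdef] at *
            exact h2
    · apply ENNReal.ofReal_le_ofReal
      have h2 := mul_le_mul_of_nonneg_right hTu hddnn
      calc (∑' j : ℤ, (a ^ j * s) ^ (ζ - 1) * max (a ^ j * s - u) 0) * dd u
          ≤ (u ^ ζ / ((1 - a ^ (-ζ)) * (1 - ζ))) * dd u := h2
        _ = D⁻¹ * (u ^ ζ * dd u) := by
            rw [hDdef, hBdef, div_eq_mul_inv]; ring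
  -- integral evaluations of the bounds
  have hIeval : ∀ c : ℝ, 0 ≤ c →
      (∫⁻ u in Ioi (0:ℝ), ENNReal.ofReal (c * (u ^ ζ * dd u))) = ENNReal.ofReal (c * I) := by
    intro c hc
    obtain ⟨hval, hint⟩ := dd_gamma hζ0 hζ1
    have h1 : (∫⁻ u in Ioi (0:ℝ), ENNReal.ofReal (c * (u ^ ζ * dd u))) =
        ENNReal.ofReal (∫ u in Ioi (0:ℝ), c * (u ^ ζ * dd u)) := by
      refine (ofReal_integral_eq_lintegral_ofReal (hint.const_mul c) ?_).symm
      refine (ae_restrict_iff' measurableSet_Ioi).2 (ae_of_all _ (fun u hu => ?_))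
      have h3 : 0 ≤ dd u := dd_nonneg (le_of_lt (mem_Ioi.1 hu))
      have h4 : 0 ≤ u ^ ζ := Real.rpow_nonneg (le_of_lt (mem_Ioi.1 hu)) ζ
      positivity
    rw [h1, integral_const_mul, hval, ← hIdef]
  -- upper bound in ℝ≥0∞
  have hUp : ∑' j : ℤ, ENNReal.ofReal (f j) ≤ ENNReal.ofReal (D⁻¹ * I) := by
    rw [hlint, ← hIeval D⁻¹ (inv_nonneg.2 hD0.le)]
    refine lintegral_mono_ae ((ae_restrict_iff' measurableSet_Ioi).2 (ae_of_all _ ?_))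
    exact fun u hu => (hpt u hu).2
  have hLo : ENNReal.ofReal ((B * D⁻¹) * I) ≤ ∑' j : ℤ, ENNReal.ofReal (f j) := by
    rw [hlint, ← hIeval (B * D⁻¹) (by positivity)]
    refine lintegral_mono_ae ((ae_restrict_iff' measurableSet_Ioi).2 (ae_of_all _ ?_))
    exact fun u hu => (hpt u hu).1
  -- summability
  have hne : (∑' j : ℤ, ENNReal.ofReal (f j)) ≠ ⊤ :=
    ne_top_of_le_ne_top ENNReal.ofReal_ne_top hUp
  have hco : ∀ j : ℤ, ((Real.toNNReal (f j) : ℝ≥0) : ℝ≥0∞) = ENNReal.ofReal (f j) :=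
    fun j => rfl
  have hgsum : Summable (fun j : ℤ => Real.toNNReal (f j)) := by
    refine ENNReal.tsum_coe_ne_top_iff_summable.1 ?_
    rwa [tsum_congr hco]
  have hsumf : Summable f := by
    have h := NNReal.summable_coe.2 hgsum
    refine h.congr fun j => ?_
    exact Real.coe_toNNReal _ (hfnn j)
  have htsum_eq : ENNReal.ofReal (∑' j : ℤ, f j) = ∑' j : ℤ, ENNReal.ofReal (f j) :=
    ENNReal.ofReal_tsum_of_nonneg hfnn hsumf
  refine ⟨hsumf, ?_, ?_⟩
  · have h := hLo
    rw [← htsum_eq] at h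
    have h2 := (ENNReal.ofReal_le_ofReal_iff (tsum_nonneg hfnn)).1 h
    calc a ^ (-ζ) * (2 - (2:ℝ) ^ (-ζ)) * Real.Gamma (ζ + 1) / ((1 - a ^ (-ζ)) * (1 - ζ))
        = (B * D⁻¹) * I := by
          simp only [hIdef, hDdef, hBdef, div_eq_mul_inv]; ring
      _ ≤ _ := h2
  · have h := hUp
    rw [← htsum_eq] at h
    have h2 := (ENNReal.ofReal_le_ofReal_iff (by positivity)).1 h
    calc (∑' j : ℤ, f j) ≤ D⁻¹ * I := h2
      _ = (2 - (2:ℝ) ^ (-ζ)) * Real.Gamma (ζ + 1) / ((1 - a ^ (-ζ)) * (1 - ζ)) := by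
          simp only [hIdef, hDdef, hBdef, div_eq_mul_inv]; ring


end Stmt9Aux

theorem stmt9 (a θ ζ : ℝ) (ha0 : 0 < a) (ha1 : a < 1) (hθ : 0 < θ)
    (hζ0 : -1 < ζ) (hζ1 : ζ < 0) :
    ∀ t > 0,
      Summable (fun j : ℤ =>
        (θ * a ^ j * t) ^ (ζ - 1) *
          (2 * Real.exp (-(θ * a ^ j * t)) - (1/2) * Real.exp (-(2 * (θ * a ^ j * t))) +
            θ * a ^ j * t - 3/2)) ∧
      a ^ (-ζ) * (2 - (2:ℝ) ^ (-ζ)) * Real.Gamma (ζ + 1) / ((1 - a ^ (-ζ)) * (1 - ζ)) ≤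
        ∑' j : ℤ, (θ * a ^ j * t) ^ (ζ - 1) *
          (2 * Real.exp (-(θ * a ^ j * t)) - (1/2) * Real.exp (-(2 * (θ * a ^ j * t))) +
            θ * a ^ j * t - 3/2) ∧
      ∑' j : ℤ, (θ * a ^ j * t) ^ (ζ - 1) *
          (2 * Real.exp (-(θ * a ^ j * t)) - (1/2) * Real.exp (-(2 * (θ * a ^ j * t))) +
            θ * a ^ j * t - 3/2) ≤
        (2 - (2:ℝ) ^ (-ζ)) * Real.Gamma (ζ + 1) / ((1 - a ^ (-ζ)) * (1 - ζ)) := by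
  intro t ht
  have hrw : ∀ j : ℤ, θ * a ^ j * t = a ^ j * (θ * t) := fun j => by ring
  simp only [hrw]
  exact Stmt9Aux.main ha0 ha1 hζ0 hζ1 (mul_pos hθ ht)
end

section
/- Let N ≥ 2 be an integer, c ∈ (0,N), σ > 0, and set a = c/N, b = (N²/c − 1)/(N − 1), θ = σb, γ = log c / log(N/c) (so that a^{γ+1} = 1/N and γ > −1), and κ = (N−1)/θ^{γ+1}. For an integer i ≥ 0 let p_t(i) = N^{−i}(δ_{0i} − 1)e^{−θ a^i t} + (N − 1) Σ_{j=i+1}^∞ N^{−j} e^{−θ a^j t} for t > 0, where δ_{0i} = 1 if i = 0 and 0 otherwise. Then for every integer i ≥ 0, lim_{t→∞} ( t^{γ+1} p_t(i) − κ · Σ_{j∈ℤ} (θ a^j t)^{γ+1} e^{−θ a^j t} ) = 0. -/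
/-!
Since `a ^ (γ + 1) = 1 / N` and `κ * θ ^ (γ + 1) = N - 1`, the terms `j > i` of
`κ * ∑_{j ∈ ℤ} (θ a^j t)^(γ+1) e^{-θ a^j t}` are exactly `t^(γ+1)` times the series in `p_t(i)`.
What remains is a constant multiple of `t^(γ+1) e^{-θ a^i t}` and the terms `j ≤ i`, which have the
form `f (x t a^{-n})` with `f y = y^(γ+1) e^{-y}`. As `y * f y` is bounded, the latter are dominated
by a geometric series of total size `O(1/t)`.
-/

open Filter Topology Real

theorem rpow_mul_exp_neg_le {s x : ℝ} (hs : 0 < s) (hx : 0 ≤ x) :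
    x ^ s * exp (-x) ≤ (s / exp 1) ^ s := by
  have hxs : (x / s) ^ s ≤ exp (x - s) := by
    have h := add_one_le_exp (x / s - 1)
    calc (x / s) ^ s ≤ exp (x / s - 1) ^ s := by
          gcongr
          linarith
      _ = exp (x - s) := by rw [← exp_mul]; field_simp
  calc x ^ s * exp (-x) = s ^ s * (x / s) ^ s * exp (-x) := by
        rw [div_rpow hx hs.le]; field_simp
    _ ≤ s ^ s * exp (x - s) * exp (-x) := by gcongr
    _ = (s / exp 1) ^ s := by
        rw [div_rpow hs.le (exp_pos 1).le, exp_one_rpow, mul_assoc, ← exp_add, div_eq_mul_inv,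
          ← exp_neg]
        ring_nf

theorem rpow_mul_exp_neg_le_div {s x : ℝ} (hs : -1 < s) (hx : 0 < x) :
    x ^ s * exp (-x) ≤ ((s + 1) / exp 1) ^ (s + 1) / x := by
  rw [le_div_iff₀ hx, mul_right_comm, ← rpow_add_one hx.ne']
  exact rpow_mul_exp_neg_le (by linarith) hx.le

theorem rpow_mul_exp_neg_geom_le {s x r : ℝ} (hs : -1 < s) (hx : 0 < x) (hr : 0 < r) (n : ℕ) :
    (x * r ^ n) ^ s * exp (-(x * r ^ n)) ≤ ((s + 1) / exp 1) ^ (s + 1) / x * r⁻¹ ^ n := by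
  calc (x * r ^ n) ^ s * exp (-(x * r ^ n))
      ≤ ((s + 1) / exp 1) ^ (s + 1) / (x * r ^ n) := rpow_mul_exp_neg_le_div hs (by positivity)
    _ = ((s + 1) / exp 1) ^ (s + 1) / x * r⁻¹ ^ n := by rw [inv_pow]; field_simp

theorem summable_rpow_mul_exp_neg_geom {s x r : ℝ} (hs : -1 < s) (hx : 0 < x) (hr : 1 < r) :
    Summable fun n : ℕ ↦ (x * r ^ n) ^ s * exp (-(x * r ^ n)) :=
  .of_nonneg_of_le (fun n ↦ by positivity) (rpow_mul_exp_neg_geom_le hs hx (by linarith))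
    ((summable_geometric_of_lt_one (by positivity) (inv_lt_one_of_one_lt₀ hr)).mul_left _)

theorem tsum_rpow_mul_exp_neg_geom_le {s x r : ℝ} (hs : -1 < s) (hx : 0 < x) (hr : 1 < r) :
    ∑' n : ℕ, (x * r ^ n) ^ s * exp (-(x * r ^ n)) ≤
      ((s + 1) / exp 1) ^ (s + 1) / x * (1 - r⁻¹)⁻¹ := by
  have hgeom := summable_geometric_of_lt_one (by positivity) (inv_lt_one_of_one_lt₀ hr)
  calc ∑' n : ℕ, (x * r ^ n) ^ s * exp (-(x * r ^ n))
      ≤ ∑' n : ℕ, ((s + 1) / exp 1) ^ (s + 1) / x * r⁻¹ ^ n :=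
        (summable_rpow_mul_exp_neg_geom hs hx hr).tsum_le_tsum
          (rpow_mul_exp_neg_geom_le hs hx (by linarith)) (hgeom.mul_left _)
    _ = _ := by
        rw [tsum_mul_left, tsum_geometric_of_lt_one (by positivity) (inv_lt_one_of_one_lt₀ hr)]

theorem tendsto_tsum_rpow_mul_exp_neg_geom {s x r : ℝ} (hs : -1 < s) (hx : 0 < x) (hr : 1 < r) :
    Tendsto (fun t ↦ ∑' n : ℕ, (x * t * r ^ n) ^ s * exp (-(x * t * r ^ n))) atTop (𝓝 0) := by
  set K := ((s + 1) / exp 1) ^ (s + 1) / x * (1 - r⁻¹)⁻¹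
  have hK : Tendsto (fun t : ℝ ↦ K * t⁻¹) atTop (𝓝 0) := by
    simpa using tendsto_inv_atTop_zero.const_mul K
  refine squeeze_zero' ?_ ?_ hK
  · filter_upwards [eventually_gt_atTop 0] with t ht
    exact tsum_nonneg fun n ↦ by positivity
  · filter_upwards [eventually_gt_atTop 0] with t ht
    calc _ ≤ ((s + 1) / exp 1) ^ (s + 1) / (x * t) * (1 - r⁻¹)⁻¹ :=
          tsum_rpow_mul_exp_neg_geom_le hs (by positivity) hr
      _ = K * t⁻¹ := by simp only [K]; field_simp

theorem tsum_int_eq_tsum_nat_add_tsum_nat_sub {M : Type*} [AddCommMonoid M] [TopologicalSpace M]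
    [ContinuousAdd M] [T2Space M] {f : ℤ → M} (k : ℤ)
    (hup : Summable fun n : ℕ ↦ f (k + 1 + n)) (hdown : Summable fun n : ℕ ↦ f (k - n)) :
    ∑' j, f j = ∑' n : ℕ, f (k + 1 + n) + ∑' n : ℕ, f (k - n) := by
  have hdown' (n : ℕ) : -(n + 1 : ℤ) + (k + 1) = k - n := by ring
  have hup' (n : ℕ) : (n : ℤ) + (k + 1) = k + 1 + n := add_comm _ _
  rw [← (Equiv.addRight (k + 1)).tsum_eq, tsum_of_nat_of_neg_add_one]
  · simp only [Equiv.coe_addRight, hup', hdown']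
  · simpa only [Equiv.coe_addRight, hup'] using hup
  · simpa only [Equiv.coe_addRight, hdown'] using hdown

theorem tsum_int_rpow_mul_exp_neg_split {a θ s κ N t : ℝ} (i : ℕ) (ha0 : 0 < a) (ha1 : a < 1)
    (hθ : 0 < θ) (hs : 0 < s) (haN : a ^ s = N⁻¹) (hκ : κ * θ ^ s = N - 1) (ht : 0 < t) :
    κ * ∑' j : ℤ, (θ * a ^ j * t) ^ s * exp (-(θ * a ^ j * t)) =
      t ^ s * ((N - 1) * ∑' n : ℕ, (N ^ (i + 1 + n))⁻¹ * exp (-(θ * a ^ (i + 1 + n) * t))) +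
      κ * ∑' n : ℕ, (θ * a ^ i * t * a⁻¹ ^ n) ^ s * exp (-(θ * a ^ i * t * a⁻¹ ^ n)) := by
  set G : ℤ → ℝ := fun j ↦ (θ * a ^ j * t) ^ s * exp (-(θ * a ^ j * t))
  have hup (n : ℕ) : G (i + 1 + n) =
      θ ^ s * t ^ s * ((N ^ (i + 1 + n))⁻¹ * exp (-(θ * a ^ (i + 1 + n) * t))) := by
    have hpow : a ^ ((i : ℤ) + 1 + n) = a ^ (i + 1 + n) := by norm_cast
    simp only [G, hpow]
    rw [mul_rpow (by positivity) ht.le, mul_rpow hθ.le (by positivity), ← rpow_pow_comm ha0.le,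
      haN, inv_pow]
    ring
  have hdown (n : ℕ) :
      G (i - n) = (θ * a ^ i * t * a⁻¹ ^ n) ^ s * exp (-(θ * a ^ i * t * a⁻¹ ^ n)) := by
    have hpow : a ^ ((i : ℤ) - n) = a ^ i * a⁻¹ ^ n := by
      rw [zpow_sub₀ ha0.ne', zpow_natCast, zpow_natCast, div_eq_mul_inv, inv_pow]
    simp only [G, hpow]
    ring_nf
  have hN0 : 0 < N := inv_pos.mp (haN ▸ rpow_pos_of_pos ha0 s)
  have hN1 : N⁻¹ < 1 := haN ▸ rpow_lt_one ha0.le ha1 hs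
  have hsum_up : Summable fun n : ℕ ↦ (N ^ (i + 1 + n))⁻¹ * exp (-(θ * a ^ (i + 1 + n) * t)) := by
    refine .of_nonneg_of_le (fun n ↦ by positivity) (fun n ↦ ?_)
      ((summable_geometric_of_lt_one (by positivity) hN1).mul_left (N⁻¹ ^ (i + 1)))
    calc (N ^ (i + 1 + n))⁻¹ * exp (-(θ * a ^ (i + 1 + n) * t)) ≤ (N ^ (i + 1 + n))⁻¹ * 1 := by
          gcongr
          rw [exp_le_one_iff, neg_nonpos]
          positivity
      _ = N⁻¹ ^ (i + 1) * N⁻¹ ^ n := by rw [mul_one, ← pow_add, inv_pow]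
  have hsum_down := summable_rpow_mul_exp_neg_geom (s := s) (x := θ * a ^ i * t) (by linarith)
    (by positivity) (one_lt_inv_iff₀.mpr ⟨ha0, ha1⟩)
  rw [tsum_int_eq_tsum_nat_add_tsum_nat_sub (f := G) i
    (by simpa only [hup] using hsum_up.mul_left (θ ^ s * t ^ s))
    (by simpa only [hdown] using hsum_down), mul_add]
  simp only [hup, hdown, tsum_mul_left, ← hκ]
  ring

theorem div_rpow_log_div_log_div {c N : ℝ} (hc : 0 < c) (hcN : c < N) :
    (c / N) ^ (log N / log (N / c)) = N⁻¹ := by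
  have hN : 0 < N := hc.trans hcN
  have hlog : log (N / c) ≠ 0 := (log_pos ((one_lt_div hc).mpr hcN)).ne'
  rw [rpow_def_of_pos (div_pos hc hN), ← inv_div N c, log_inv, neg_mul, mul_div_cancel₀ _ hlog,
    exp_neg, exp_log hN]

theorem stmt10 (N : ℕ) (hN : 2 ≤ N) (c σ : ℝ) (hc0 : 0 < c) (hcN : c < N) (hσ : 0 < σ)
    (a b θ γ κ : ℝ)
    (ha : a = c / N) (hb : b = ((N:ℝ) ^ 2 / c - 1) / ((N:ℝ) - 1)) (hθ : θ = σ * b)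
    (hγ : γ = Real.log c / Real.log ((N:ℝ) / c))
    (hκ : κ = ((N:ℝ) - 1) / θ ^ (γ + 1))
    (p : ℕ → ℝ → ℝ)
    (hp : ∀ (i : ℕ), ∀ t > 0, p i t =
      ((N:ℝ) ^ i)⁻¹ * ((if i = 0 then (1:ℝ) else 0) - 1) * Real.exp (-(θ * a ^ i * t)) +
        ((N:ℝ) - 1) *
          ∑' j : ℕ, ((N:ℝ) ^ (i + 1 + j))⁻¹ * Real.exp (-(θ * a ^ (i + 1 + j) * t))) :
    ∀ i : ℕ, Tendsto (fun t : ℝ =>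
        t ^ (γ + 1) * p i t -
          κ * ∑' j : ℤ, (θ * a ^ j * t) ^ (γ + 1) * Real.exp (-(θ * a ^ j * t)))
      atTop (𝓝 0) := by
  have hN1 : (1 : ℝ) < N := Nat.one_lt_cast.mpr hN
  have hNc : 1 < N / c := (one_lt_div hc0).mpr hcN
  have hs_eq : γ + 1 = log N / log (N / c) := by
    rw [hγ, div_add_one (log_pos hNc).ne', ← log_mul hc0.ne' (by positivity),
      mul_div_cancel₀ _ hc0.ne']
  have hs : 0 < γ + 1 := hs_eq ▸ div_pos (log_pos hN1) (log_pos hNc)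
  have haN : a ^ (γ + 1) = (N : ℝ)⁻¹ := by rw [ha, hs_eq, div_rpow_log_div_log_div hc0 hcN]
  have ha0 : 0 < a := ha ▸ div_pos hc0 (hc0.trans hcN)
  have ha1 : a < 1 := ha ▸ (div_lt_one (hc0.trans hcN)).mpr hcN
  have hθ0 : 0 < θ := by
    have : 1 < (N : ℝ) ^ 2 / c := (one_lt_div hc0).mpr (by nlinarith)
    rw [hθ, hb]
    exact mul_pos hσ (div_pos (by linarith) (by linarith))
  have hκθ : κ * θ ^ (γ + 1) = N - 1 := hκ ▸ div_mul_cancel₀ _ (rpow_pos_of_pos hθ0 _).ne'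
  intro i
  have hx : 0 < θ * a ^ i := mul_pos hθ0 (pow_pos ha0 i)
  have hlead := (tendsto_rpow_mul_exp_neg_mul_atTop_nhds_zero (γ + 1) _ hx).const_mul
    (((N : ℝ) ^ i)⁻¹ * ((if i = 0 then 1 else 0) - 1))
  have hlower := (tendsto_tsum_rpow_mul_exp_neg_geom (s := γ + 1) (by linarith) hx
    (one_lt_inv_iff₀.mpr ⟨ha0, ha1⟩)).const_mul κ
  rw [mul_zero] at hlead hlower
  refine (sub_zero (0 : ℝ) ▸ hlead.sub hlower).congr' ?_
  filter_upwards [eventually_gt_atTop 0] with t ht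
  rw [hp i t ht, tsum_int_rpow_mul_exp_neg_split i ha0 ha1 hθ0 hs haN hκθ ht]
  ring_nf
end
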